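/- arXiv:1906.07803 — 6 statements merged into one kernel-verified Lean document; each statement's English description precedes it below -/
import Mathlib

section
/- For every integer k ≥ 1, the function e_k satisfies the boundary conditions e_k(0) = e_k(L) = 0 and ε e_k''(x) + ε^{2/3} M^{1/3} e_k'(x) = 0 at x = 0 and at x = L, and it is an eigenfunction of the adjoint spatial operator: ε e_k''''(x) + 2 ε^{2/3} M^{1/3} e_k'''(x) − M e_k'(x) = λ_k e_k(x) for all x ∈ ℝ. Moreover the family is orthogonal for the weighted inner product: ∫₀^L exp(M^{1/3} x / ε^{1/3}) e_j(x) e_k(x) dx = (L/2) δ_{jk} for all integers j, k ≥ 1. -/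
open Real MeasureTheory

/-- The basic exponentially damped trigonometric family. -/
noncomputable def FF (a b c d : ℝ) : ℝ → ℝ :=
  fun x => Real.exp (-(a * x)) * (c * Real.sin (b * x) + d * Real.cos (b * x))

lemma hasDerivAt_FF (a b c d x : ℝ) :
    HasDerivAt (FF a b c d) (FF a b (-(a * c) - b * d) (b * c - a * d) x) x := by
  have hx : HasDerivAt (fun x : ℝ => -(a * x)) (-a) x := by
    have h := (hasDerivAt_id x).const_mul (-a); simpa [neg_mul] using h
  have hbx : HasDerivAt (fun x : ℝ => b * x) b x := by
    simpa using (hasDerivAt_id x).const_mul b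
  have hexp : HasDerivAt (fun x : ℝ => Real.exp (-(a * x)))
      (Real.exp (-(a * x)) * (-a)) x := hx.exp
  have hsin : HasDerivAt (fun x : ℝ => c * Real.sin (b * x))
      (c * (Real.cos (b * x) * b)) x :=
    (((Real.hasDerivAt_sin (b * x)).comp x hbx)).const_mul c
  have hcos : HasDerivAt (fun x : ℝ => d * Real.cos (b * x))
      (d * (-Real.sin (b * x) * b)) x :=
    (((Real.hasDerivAt_cos (b * x)).comp x hbx)).const_mul d
  have H := hexp.mul (hsin.add hcos)
  refine H.congr_deriv ?_
  simp only [FF, Pi.add_apply]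
  ring

lemma deriv_FF (a b c d c' d' : ℝ) (h1 : c' = -(a * c) - b * d) (h2 : d' = b * c - a * d) :
    deriv (FF a b c d) = FF a b c' d' := by
  funext x
  rw [h1, h2]
  exact (hasDerivAt_FF a b c d x).deriv

/-- eigenfunctions of the adjoint spatial operator: boundary conditions,
eigenvalue equation, and weighted orthogonality. -/
theorem stmt_0
    (L ε M M13 : ℝ) (hL : 0 < L) (hε : 0 < ε) (hM : M ≠ 0)
    (hM13 : M13 ^ 3 = M)
    (e : ℕ → ℝ → ℝ)
    (he : ∀ k x, e k x
      = Real.exp (-(M13 * x) / (2 * ε ^ ((1:ℝ)/3))) * Real.sin ((k : ℝ) * π * x / L))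
    (lam : ℕ → ℝ)
    (hlam : ∀ k, lam k
      = ε * ((k : ℝ)^2 * π^2 / L^2 + 3 * M13^2 / (4 * ε ^ ((2:ℝ)/3)))^2
        - M * M13 / (4 * ε ^ ((1:ℝ)/3))) :
    (∀ k : ℕ, 1 ≤ k →
      (e k 0 = 0 ∧ e k L = 0) ∧
      (ε * iteratedDeriv 2 (e k) 0 + ε ^ ((2:ℝ)/3) * M13 * deriv (e k) 0 = 0) ∧
      (ε * iteratedDeriv 2 (e k) L + ε ^ ((2:ℝ)/3) * M13 * deriv (e k) L = 0) ∧
      (∀ x : ℝ,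
        ε * iteratedDeriv 4 (e k) x + 2 * ε ^ ((2:ℝ)/3) * M13 * iteratedDeriv 3 (e k) x
          - M * deriv (e k) x = lam k * e k x)) ∧
    (∀ j k : ℕ, 1 ≤ j → 1 ≤ k →
      ∫ x in (0:ℝ)..L, Real.exp (M13 * x / ε ^ ((1:ℝ)/3)) * e j x * e k x
        = if j = k then L / 2 else 0) := by
  have hLne : L ≠ 0 := ne_of_gt hL
  set t : ℝ := ε ^ ((1:ℝ)/3) with htdef
  have ht : 0 < t := Real.rpow_pos_of_pos hε _
  have htne : t ≠ 0 := ne_of_gt ht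
  have ht3 : t ^ 3 = ε := by
    rw [htdef, ← Real.rpow_natCast (ε ^ ((1:ℝ)/3)) 3, ← Real.rpow_mul hε.le]
    norm_num
  have ht2 : ε ^ ((2:ℝ)/3) = t ^ 2 := by
    rw [htdef, ← Real.rpow_natCast (ε ^ ((1:ℝ)/3)) 2, ← Real.rpow_mul hε.le]
    norm_num
  constructor
  · intro k hk
    set a : ℝ := M13 / (2 * t) with ha
    set b : ℝ := (k : ℝ) * π / L with hb
    have heF : e k = FF a b 1 0 := by
      funext x
      rw [he]
      simp only [FF]
      rw [show -(M13 * x) / (2 * t) = -(a * x) by rw [ha]; ring,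
        show (k : ℝ) * π * x / L = b * x by rw [hb]; ring]
      ring
    have hd1 : deriv (e k) = FF a b (-a) b := by
      rw [heF]; exact deriv_FF a b 1 0 _ _ (by ring) (by ring)
    have hd2 : iteratedDeriv 2 (e k) = FF a b (a^2 - b^2) (-(2*a*b)) := by
      rw [iteratedDeriv_succ, iteratedDeriv_one, hd1]
      exact deriv_FF _ _ _ _ _ _ (by ring) (by ring)
    have hd3 : iteratedDeriv 3 (e k) = FF a b (-(a^3) + 3*a*b^2) (3*a^2*b - b^3) := by
      rw [iteratedDeriv_succ, hd2]
      exact deriv_FF _ _ _ _ _ _ (by ring) (by ring)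
    have hd4 : iteratedDeriv 4 (e k) = FF a b (a^4 - 6*a^2*b^2 + b^4) (-(4*a^3*b) + 4*a*b^3) := by
      rw [iteratedDeriv_succ, hd3]
      exact deriv_FF _ _ _ _ _ _ (by ring) (by ring)
    have hsL : Real.sin (b * L) = 0 := by
      rw [show b * L = (k : ℝ) * π by rw [hb]; field_simp]
      exact Real.sin_nat_mul_pi k
    refine ⟨⟨?_, ?_⟩, ?_, ?_, ?_⟩
    · rw [heF]; simp [FF]
    · rw [heF]; simp [FF, hsL]
    · rw [hd2, hd1]
      simp only [FF, mul_zero, neg_zero, Real.exp_zero, Real.sin_zero, Real.cos_zero,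
        one_mul, mul_one, mul_zero, zero_add, add_zero]
      rw [ht2, ← ht3, ha]
      field_simp
      ring
    · rw [hd2, hd1]
      simp only [FF, hsL, mul_zero, zero_add, add_zero]
      rw [ht2, ← ht3, ha]
      field_simp
      ring
    · intro x
      rw [hd4, hd3, hd1, heF, hlam]
      simp only [FF]
      rw [ht2, ← hM13, ← ht3, ha, hb]
      field_simp
      ring
  · intro j k hj hk
    have hcos0 : ∀ n : ℤ, n ≠ 0 → (∫ x in (0:ℝ)..L, Real.cos ((n:ℝ) * π / L * x)) = 0 := by
      intro n hn
      have hc : (n:ℝ) * π / L ≠ 0 :=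
        div_ne_zero (mul_ne_zero (Int.cast_ne_zero.mpr hn) Real.pi_ne_zero) hLne
      rw [intervalIntegral.integral_comp_mul_left (fun x => Real.cos x) hc]
      rw [mul_zero, integral_cos, show (n:ℝ) * π / L * L = (n:ℝ) * π by field_simp,
        Real.sin_int_mul_pi]
      simp
    have hEq : ∀ x : ℝ, Real.exp (M13 * x / t) * e j x * e k x
        = Real.sin ((j:ℝ) * π * x / L) * Real.sin ((k:ℝ) * π * x / L) := by
      intro x
      rw [he, he]
      rw [show Real.exp (M13 * x / t) * (Real.exp (-(M13 * x) / (2 * t)) *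
            Real.sin ((j:ℝ) * π * x / L)) * (Real.exp (-(M13 * x) / (2 * t)) *
            Real.sin ((k:ℝ) * π * x / L))
          = Real.exp (M13 * x / t + -(M13 * x) / (2 * t) + -(M13 * x) / (2 * t)) *
            (Real.sin ((j:ℝ) * π * x / L) * Real.sin ((k:ℝ) * π * x / L)) by
            rw [Real.exp_add, Real.exp_add]; ring]
      rw [show M13 * x / t + -(M13 * x) / (2 * t) + -(M13 * x) / (2 * t) = 0 by
            field_simp; ring]
      rw [Real.exp_zero, one_mul]
    have hsinsin : ∀ x : ℝ, Real.sin ((j:ℝ) * π * x / L) * Real.sin ((k:ℝ) * π * x / L)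
        = (Real.cos ((((j:ℤ) - (k:ℤ)):ℝ) * π / L * x)
            - Real.cos ((((j:ℤ) + (k:ℤ)):ℝ) * π / L * x)) / 2 := by
      intro x
      have hc := Real.cos_sub_cos ((((j:ℤ) - (k:ℤ)):ℝ) * π / L * x)
        ((((j:ℤ) + (k:ℤ)):ℝ) * π / L * x)
      push_cast at hc ⊢
      rw [hc,
        show ((((j:ℝ) - k) * π / L * x + ((j:ℝ) + k) * π / L * x) / 2) = (j:ℝ) * π * x / L by
          ring,
        show ((((j:ℝ) - k) * π / L * x - ((j:ℝ) + k) * π / L * x) / 2) = -((k:ℝ) * π * x / L) by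
          ring,
        Real.sin_neg]
      ring
    have hcont : ∀ c : ℝ, IntervalIntegrable (fun x => Real.cos (c * x)) volume 0 L :=
      fun c => (Real.continuous_cos.comp (continuous_const.mul continuous_id)).intervalIntegrable 0 L
    rw [intervalIntegral.integral_congr
      (g := fun x => (Real.cos ((((j:ℤ) - (k:ℤ)):ℝ) * π / L * x)
        - Real.cos ((((j:ℤ) + (k:ℤ)):ℝ) * π / L * x)) / 2)
      (fun x _ => by rw [hEq x, hsinsin x])]
    rw [intervalIntegral.integral_div,
      intervalIntegral.integral_sub (hcont _) (hcont _)]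
    by_cases hjk : j = k
    · subst hjk
      rw [if_pos rfl]
      rw [show (∫ x in (0:ℝ)..L, Real.cos ((((j:ℤ) - (j:ℤ)):ℝ) * π / L * x)) = L by
          simp]
      have h2 := hcos0 ((j:ℤ) + (j:ℤ)) (by omega)
      push_cast at h2 ⊢
      rw [h2]; ring
    · rw [if_neg hjk]
      have h1 := hcos0 ((j:ℤ) - (k:ℤ)) (by omega)
      have h2 := hcos0 ((j:ℤ) + (k:ℤ)) (by omega)
      push_cast at h1 h2 ⊢
      rw [h1, h2]
      norm_num
end

section
/- For every y ∈ ℝ the following two identities hold: ∫₀^∞ log(1 + y²/t²) dt = π |y|, and ∫₀^∞ log(1 + y²/t²) · (1/4) t^{−3/4} dt = π csc(π/8) · |y|^{1/4}. -/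
open Real MeasureTheory Set


lemma beta_integral_eq {a : ℝ} (h0 : 0 < a) (h1 : a < 1) :
    Complex.betaIntegral a (1 - a) = ((π / Real.sin (π * a) : ℝ) : ℂ) := by
  have h := Complex.Gamma_mul_Gamma_eq_betaIntegral (s := a) (t := 1 - a)
    (by simpa using h0) (by simp; linarith)
  rw [show (a:ℂ) + (1 - a) = 1 by ring, Complex.Gamma_one, one_mul] at h
  rw [← h]
  have : (1 - (a:ℂ)) = ((1 - a : ℝ) : ℂ) := by push_cast; ring
  rw [this, Complex.Gamma_ofReal, Complex.Gamma_ofReal, ← Complex.ofReal_mul,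
    Real.Gamma_mul_Gamma_one_sub]

lemma beta_intervalIntegral {a : ℝ} (h0 : 0 < a) (h1 : a < 1) :
    ∫ x in (0:ℝ)..1, x ^ (a - 1) * (1 - x) ^ (-a) = π / Real.sin (π * a) := by
  have key : Complex.betaIntegral a (1 - a)
      = ((∫ x in (0:ℝ)..1, x ^ (a - 1) * (1 - x) ^ (-a) : ℝ) : ℂ) := by
    rw [Complex.betaIntegral, ← intervalIntegral.integral_ofReal]
    apply intervalIntegral.integral_congr
    intro x hx
    rw [Set.uIcc_of_le zero_le_one] at hx
    have hx0 : (0:ℝ) ≤ x := hx.1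
    have hx1 : (0:ℝ) ≤ 1 - x := by linarith [hx.2]
    show (x:ℂ) ^ ((a:ℂ) - 1) * (1 - (x:ℂ)) ^ ((1:ℂ) - a - 1)
        = ((x ^ (a - 1) * (1 - x) ^ (-a) : ℝ) : ℂ)
    rw [Complex.ofReal_mul, Complex.ofReal_cpow hx0, Complex.ofReal_cpow hx1]
    push_cast
    ring_nf
  rw [beta_integral_eq h0 h1] at key
  exact_mod_cast key.symm

lemma beta_integrableOn {a : ℝ} (h0 : 0 < a) (h1 : a < 1) :
    IntegrableOn (fun x : ℝ => x ^ (a - 1) * (1 - x) ^ (-a)) (Ioo 0 1) := by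
  have hc : IntervalIntegrable
      (fun x : ℝ => (x:ℂ) ^ ((a:ℂ) - 1) * (1 - (x:ℂ)) ^ ((1 - (a:ℂ)) - 1)) volume 0 1 :=
    Complex.betaIntegral_convergent (by simpa using h0) (by simp; linarith)
  have hc' : IntegrableOn
      (fun x : ℝ => (x:ℂ) ^ ((a:ℂ) - 1) * (1 - (x:ℂ)) ^ ((1 - (a:ℂ)) - 1)) (Ioc 0 1) :=
    (intervalIntegrable_iff_integrableOn_Ioc_of_le zero_le_one).mp hc
  have hre : IntegrableOn
      (fun x : ℝ => ((x:ℂ) ^ ((a:ℂ) - 1) * (1 - (x:ℂ)) ^ ((1 - (a:ℂ)) - 1)).re)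
      (Ioc 0 1) := hc'.re
  apply (IntegrableOn.mono_set · Ioo_subset_Ioc_self)
  refine hre.congr_fun ?_ measurableSet_Ioc
  intro x hx
  have hx0 : (0:ℝ) ≤ x := hx.1.le
  have hx1 : (0:ℝ) ≤ 1 - x := by linarith [hx.2]
  show ((x:ℂ) ^ ((a:ℂ) - 1) * (1 - (x:ℂ)) ^ ((1 - (a:ℂ)) - 1)).re
      = x ^ (a - 1) * (1 - x) ^ (-a)
  have e1 : ((1:ℂ) - a) - 1 = ((-a : ℝ) : ℂ) := by push_cast; ring
  have e2 : ((a:ℂ) - 1) = ((a - 1 : ℝ) : ℂ) := by push_cast; ring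
  have e3 : (1 - (x:ℂ)) = ((1 - x : ℝ) : ℂ) := by push_cast; ring
  rw [e1, e2, e3, ← Complex.ofReal_cpow hx0, ← Complex.ofReal_cpow hx1,
    ← Complex.ofReal_mul, Complex.ofReal_re]
section
variable {a : ℝ}

lemma image_div_one_add : (fun x : ℝ => x / (1 + x)) '' (Ioi 0) = Ioo 0 1 := by
  ext y
  constructor
  · rintro ⟨x, hx, rfl⟩
    have hx' : (0:ℝ) < x := hx
    have h1 : (0:ℝ) < 1 + x := by linarith
    constructor
    · positivity
    · rw [div_lt_one h1]; linarith
  · rintro ⟨hy0, hy1⟩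
    refine ⟨y / (1 - y), ?_, ?_⟩
    · exact div_pos hy0 (by linarith)
    · have h1 : (1:ℝ) - y ≠ 0 := by linarith
      field_simp
      ring

lemma injOn_div_one_add : InjOn (fun x : ℝ => x / (1 + x)) (Ioi 0) := by
  intro x hx y hy h
  have hx' : (0:ℝ) < x := hx
  have hy' : (0:ℝ) < y := hy
  have h1 : (1:ℝ) + x ≠ 0 := by linarith
  have h2 : (1:ℝ) + y ≠ 0 := by linarith
  field_simp at h
  linarith

lemma hasDeriv_div_one_add {x : ℝ} (hx : x ∈ Ioi (0:ℝ)) :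
    HasDerivWithinAt (fun x : ℝ => x / (1 + x)) (((1+x)^2)⁻¹) (Ioi 0) x := by
  have hx' : (0:ℝ) < x := hx
  have h1 : (1:ℝ) + x ≠ 0 := by linarith
  have : HasDerivAt (fun x : ℝ => x / (1 + x))
      ((1 * (1 + x) - x * (0 + 1)) / (1 + x)^2) x :=
    (hasDerivAt_id x).div ((hasDerivAt_const x 1).add (hasDerivAt_id x)) h1
  have h2 : (1 * (1 + x) - x * (0 + 1)) / (1 + x)^2 = ((1+x)^2)⁻¹ := by
    field_simp
    ring
  rw [h2] at this
  exact this.hasDerivWithinAt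

lemma smul_eq_aux (h0 : 0 < a) (h1 : a < 1) {x : ℝ} (hx : x ∈ Ioi (0:ℝ)) :
    |((1+x)^2)⁻¹| • ((x / (1+x)) ^ (a - 1) * (1 - x / (1+x)) ^ (-a))
      = x ^ (a - 1) / (1 + x) := by
  have hx' : (0:ℝ) < x := hx
  have hp : (0:ℝ) < 1 + x := by linarith
  have h2 : 1 - x / (1 + x) = (1 + x)⁻¹ := by field_simp; ring
  rw [h2, Real.div_rpow hx'.le hp.le, Real.inv_rpow hp.le, ← Real.rpow_neg hp.le,
    neg_neg, abs_of_pos (by positivity), smul_eq_mul]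
  have h5 : (1+x) ^ a / (1+x) ^ (a-1) = 1+x := by
    rw [← Real.rpow_sub hp]
    norm_num
  rw [div_mul_eq_mul_div, mul_div_assoc, h5]
  field_simp

lemma mellin_one_add_integrableOn
    (h0 : 0 < a) (h1 : a < 1)
    (hbeta : IntegrableOn (fun x : ℝ => x ^ (a - 1) * (1 - x) ^ (-a)) (Ioo 0 1)) :
    IntegrableOn (fun x : ℝ => x ^ (a - 1) / (1 + x)) (Ioi 0) := by
  have key := integrableOn_image_iff_integrableOn_abs_deriv_smul measurableSet_Ioi
    (fun x hx => hasDeriv_div_one_add hx) injOn_div_one_add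
    (fun y : ℝ => y ^ (a - 1) * (1 - y) ^ (-a))
  rw [image_div_one_add] at key
  have := key.mp hbeta
  refine this.congr_fun ?_ measurableSet_Ioi
  intro x hx
  exact smul_eq_aux h0 h1 hx

lemma mellin_one_add_integral
    (h0 : 0 < a) (h1 : a < 1)
    (hval : ∫ x in Ioo (0:ℝ) 1, x ^ (a - 1) * (1 - x) ^ (-a) = π / Real.sin (π * a)) :
    ∫ x in Ioi (0:ℝ), x ^ (a - 1) / (1 + x) = π / Real.sin (π * a) := by
  have key := integral_image_eq_integral_abs_deriv_smul measurableSet_Ioi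
    (fun x hx => hasDeriv_div_one_add hx) injOn_div_one_add
    (fun y : ℝ => y ^ (a - 1) * (1 - y) ^ (-a))
  rw [image_div_one_add] at key
  rw [← hval, key]
  refine setIntegral_congr_fun measurableSet_Ioi ?_
  intro x hx
  exact (smul_eq_aux h0 h1 hx).symm

lemma integrable_aux {u s : ℝ} (hu : 0 < u) (hs0 : 0 < s) (hs2 : s < 2) :
    IntegrableOn (fun t : ℝ => t ^ (s-1) / (u + t^2)) (Ioi 0) := by
  have hmeas : Measurable (fun t : ℝ => t ^ (s-1) / (u + t^2)) := by
    fun_prop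
  have h1 : IntegrableOn (fun t : ℝ => t ^ (s-1) / (u + t^2)) (Ioc 0 1) := by
    have hbase : IntegrableOn (fun t : ℝ => t ^ (s-1) / u) (Ioc 0 1) := by
      have := (intervalIntegral.intervalIntegrable_rpow' (a := 0) (b := 1)
        (show (-1:ℝ) < s - 1 by linarith))
      exact ((intervalIntegrable_iff_integrableOn_Ioc_of_le zero_le_one).mp this).div_const u
    refine hbase.integrable.mono hmeas.aestronglyMeasurable ?_
    rw [ae_restrict_iff' measurableSet_Ioc]
    filter_upwards with t ht
    have ht0 : (0:ℝ) < t := ht.1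
    have hp : (0:ℝ) < t ^ (s-1) := Real.rpow_pos_of_pos ht0 _
    rw [Real.norm_eq_abs, Real.norm_eq_abs, abs_of_pos (by positivity),
      abs_of_pos (by positivity)]
    apply div_le_div_of_nonneg_left hp.le hu
    nlinarith [sq_nonneg t]
  have h2 : IntegrableOn (fun t : ℝ => t ^ (s-1) / (u + t^2)) (Ioi 1) := by
    have hbase : IntegrableOn (fun t : ℝ => t ^ (s-3)) (Ioi 1) :=
      integrableOn_Ioi_rpow_of_lt (by linarith) one_pos
    refine hbase.integrable.mono hmeas.aestronglyMeasurable ?_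
    rw [ae_restrict_iff' measurableSet_Ioi]
    filter_upwards with t ht
    have ht1 : (1:ℝ) < t := ht
    have ht0 : (0:ℝ) < t := by linarith
    have hp : (0:ℝ) < t ^ (s-1) := Real.rpow_pos_of_pos ht0 _
    rw [Real.norm_eq_abs, Real.norm_eq_abs, abs_of_pos (by positivity),
      abs_of_pos (Real.rpow_pos_of_pos ht0 _)]
    have e : t ^ (s-3) = t ^ (s-1) / t^2 := by
      rw [← Real.rpow_natCast t 2, ← Real.rpow_sub ht0]
      norm_num
      ring_nf
    rw [e]
    apply div_le_div_of_nonneg_left hp.le (by positivity)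
    nlinarith
  have := h1.union h2
  rwa [Ioc_union_Ioi_eq_Ioi zero_le_one] at this

lemma mellin_one_add_sq {s : ℝ} (hs0 : 0 < s) (hs2 : s < 2)
    (hmell : ∫ x in Ioi (0:ℝ), x ^ (s/2 - 1) / (1 + x) = π / Real.sin (π * (s/2))) :
    ∫ t in Ioi (0:ℝ), t ^ (s-1) / (1 + t^2) = π / (2 * Real.sin (π * (s/2))) := by
  have key := integral_comp_rpow_Ioi_of_pos
    (g := fun x : ℝ => x ^ (s/2 - 1) / (1 + x)) (p := 2) two_pos
  rw [hmell] at key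
  have key2 : ∫ x in Ioi (0:ℝ), 2 * (x ^ (s-1) / (1 + x^2)) = π / Real.sin (π * (s/2)) := by
    rw [← key]
    refine setIntegral_congr_fun measurableSet_Ioi ?_
    intro x hx
    have hx0 : (0:ℝ) < x := hx
    have e1 : x ^ (2:ℝ) = x ^ (2:ℕ) := by
      rw [← Real.rpow_natCast x 2]; norm_num
    have e2 : (x ^ (2:ℕ)) ^ (s/2 - 1) = x ^ (s - 2) := by
      rw [← Real.rpow_natCast x 2, ← Real.rpow_mul hx0.le]
      norm_num; ring_nf
    have e3 : x ^ ((2:ℝ) - 1) = x := by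
      norm_num
    simp only [smul_eq_mul, e1, e2, e3]
    have e4 : x ^ (s-2) = x ^ (s-1) / x := by
      rw [show s - 2 = (s-1) - 1 by ring, Real.rpow_sub hx0, Real.rpow_one]
    rw [e4]
    have hx2 : (0:ℝ) < 1 + x ^ (2:ℕ) := by positivity
    field_simp
  rw [MeasureTheory.integral_const_mul] at key2
  have hsin : (0:ℝ) < Real.sin (π * (s/2)) := by
    apply Real.sin_pos_of_pos_of_lt_pi
    · have := Real.pi_pos; positivity
    · calc π * (s/2) < π * 1 := by
            apply mul_lt_mul_of_pos_left _ Real.pi_pos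
            linarith
        _ = π := mul_one π
  have h2 : ∫ t in Ioi (0:ℝ), t ^ (s-1) / (1 + t^2) = π / Real.sin (π * (s/2)) / 2 := by
    linarith
  rw [h2, div_div, mul_comm]

lemma mellin_one_add_sq_scaled {u s C : ℝ} (hu : 0 < u)
    (hbase : ∫ t in Ioi (0:ℝ), t ^ (s-1) / (1 + t^2) = C) :
    ∫ t in Ioi (0:ℝ), t ^ (s-1) / (u + t^2) = u ^ (s/2 - 1) * C := by
  have hsq : (0:ℝ) < Real.sqrt u := Real.sqrt_pos.mpr hu
  have key := integral_comp_mul_left_Ioi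
    (g := fun t : ℝ => t ^ (s-1) / (u + t^2)) 0 hsq
  rw [mul_zero] at key
  have hpt : ∀ x ∈ Ioi (0:ℝ),
      (fun t : ℝ => t ^ (s-1) / (u + t^2)) (Real.sqrt u * x)
        = (u ^ ((1/2) * (s-1)) / u) * (x ^ (s-1) / (1 + x^2)) := by
    intro x hx
    have hx0 : (0:ℝ) < x := hx
    dsimp only
    have e1 : (Real.sqrt u * x) ^ (s-1) = u ^ ((1/2) * (s-1)) * x ^ (s-1) := by
      rw [Real.mul_rpow (Real.sqrt_nonneg u) hx0.le, Real.sqrt_eq_rpow,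
        ← Real.rpow_mul hu.le]
    have e2 : u + (Real.sqrt u * x)^2 = u * (1 + x^2) := by
      rw [mul_pow, Real.sq_sqrt hu.le]; ring
    rw [e1, e2]
    have h1x : (0:ℝ) < 1 + x^2 := by positivity
    field_simp
  have key2 : ∫ x in Ioi (0:ℝ), (fun t : ℝ => t ^ (s-1) / (u + t^2)) (Real.sqrt u * x)
      = (u ^ ((1/2) * (s-1)) / u) * C := by
    rw [setIntegral_congr_fun measurableSet_Ioi hpt,
      MeasureTheory.integral_const_mul, hbase]
  rw [key2, smul_eq_mul] at key
  have key3 : ∫ t in Ioi (0:ℝ), t ^ (s-1) / (u + t^2)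
      = Real.sqrt u * (u ^ ((1/2) * (s-1)) / u * C) := by
    rw [key, ← mul_assoc, mul_inv_cancel₀ hsq.ne', one_mul]
  rw [key3, show Real.sqrt u * (u ^ ((1/2) * (s-1)) / u * C)
      = (Real.sqrt u * (u ^ ((1/2) * (s-1)) / u)) * C by ring]
  congr 1
  rw [Real.sqrt_eq_rpow, mul_div_assoc', ← Real.rpow_add hu, Real.rpow_sub hu, Real.rpow_one]
  congr 2
  ring

lemma inner_log_integral {t a : ℝ} (ht : 0 < t) (ha : 0 < a) :
    ∫ u in Ioo (0:ℝ) a, (u + t^2)⁻¹ = Real.log (1 + a / t^2) := by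
  have ht2 : (0:ℝ) < t^2 := by positivity
  rw [← MeasureTheory.integral_Ioc_eq_integral_Ioo,
    ← intervalIntegral.integral_of_le ha.le]
  have := intervalIntegral.integral_comp_add_right (a := (0:ℝ)) (b := a)
    (fun v : ℝ => v⁻¹) (t^2)
  rw [this, zero_add, integral_inv_of_pos ht2 (by linarith)]
  congr 1
  field_simp
  ring

lemma mellin_C {s : ℝ} (hs0 : 0 < s) (hs2 : s < 2) :
    ∫ t in Ioi (0:ℝ), t ^ (s-1) / (1 + t^2) = π / (2 * Real.sin (π * (s/2))) := by
  have h0 : 0 < s/2 := by linarith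
  have h1 : s/2 < 1 := by linarith
  apply mellin_one_add_sq hs0 hs2
  apply mellin_one_add_integral h0 h1
  rw [← MeasureTheory.integral_Ioc_eq_integral_Ioo, ← intervalIntegral.integral_of_le zero_le_one]
  exact beta_intervalIntegral h0 h1

lemma log_integral {a s : ℝ} (ha : 0 < a) (hs0 : 0 < s) (hs2 : s < 2) :
    ∫ t in Ioi (0:ℝ), t ^ (s-1) * Real.log (1 + a / t^2)
      = π * a ^ (s/2) / (s * Real.sin (π * (s/2))) := by
  set C := π / (2 * Real.sin (π * (s/2))) with hCdef
  have hC : ∫ t in Ioi (0:ℝ), t ^ (s-1) / (1 + t^2) = C := mellin_C hs0 hs2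
  set f : ℝ → ℝ → ℝ := fun u t => t ^ (s-1) / (u + t^2) with hfdef
  have hmeasF : AEStronglyMeasurable (Function.uncurry f)
      ((volume.restrict (Ioo 0 a)).prod (volume.restrict (Ioi 0))) := by
    apply Measurable.aestronglyMeasurable
    apply Measurable.div
    · fun_prop
    · fun_prop
  have hsin : (0:ℝ) < Real.sin (π * (s/2)) := by
    apply Real.sin_pos_of_pos_of_lt_pi
    · have := Real.pi_pos; positivity
    · calc π * (s/2) < π * 1 := by
            apply mul_lt_mul_of_pos_left _ Real.pi_pos
            linarith
        _ = π := mul_one π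
  have hbase : IntegrableOn (fun u : ℝ => u ^ (s/2 - 1) * C) (Ioo 0 a) := by
    apply IntegrableOn.mono_set _ Ioo_subset_Ioc_self
    apply (intervalIntegrable_iff_integrableOn_Ioc_of_le ha.le).mp
    exact (intervalIntegral.intervalIntegrable_rpow' (by linarith)).mul_const C
  have hInt : Integrable (Function.uncurry f)
      ((volume.restrict (Ioo 0 a)).prod (volume.restrict (Ioi 0))) := by
    rw [MeasureTheory.integrable_prod_iff hmeasF]
    constructor
    · filter_upwards [ae_restrict_mem measurableSet_Ioo] with u hu
      exact integrable_aux hu.1 hs0 hs2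
    · apply hbase.congr
      rw [Filter.EventuallyEq, ae_restrict_iff' measurableSet_Ioo]
      filter_upwards with u hu
      have hu0 : 0 < u := hu.1
      rw [← mellin_one_add_sq_scaled hu0 hC]
      apply setIntegral_congr_fun measurableSet_Ioi
      intro t ht
      have ht0 : (0:ℝ) < t := ht
      dsimp only [Function.uncurry, hfdef]
      rw [Real.norm_eq_abs, abs_of_nonneg (by positivity)]
  have swap := MeasureTheory.integral_integral_swap hInt
  have lhs_eq : (∫ u in Ioo (0:ℝ) a, ∫ t in Ioi (0:ℝ), f u t)
      = π * a ^ (s/2) / (s * Real.sin (π * (s/2))) := by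
    rw [setIntegral_congr_fun measurableSet_Ioo
      (fun u hu => mellin_one_add_sq_scaled hu.1 hC)]
    rw [← MeasureTheory.integral_Ioc_eq_integral_Ioo,
      ← intervalIntegral.integral_of_le ha.le,
      intervalIntegral.integral_mul_const,
      integral_rpow (Or.inl (by linarith : (-1:ℝ) < s/2 - 1))]
    rw [show s/2 - 1 + 1 = s/2 by ring, Real.zero_rpow (by linarith : s/2 ≠ 0)]
    rw [hCdef]
    field_simp
    ring
  have rhs_eq : (∫ t in Ioi (0:ℝ), ∫ u in Ioo (0:ℝ) a, f u t)
      = ∫ t in Ioi (0:ℝ), t ^ (s-1) * Real.log (1 + a / t^2) := by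
    apply setIntegral_congr_fun measurableSet_Ioi
    intro t ht
    have ht0 : (0:ℝ) < t := ht
    have : ∀ u : ℝ, f u t = t ^ (s-1) * (u + t^2)⁻¹ := by
      intro u; rw [hfdef]; ring
    simp only [this]
    rw [MeasureTheory.integral_const_mul, inner_log_integral ht0 ha]
  rw [← rhs_eq, ← swap, lhs_eq]

/-- for every real `y`,
`∫₀^∞ log(1 + y²/t²) dt = π |y|` and
`∫₀^∞ log(1 + y²/t²) (1/4) t^{−3/4} dt = π csc(π/8) |y|^{1/4}`. -/
theorem stmt_2 (y : ℝ) :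
    (∫ t in Set.Ioi (0:ℝ), Real.log (1 + y^2 / t^2)) = π * |y| ∧
    (∫ t in Set.Ioi (0:ℝ), Real.log (1 + y^2 / t^2) * (t ^ (-(3:ℝ)/4) / 4))
      = π * (Real.sin (π / 8))⁻¹ * |y| ^ ((1:ℝ)/4) := by
  rcases eq_or_ne y 0 with rfl | hy
  · constructor <;> simp [Real.zero_rpow (by norm_num : (1:ℝ)/4 ≠ 0)]
  have ha : (0:ℝ) < y^2 := by positivity
  have hsin8 : (0:ℝ) < Real.sin (π / 8) := by
    apply Real.sin_pos_of_pos_of_lt_pi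
    · have := Real.pi_pos; positivity
    · have := Real.pi_pos; linarith
  constructor
  · have h1 := log_integral ha one_pos one_lt_two
    rw [show π * ((1:ℝ)/2) = π/2 by ring, Real.sin_pi_div_two] at h1
    have h2 : (y^2) ^ ((1:ℝ)/2) = |y| := by
      rw [← sq_abs y, ← Real.rpow_natCast |y| 2, ← Real.rpow_mul (abs_nonneg y)]
      norm_num
    rw [h2] at h1
    norm_num at h1
    exact h1
  · have h1 := log_integral ha (by norm_num : (0:ℝ) < 1/4) (by norm_num : (1:ℝ)/4 < 2)
    rw [show π * ((1:ℝ)/4/2) = π/8 by ring] at h1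
    have h2 : (y^2) ^ ((1:ℝ)/4/2) = |y| ^ ((1:ℝ)/4) := by
      rw [← sq_abs y, ← Real.rpow_natCast |y| 2, ← Real.rpow_mul (abs_nonneg y)]
      norm_num
    rw [h2] at h1
    have key : (∫ t in Set.Ioi (0:ℝ), Real.log (1 + y^2 / t^2) * (t ^ (-(3:ℝ)/4) / 4))
        = (∫ t in Set.Ioi (0:ℝ), t ^ ((1:ℝ)/4 - 1) * Real.log (1 + y^2 / t^2)) * (1/4) := by
      rw [← MeasureTheory.integral_mul_const]
      apply setIntegral_congr_fun measurableSet_Ioi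
      intro t ht
      rw [show -(3:ℝ)/4 = (1:ℝ)/4 - 1 by norm_num]
      ring
    rw [key, h1]
    field_simp
end
end

section
/- For every real y ≠ 0 one has the lower bound Ũ(iy) ≥ π a |y| − π b csc(π/8) |y|^{1/4} − a B · G(y/B) − log(1 + y²/B²), where G(y) := ∫₀¹ log(1 + y²/t²) (1 − (1/4) t^{−3/4}) dt. -/
open Real MeasureTheory Set Filter Topology

lemma beta_val : ∫ x in (0:ℝ)..1, x ^ ((1:ℝ)/8 - 1) * (1-x) ^ ((7:ℝ)/8 - 1)
    = π / Real.sin (π/8) := by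
  have h1 := Complex.Gamma_mul_Gamma_eq_betaIntegral (s := (1:ℂ)/8) (t := (7:ℂ)/8)
    (by norm_num) (by norm_num)
  have h2 := Complex.Gamma_mul_Gamma_one_sub ((1:ℂ)/8)
  have he : (1:ℂ)/8 + 7/8 = 1 := by norm_num
  have he2 : (1:ℂ) - 1/8 = 7/8 := by norm_num
  rw [he, Complex.Gamma_one, one_mul] at h1
  rw [he2] at h2
  have hbv : Complex.betaIntegral (1/8) (7/8) = ↑π / Complex.sin (↑π * (1/8)) := by
    rw [← h1, h2]
  have hsin : Complex.sin (↑π * (1/8)) = ((Real.sin (π/8) : ℝ) : ℂ) := by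
    rw [Complex.ofReal_sin]; push_cast; ring_nf
  have hint : Complex.betaIntegral (1/8) (7/8)
      = ((∫ x in (0:ℝ)..1, x ^ ((1:ℝ)/8 - 1) * (1-x) ^ ((7:ℝ)/8 - 1) : ℝ) : ℂ) := by
    rw [Complex.betaIntegral, ← intervalIntegral.integral_ofReal]
    refine intervalIntegral.integral_congr fun x hx => ?_
    rw [uIcc_of_le (by norm_num : (0:ℝ) ≤ 1)] at hx
    push_cast
    rw [show ((1:ℂ)/8 - 1) = (((1:ℝ)/8 - 1 : ℝ) : ℂ) by norm_num,
        show ((7:ℂ)/8 - 1) = (((7:ℝ)/8 - 1 : ℝ) : ℂ) by norm_num,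
        ← Complex.ofReal_cpow hx.1,
        show (1 - (x:ℂ)) = ((1 - x : ℝ) : ℂ) by push_cast; ring,
        ← Complex.ofReal_cpow (by linarith [hx.2] : (0:ℝ) ≤ 1 - x)]
  rw [hint, hsin] at hbv
  have : ((∫ x in (0:ℝ)..1, x ^ ((1:ℝ)/8 - 1) * (1-x) ^ ((7:ℝ)/8 - 1) : ℝ) : ℂ)
      = ((π / Real.sin (π/8) : ℝ) : ℂ) := by
    rw [hbv]; push_cast; ring
  exact_mod_cast this

lemma mellin_val : ∫ x in Ioi (0:ℝ), x ^ (-(7:ℝ)/8) / (1+x) = π / Real.sin (π/8) := by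
  have himg : (fun t : ℝ => t/(1+t)) '' Ioi 0 = Ioo 0 1 := by
    ext x
    constructor
    · rintro ⟨t, ht, rfl⟩
      have ht' : (0:ℝ) < t := mem_Ioi.mp ht
      have h1 : (0:ℝ) < 1 + t := by linarith
      exact ⟨by positivity, by rw [div_lt_one h1]; linarith⟩
    · rintro ⟨hx0, hx1⟩
      have h1 : (0:ℝ) < 1 - x := by linarith
      refine ⟨x / (1-x), div_pos hx0 h1, ?_⟩
      have h2 : (1 - x) * (1 + x/(1-x)) = 1 := by field_simp; ring
      simp only
      rw [div_div, h2, div_one]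
  have hderiv : ∀ t ∈ Ioi (0:ℝ), HasDerivWithinAt (fun t : ℝ => t/(1+t))
      ((1+t)^(-(2:ℝ))) (Ioi 0) t := by
    intro t ht
    have ht' : (0:ℝ) < t := mem_Ioi.mp ht
    have h1 : (0:ℝ) < 1 + t := by linarith
    have := (hasDerivAt_id t).div ((hasDerivAt_const t 1).add (hasDerivAt_id t)) h1.ne'
    refine (this.congr_deriv ?_).hasDerivWithinAt
    rw [rpow_neg h1.le, show ((2:ℝ)) = ((2:ℕ):ℝ) by norm_num, rpow_natCast]
    simp only [Pi.add_apply, id]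
    field_simp
    ring
  have hinj : InjOn (fun t : ℝ => t/(1+t)) (Ioi 0) := by
    intro t ht u hu h
    have ht' : (0:ℝ) < t := mem_Ioi.mp ht
    have hu' : (0:ℝ) < u := mem_Ioi.mp hu
    have h1 : (1:ℝ) + t ≠ 0 := by linarith
    have h2 : (1:ℝ) + u ≠ 0 := by linarith
    simp only at h
    field_simp at h
    linarith
  have key := integral_image_eq_integral_abs_deriv_smul measurableSet_Ioi hderiv hinj
    (fun x : ℝ => x ^ ((1:ℝ)/8 - 1) * (1-x) ^ ((7:ℝ)/8 - 1))
  rw [himg] at key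
  have lhs_eq : ∫ x in Ioo (0:ℝ) 1, x ^ ((1:ℝ)/8 - 1) * (1-x) ^ ((7:ℝ)/8 - 1)
      = π / Real.sin (π/8) := by
    rw [← beta_val, intervalIntegral.integral_of_le (by norm_num : (0:ℝ) ≤ 1),
      integral_Ioc_eq_integral_Ioo]
  rw [lhs_eq] at key
  rw [key]
  refine (setIntegral_congr_fun measurableSet_Ioi fun t ht => ?_).symm
  have ht' : (0:ℝ) < t := mem_Ioi.mp ht
  have h1 : (0:ℝ) < 1 + t := by linarith
  have habs : |(1+t)^(-(2:ℝ))| = (1+t)^(-(2:ℝ)) := abs_of_pos (rpow_pos_of_pos h1 _)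
  have h2 : (1:ℝ) - t/(1+t) = (1+t)⁻¹ := by field_simp; ring
  simp only [smul_eq_mul, habs, h2]
  have key2 : (1+t)^(-(2:ℝ)) * ((t/(1+t))^((1:ℝ)/8-1) * ((1+t)⁻¹)^((7:ℝ)/8-1))
      = t^((1:ℝ)/8-1) * (1+t)^(-(2:ℝ) + (-((1:ℝ)/8-1)) + (-((7:ℝ)/8-1))) := by
    rw [div_rpow ht'.le h1.le, inv_rpow h1.le, ← rpow_neg h1.le ((7:ℝ)/8-1), div_eq_mul_inv,
      ← rpow_neg h1.le ((1:ℝ)/8-1), rpow_add h1, rpow_add h1]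
    ring
  rw [key2, show (-(2:ℝ) + (-((1:ℝ)/8-1)) + (-((7:ℝ)/8-1))) = -1 by norm_num,
    rpow_neg_one, show (1:ℝ)/8 - 1 = -(7:ℝ)/8 by norm_num]
  ring

lemma A_val : ∫ t in Ioi (0:ℝ), t ^ (-(3:ℝ)/4) / (1+t^2) = π / (2 * Real.sin (π/8)) := by
  have key := integral_comp_rpow_Ioi (fun y : ℝ => (1/2) * (y ^ (-(7:ℝ)/8) / (1+y)))
    (p := 2) (by norm_num)
  have hg : ∫ y in Ioi (0:ℝ), (1/2) * (y ^ (-(7:ℝ)/8) / (1+y)) = π / (2 * Real.sin (π/8)) := by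
    rw [integral_const_mul, mellin_val]
    ring
  rw [hg] at key
  rw [← key]
  refine setIntegral_congr_fun measurableSet_Ioi fun t ht => ?_
  have ht' : (0:ℝ) < t := mem_Ioi.mp ht
  have h2 : t ^ (2:ℝ) = t^2 := by
    rw [show ((2:ℝ)) = ((2:ℕ):ℝ) by norm_num, rpow_natCast]
  simp only [smul_eq_mul]
  rw [h2, ← rpow_natCast t 2, ← rpow_mul ht'.le]
  norm_num
  have e : t * t^(-((7:ℝ)/4)) = t^(-((3:ℝ)/4)) := by
    rw [show (-((3:ℝ)/4)) = 1 + (-((7:ℝ)/4)) by norm_num, rpow_add ht', rpow_one]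
  rw [← e]
  push_cast
  ring

lemma log_nonneg' {c t : ℝ} (ht : 0 < t) : 0 ≤ Real.log (1 + c^2/t^2) := by
  apply Real.log_nonneg
  have : 0 ≤ c^2/t^2 := by positivity
  linarith

lemma cont_log (c : ℝ) : ContinuousOn (fun t : ℝ => Real.log (1 + c^2/t^2)) (Ioi 0) := by
  apply ContinuousOn.log
  · exact continuousOn_const.add (continuousOn_const.div
      ((continuousOn_id (s := Ioi (0:ℝ))).pow 2)
      (fun t ht => by have := mem_Ioi.mp ht; positivity))
  · intro t ht
    have := mem_Ioi.mp ht
    positivity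

lemma neg_log_le {t : ℝ} (ht : 0 < t) : -Real.log t ≤ 8 * t ^ (-(1:ℝ)/8) := by
  have h := Real.log_le_rpow_div (x := t⁻¹) (ε := 1/8) (by positivity) (by norm_num)
  rw [Real.log_inv] at h
  rw [← Real.rpow_neg_one t, ← Real.rpow_mul ht.le] at h
  calc -Real.log t ≤ t ^ (-1 * ((1:ℝ)/8)) / (1/8) := h
    _ = 8 * t ^ (-(1:ℝ)/8) := by norm_num; ring
  
lemma log_bound0 {c t : ℝ} (hc : 0 < c) (ht : 0 < t) (ht1 : t ≤ 1) :
    Real.log (1 + c^2/t^2) ≤ Real.log (1+c^2) + 16 * t ^ (-(1:ℝ)/8) := by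
  have h1 : (1:ℝ) + c^2/t^2 ≤ (1+c^2)/t^2 := by
    rw [add_div]
    have : (1:ℝ) ≤ 1/t^2 := by
      rw [le_div_iff₀ (by positivity)]
      nlinarith
    linarith
  have h2 : Real.log (1 + c^2/t^2) ≤ Real.log ((1+c^2)/t^2) :=
    Real.log_le_log (by positivity) h1
  have h3 : Real.log ((1+c^2)/t^2) = Real.log (1+c^2) - 2 * Real.log t := by
    rw [Real.log_div (by positivity) (by positivity), Real.log_pow]
    push_cast; ring
  have h4 := neg_log_le ht
  calc Real.log (1 + c^2/t^2) ≤ Real.log (1+c^2) - 2 * Real.log t := by rw [← h3]; exact h2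
    _ ≤ Real.log (1+c^2) + 16 * t ^ (-(1:ℝ)/8) := by nlinarith [h4]

lemma log_bound_inf {c t : ℝ} (ht : 0 < t) :
    Real.log (1 + c^2/t^2) ≤ c^2 * t ^ (-(2:ℝ)) := by
  have h0 : (0:ℝ) < 1 + c^2/t^2 := by positivity
  have h := Real.log_le_sub_one_of_pos h0
  have : t ^ (-(2:ℝ)) = (t^2)⁻¹ := by
    rw [Real.rpow_neg ht.le, show ((2:ℝ)) = ((2:ℕ):ℝ) by norm_num, Real.rpow_natCast]
  rw [this]
  calc Real.log (1 + c^2/t^2) ≤ c^2/t^2 := by linarith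
    _ = c^2 * (t^2)⁻¹ := by ring

lemma intOn_rpow_log {c : ℝ} (hc : 0 < c) :
    IntegrableOn (fun t : ℝ => t ^ (-(3:ℝ)/4) * Real.log (1 + c^2/t^2)) (Ioi 0) := by
  have hcont : ContinuousOn (fun t : ℝ => t ^ (-(3:ℝ)/4) * Real.log (1 + c^2/t^2)) (Ioi 0) :=
    (continuousOn_id.rpow_const (fun t ht => Or.inl (ne_of_gt (mem_Ioi.mp ht)))).mul (cont_log c)
  have hsplit : Ioc (0:ℝ) 1 ∪ Ioi 1 = Ioi 0 := Ioc_union_Ioi_eq_Ioi zero_le_one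
  rw [← hsplit]
  apply IntegrableOn.union
  · -- near zero
    have hmaj : IntegrableOn (fun t : ℝ =>
        Real.log (1+c^2) * t ^ (-(3:ℝ)/4) + 16 * t ^ (-(7:ℝ)/8)) (Ioc 0 1) := by
      apply Integrable.add
      · exact ((intervalIntegral.intervalIntegrable_rpow' (by norm_num)).1.const_mul _)
      · exact ((intervalIntegral.intervalIntegrable_rpow' (by norm_num)).1.const_mul _)
    apply Integrable.mono hmaj
      ((hcont.mono Ioc_subset_Ioi_self).aestronglyMeasurable measurableSet_Ioc)
    rw [ae_restrict_iff' measurableSet_Ioc]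
    filter_upwards with t
    intro ht
    obtain ⟨ht0, ht1⟩ := ht
    have hL : (0:ℝ) ≤ Real.log (1+c^2) := Real.log_nonneg (by nlinarith)
    have hb := log_bound0 hc ht0 ht1
    rw [Real.norm_eq_abs, Real.norm_eq_abs, abs_of_nonneg (by positivity : (0:ℝ) ≤ _ * _ + _),
      abs_of_nonneg (mul_nonneg (Real.rpow_nonneg ht0.le _) (log_nonneg' ht0))]
    calc t ^ (-(3:ℝ)/4) * Real.log (1 + c^2/t^2)
        ≤ t ^ (-(3:ℝ)/4) * (Real.log (1+c^2) + 16 * t ^ (-(1:ℝ)/8)) := by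
          apply mul_le_mul_of_nonneg_left hb (Real.rpow_nonneg ht0.le _)
      _ = Real.log (1+c^2) * t ^ (-(3:ℝ)/4) + 16 * (t ^ (-(3:ℝ)/4) * t ^ (-(1:ℝ)/8)) := by ring
      _ = Real.log (1+c^2) * t ^ (-(3:ℝ)/4) + 16 * t ^ (-(7:ℝ)/8) := by
          rw [← Real.rpow_add ht0]; norm_num
  · -- near infinity
    have hmaj : IntegrableOn (fun t : ℝ => c^2 * t ^ (-(11:ℝ)/4)) (Ioi 1) :=
      (integrableOn_Ioi_rpow_of_lt (by norm_num) one_pos).const_mul _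
    apply Integrable.mono hmaj
      ((hcont.mono (Ioi_subset_Ioi zero_le_one)).aestronglyMeasurable measurableSet_Ioi)
    rw [ae_restrict_iff' measurableSet_Ioi]
    filter_upwards with t
    intro ht
    have ht1 : (1:ℝ) < t := mem_Ioi.mp ht
    have ht0 : (0:ℝ) < t := lt_trans one_pos ht1
    rw [Real.norm_eq_abs, Real.norm_eq_abs, abs_of_nonneg (by positivity : (0:ℝ) ≤ c^2 * _),
      abs_of_nonneg (mul_nonneg (Real.rpow_nonneg ht0.le _) (log_nonneg' ht0))]
    calc t ^ (-(3:ℝ)/4) * Real.log (1 + c^2/t^2)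
        ≤ t ^ (-(3:ℝ)/4) * (c^2 * t ^ (-(2:ℝ))) := by
          apply mul_le_mul_of_nonneg_left (log_bound_inf ht0) (Real.rpow_nonneg ht0.le _)
      _ = c^2 * (t ^ (-(3:ℝ)/4) * t ^ (-(2:ℝ))) := by ring
      _ = c^2 * t ^ (-(11:ℝ)/4) := by rw [← Real.rpow_add ht0]; norm_num

lemma intOn_log {c : ℝ} (hc : 0 < c) :
    IntegrableOn (fun t : ℝ => Real.log (1 + c^2/t^2)) (Ioi 0) := by
  have hcont := cont_log c
  have hsplit : Ioc (0:ℝ) 1 ∪ Ioi 1 = Ioi 0 := Ioc_union_Ioi_eq_Ioi zero_le_one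
  rw [← hsplit]
  apply IntegrableOn.union
  · have hmaj : IntegrableOn (fun t : ℝ =>
        Real.log (1+c^2) + 16 * t ^ (-(1:ℝ)/8)) (Ioc 0 1) := by
      apply Integrable.add
      · exact integrableOn_const measure_Ioc_lt_top.ne
      · exact ((intervalIntegral.intervalIntegrable_rpow' (by norm_num)).1.const_mul _)
    apply Integrable.mono hmaj
      ((hcont.mono Ioc_subset_Ioi_self).aestronglyMeasurable measurableSet_Ioc)
    rw [ae_restrict_iff' measurableSet_Ioc]
    filter_upwards with t
    intro ht
    obtain ⟨ht0, ht1⟩ := ht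
    have hL : (0:ℝ) ≤ Real.log (1+c^2) := Real.log_nonneg (by nlinarith)
    rw [Real.norm_eq_abs, Real.norm_eq_abs, abs_of_nonneg (by positivity : (0:ℝ) ≤ _ + _),
      abs_of_nonneg (log_nonneg' ht0)]
    exact log_bound0 hc ht0 ht1
  · have hmaj : IntegrableOn (fun t : ℝ => c^2 * t ^ (-(2:ℝ))) (Ioi 1) :=
      (integrableOn_Ioi_rpow_of_lt (by norm_num) one_pos).const_mul _
    apply Integrable.mono hmaj
      ((hcont.mono (Ioi_subset_Ioi zero_le_one)).aestronglyMeasurable measurableSet_Ioi)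
    rw [ae_restrict_iff' measurableSet_Ioi]
    filter_upwards with t
    intro ht
    have ht1 : (1:ℝ) < t := mem_Ioi.mp ht
    have ht0 : (0:ℝ) < t := lt_trans one_pos ht1
    rw [Real.norm_eq_abs, Real.norm_eq_abs, abs_of_nonneg (by positivity : (0:ℝ) ≤ c^2 * _),
      abs_of_nonneg (log_nonneg' ht0)]
    exact log_bound_inf ht0

-- L4 : ∫_{Ioi 0} log(1 + 1/t²) dt = π
lemma L4 : ∫ t in Ioi (0:ℝ), Real.log (1 + 1/t^2) = π := by
  set F : ℝ → ℝ := fun t => t * Real.log (1 + 1/t^2) + 2 * Real.arctan t with hF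
  have hderiv : ∀ t ∈ Ioi (0:ℝ), HasDerivAt F (Real.log (1 + 1/t^2)) t := by
    intro t ht
    have ht' : (0:ℝ) < t := mem_Ioi.mp ht
    have h1 : (0:ℝ) < 1 + 1/t^2 := by positivity
    have hu : HasDerivAt (fun t : ℝ => 1 + 1/t^2) (-2/t^3) t := by
      have : HasDerivAt (fun t : ℝ => t^2) (2*t) t := by
        simpa using hasDerivAt_pow 2 t
      have h2 := (hasDerivAt_const t (1:ℝ)).div this (by positivity : t^2 ≠ 0)
      have := (hasDerivAt_const t (1:ℝ)).add h2
      refine this.congr_deriv ?_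
      field_simp
      ring
    have hlog : HasDerivAt (fun t : ℝ => Real.log (1 + 1/t^2)) ((-2/t^3)/(1+1/t^2)) t :=
      hu.log h1.ne'
    have := ((hasDerivAt_id t).mul hlog).add ((Real.hasDerivAt_arctan t).const_mul 2)
    refine this.congr_deriv ?_
    have h3 : (0:ℝ) < 1 + t^2 := by positivity
    simp only [id]
    field_simp
    ring
  have hlnn : ∀ t : ℝ, 0 < t → (0:ℝ) ≤ Real.log (1 + 1/t^2) := by
    intro t ht
    have h1t : (0:ℝ) ≤ 1/t^2 := by positivity
    exact Real.log_nonneg (by linarith)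
  have hcont0 : ContinuousWithinAt F (Ici 0) 0 := by
    have hF0 : F 0 = 0 := by simp [hF]
    rw [ContinuousWithinAt, hF0]
    have harctan : Tendsto (fun t : ℝ => 2 * Real.arctan t) (𝓝[Ici 0] 0) (𝓝 0) := by
      have := (Real.continuous_arctan.tendsto 0).const_mul 2
      simp only [Real.arctan_zero, mul_zero] at this
      exact this.mono_left nhdsWithin_le_nhds
    have hmain : Tendsto (fun t : ℝ => t * Real.log (1 + 1/t^2)) (𝓝[Ici 0] 0) (𝓝 0) := by
      have hbound : Tendsto (fun t : ℝ => Real.log 2 * t + 16 * t ^ ((7:ℝ)/8))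
          (𝓝[Ici 0] 0) (𝓝 0) := by
        have h1 : Tendsto (fun t : ℝ => Real.log 2 * t + 16 * t ^ ((7:ℝ)/8)) (𝓝[Ici 0] 0)
            (𝓝 (Real.log 2 * 0 + 16 * (0:ℝ) ^ ((7:ℝ)/8))) := by
          apply Tendsto.add
          · exact (tendsto_id.const_mul _).mono_left nhdsWithin_le_nhds
          · exact ((Real.continuousAt_rpow_const 0 _ (Or.inr (by norm_num))).tendsto.const_mul
              16).mono_left nhdsWithin_le_nhds
        simpa using h1
      apply squeeze_zero_norm' _ hbound
      filter_upwards [Icc_mem_nhdsGE_of_mem (by norm_num : (0:ℝ) ∈ Ico 0 1)] with t ht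
      obtain ⟨ht0, ht1⟩ := ht
      rcases eq_or_lt_of_le ht0 with h | h
      · simp [← h]
      · have hb' := log_bound0 (c := 1) one_pos h ht1
        norm_num at hb'
        rw [← one_div (t^2)] at hb'
        rw [Real.norm_eq_abs, abs_of_nonneg (mul_nonneg h.le (hlnn t h))]
        calc t * Real.log (1 + 1/t^2) ≤ t * (Real.log 2 + 16 * t ^ (-((1:ℝ)/8))) :=
              mul_le_mul_of_nonneg_left hb' h.le
          _ = Real.log 2 * t + 16 * (t * t ^ (-((1:ℝ)/8))) := by ring
          _ = Real.log 2 * t + 16 * t ^ ((7:ℝ)/8) := by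
              rw [show ((7:ℝ)/8) = 1 + (-((1:ℝ)/8)) by norm_num, Real.rpow_add h,
                Real.rpow_one]
    have := hmain.add harctan
    simpa [hF] using this
  have htop : Tendsto F atTop (𝓝 π) := by
    have harctan : Tendsto (fun t : ℝ => 2 * Real.arctan t) atTop (𝓝 (2 * (π/2))) :=
      (Real.tendsto_arctan_atTop.mono_right nhdsWithin_le_nhds).const_mul 2
    rw [show 2 * (π/2) = π by ring] at harctan
    have hmain : Tendsto (fun t : ℝ => t * Real.log (1 + 1/t^2)) atTop (𝓝 0) := by
      apply squeeze_zero_norm' _ (tendsto_inv_atTop_zero)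
      filter_upwards [Ioi_mem_atTop (1:ℝ)] with t ht
      have ht1 : (1:ℝ) < t := ht
      have ht0 : (0:ℝ) < t := lt_trans one_pos ht1
      have hb : Real.log (1 + 1/t^2) ≤ 1/t^2 := by
        have h0 : (0:ℝ) < 1 + 1/t^2 := by positivity
        have := Real.log_le_sub_one_of_pos h0
        linarith
      rw [Real.norm_eq_abs, abs_of_nonneg (mul_nonneg ht0.le (hlnn t ht0))]
      calc t * Real.log (1 + 1/t^2) ≤ t * (1/t^2) := mul_le_mul_of_nonneg_left hb ht0.le
        _ = t⁻¹ := by field_simp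
    have := hmain.add harctan
    simpa [hF] using this
  have hint : IntegrableOn (fun t : ℝ => Real.log (1 + 1/t^2)) (Ioi 0) := by
    have h := intOn_log (c := 1) one_pos
    apply h.congr_fun _ measurableSet_Ioi
    intro t ht
    norm_num
  have key := integral_Ioi_of_hasDerivAt_of_tendsto hcont0 hderiv hint htop
  have hF0 : F 0 = 0 := by simp [hF]
  rw [key, hF0, sub_zero]

lemma intOn_g2 : IntegrableOn (fun t : ℝ => t ^ (-(3:ℝ)/4) / (1+t^2)) (Ioi 0) := by
  have hcont : ContinuousOn (fun t : ℝ => t ^ (-(3:ℝ)/4) / (1+t^2)) (Ioi 0) := by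
    apply ContinuousOn.div
    · exact continuousOn_id.rpow_const (fun t ht => Or.inl (ne_of_gt (mem_Ioi.mp ht)))
    · exact continuousOn_const.add ((continuousOn_id (s := Ioi (0:ℝ))).pow 2)
    · intro t ht; positivity
  have hsplit : Ioc (0:ℝ) 1 ∪ Ioi 1 = Ioi 0 := Ioc_union_Ioi_eq_Ioi zero_le_one
  rw [← hsplit]
  apply IntegrableOn.union
  · apply Integrable.mono (intervalIntegral.intervalIntegrable_rpow'
      (by norm_num : (-1:ℝ) < -(3:ℝ)/4)).1
      ((hcont.mono Ioc_subset_Ioi_self).aestronglyMeasurable measurableSet_Ioc)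
    rw [ae_restrict_iff' measurableSet_Ioc]
    filter_upwards with t ht
    obtain ⟨ht0, ht1⟩ := ht
    rw [Real.norm_eq_abs, Real.norm_eq_abs, abs_of_nonneg (by positivity),
      abs_of_nonneg (Real.rpow_nonneg ht0.le _)]
    rw [div_le_iff₀ (by positivity)]
    nlinarith [Real.rpow_nonneg ht0.le (-(3:ℝ)/4), sq_nonneg t]
  · apply Integrable.mono ((integrableOn_Ioi_rpow_of_lt
      (by norm_num : (-(11:ℝ)/4) < -1) one_pos))
      ((hcont.mono (Ioi_subset_Ioi zero_le_one)).aestronglyMeasurable measurableSet_Ioi)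
    rw [ae_restrict_iff' measurableSet_Ioi]
    filter_upwards with t ht
    have ht1 : (1:ℝ) < t := mem_Ioi.mp ht
    have ht0 : (0:ℝ) < t := lt_trans one_pos ht1
    rw [Real.norm_eq_abs, Real.norm_eq_abs, abs_of_nonneg (by positivity),
      abs_of_nonneg (Real.rpow_nonneg ht0.le _)]
    have he : t ^ (-(11:ℝ)/4) = t ^ (-(3:ℝ)/4) / t^2 := by
      rw [eq_div_iff (by positivity), ← Real.rpow_natCast t 2, ← Real.rpow_add ht0]
      norm_num
    rw [he, div_le_div_iff₀ (by positivity) (by positivity)]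
    have : (0:ℝ) ≤ t ^ (-(3:ℝ)/4) := Real.rpow_nonneg ht0.le _
    nlinarith
lemma L3 : ∫ t in Ioi (0:ℝ), t ^ (-(3:ℝ)/4) * Real.log (1 + 1/t^2)
    = 4 * π / Real.sin (π/8) := by
  set F : ℝ → ℝ := fun t => 4 * t ^ ((1:ℝ)/4) * Real.log (1 + 1/t^2) with hF
  have hlnn : ∀ t : ℝ, 0 < t → (0:ℝ) ≤ Real.log (1 + 1/t^2) := by
    intro t ht
    have h1t : (0:ℝ) ≤ 1/t^2 := by positivity
    exact Real.log_nonneg (by linarith)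
  have hderiv : ∀ t ∈ Ioi (0:ℝ), HasDerivAt F
      (t ^ (-(3:ℝ)/4) * Real.log (1 + 1/t^2) - 8 * (t ^ (-(3:ℝ)/4) / (1+t^2))) t := by
    intro t ht
    have ht' : (0:ℝ) < t := mem_Ioi.mp ht
    have h1 : (0:ℝ) < 1 + 1/t^2 := by positivity
    have hu : HasDerivAt (fun t : ℝ => 1 + 1/t^2) (-2/t^3) t := by
      have hp : HasDerivAt (fun t : ℝ => t^2) (2*t) t := by simpa using hasDerivAt_pow 2 t
      have h2 := (hasDerivAt_const t (1:ℝ)).div hp (by positivity : t^2 ≠ 0)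
      have := (hasDerivAt_const t (1:ℝ)).add h2
      refine this.congr_deriv ?_
      field_simp
      ring
    have hlog : HasDerivAt (fun t : ℝ => Real.log (1 + 1/t^2)) ((-2/t^3)/(1+1/t^2)) t :=
      hu.log h1.ne'
    have hr : HasDerivAt (fun t : ℝ => 4 * t ^ ((1:ℝ)/4)) (t ^ (-(3:ℝ)/4)) t := by
      have := (Real.hasDerivAt_rpow_const (x := t) (p := (1:ℝ)/4) (Or.inl ht'.ne')).const_mul 4
      refine this.congr_deriv ?_
      rw [show (1:ℝ)/4 - 1 = -(3:ℝ)/4 by norm_num]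
      ring
    have := hr.mul hlog
    refine this.congr_deriv ?_
    have e : t ^ ((1:ℝ)/4) = t * t ^ (-(3:ℝ)/4) := by
      rw [show ((1:ℝ)/4) = 1 + (-(3:ℝ)/4) by norm_num, Real.rpow_add ht', Real.rpow_one]
    rw [e]
    have h3 : (0:ℝ) < 1 + t^2 := by positivity
    field_simp
    ring
  have hcont0 : ContinuousWithinAt F (Ici 0) 0 := by
    have hF0 : F 0 = 0 := by
      simp [hF, Real.zero_rpow (by norm_num : ((1:ℝ)/4) ≠ 0)]
    rw [ContinuousWithinAt, hF0]
    have hbound : Tendsto (fun t : ℝ => 4 * Real.log 2 * t ^ ((1:ℝ)/4) + 64 * t ^ ((1:ℝ)/8))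
        (𝓝[Ici 0] 0) (𝓝 0) := by
      have h1 : Tendsto (fun t : ℝ => 4 * Real.log 2 * t ^ ((1:ℝ)/4) + 64 * t ^ ((1:ℝ)/8))
          (𝓝[Ici 0] 0)
          (𝓝 (4 * Real.log 2 * (0:ℝ) ^ ((1:ℝ)/4) + 64 * (0:ℝ) ^ ((1:ℝ)/8))) := by
        apply Tendsto.add
        · exact ((Real.continuousAt_rpow_const 0 _ (Or.inr (by norm_num))).tendsto.const_mul
            _).mono_left nhdsWithin_le_nhds
        · exact ((Real.continuousAt_rpow_const 0 _ (Or.inr (by norm_num))).tendsto.const_mul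
            _).mono_left nhdsWithin_le_nhds
      simpa [Real.zero_rpow (by norm_num : ((1:ℝ)/4) ≠ 0),
        Real.zero_rpow (by norm_num : ((1:ℝ)/8) ≠ 0)] using h1
    apply squeeze_zero_norm' _ hbound
    filter_upwards [Icc_mem_nhdsGE_of_mem (by norm_num : (0:ℝ) ∈ Ico 0 1)] with t ht
    obtain ⟨ht0, ht1⟩ := ht
    rcases eq_or_lt_of_le ht0 with h | h
    · simp [hF, ← h, Real.zero_rpow (by norm_num : ((1:ℝ)/4) ≠ 0),
        Real.zero_rpow (by norm_num : ((1:ℝ)/8) ≠ 0)]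
    · have hb' := log_bound0 (c := 1) one_pos h ht1
      norm_num at hb'
      rw [← one_div (t^2)] at hb'
      have hrp : (0:ℝ) ≤ t ^ ((1:ℝ)/4) := Real.rpow_nonneg h.le _
      rw [Real.norm_eq_abs, abs_of_nonneg (by
        simp only [hF]
        have := hlnn t h
        positivity)]
      simp only [hF]
      calc 4 * t ^ ((1:ℝ)/4) * Real.log (1 + 1/t^2)
          ≤ 4 * t ^ ((1:ℝ)/4) * (Real.log 2 + 16 * t ^ (-((1:ℝ)/8))) := by
            apply mul_le_mul_of_nonneg_left hb' (by positivity)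
        _ = 4 * Real.log 2 * t ^ ((1:ℝ)/4) + 64 * (t ^ ((1:ℝ)/4) * t ^ (-((1:ℝ)/8))) := by
            ring
        _ = 4 * Real.log 2 * t ^ ((1:ℝ)/4) + 64 * t ^ ((1:ℝ)/8) := by
            rw [← Real.rpow_add h]
            norm_num
  have htop : Tendsto F atTop (𝓝 0) := by
    have hb : Tendsto (fun t : ℝ => 4 * t⁻¹) atTop (𝓝 0) := by
      have := tendsto_inv_atTop_zero.const_mul (4:ℝ)
      simpa using this
    apply squeeze_zero_norm' _ hb
    filter_upwards [Ioi_mem_atTop (1:ℝ)] with t ht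
    have ht1 : (1:ℝ) < t := ht
    have ht0 : (0:ℝ) < t := lt_trans one_pos ht1
    have hblog : Real.log (1 + 1/t^2) ≤ 1/t^2 := by
      have h0 : (0:ℝ) < 1 + 1/t^2 := by positivity
      have := Real.log_le_sub_one_of_pos h0
      linarith
    rw [Real.norm_eq_abs, abs_of_nonneg (by
      simp only [hF]
      have := hlnn t ht0
      positivity)]
    simp only [hF]
    calc 4 * t ^ ((1:ℝ)/4) * Real.log (1 + 1/t^2) ≤ 4 * t ^ ((1:ℝ)/4) * (1/t^2) := by
          apply mul_le_mul_of_nonneg_left hblog (by positivity)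
      _ = 4 * t ^ ((1:ℝ)/4) * t ^ (-(2:ℝ)) := by
          rw [Real.rpow_neg ht0.le, show ((2:ℝ)) = ((2:ℕ):ℝ) by norm_num, Real.rpow_natCast]
          ring
      _ = 4 * t ^ (-(7:ℝ)/4) := by
          rw [mul_assoc, ← Real.rpow_add ht0]
          norm_num
      _ ≤ 4 * t⁻¹ := by
          have : t ^ (-(7:ℝ)/4) ≤ t ^ (-(1:ℝ)) := by
            apply Real.rpow_le_rpow_of_exponent_le ht1.le (by norm_num)
          rw [Real.rpow_neg_one] at this
          linarith
  have hint1 : IntegrableOn (fun t : ℝ => t ^ (-(3:ℝ)/4) * Real.log (1 + 1/t^2)) (Ioi 0) := by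
    have h := intOn_rpow_log (c := 1) one_pos
    apply h.congr_fun _ measurableSet_Ioi
    intro t ht
    norm_num
  have hint2 : IntegrableOn (fun t : ℝ => 8 * (t ^ (-(3:ℝ)/4) / (1+t^2))) (Ioi 0) :=
    intOn_g2.const_mul 8
  have hint : IntegrableOn (fun t : ℝ =>
      t ^ (-(3:ℝ)/4) * Real.log (1 + 1/t^2) - 8 * (t ^ (-(3:ℝ)/4) / (1+t^2))) (Ioi 0) :=
    hint1.sub hint2
  have key := integral_Ioi_of_hasDerivAt_of_tendsto hcont0 hderiv hint htop
  have hF0 : F 0 = 0 := by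
    simp [hF, Real.zero_rpow (by norm_num : ((1:ℝ)/4) ≠ 0)]
  rw [hF0, sub_zero] at key
  have hsub := integral_sub hint1 hint2
  rw [key] at hsub
  have h8 : ∫ t in Ioi (0:ℝ), 8 * (t ^ (-(3:ℝ)/4) / (1+t^2)) = 8 * (π / (2 * Real.sin (π/8))) := by
    rw [integral_const_mul, A_val]
  rw [h8] at hsub
  have := hsub.symm
  have h0 : ∫ t in Ioi (0:ℝ), t ^ (-(3:ℝ)/4) * Real.log (1 + 1/t^2)
      = 8 * (π / (2 * Real.sin (π/8))) := by linarith
  rw [h0]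
  ring

lemma S1 {c : ℝ} (hc : 0 < c) : ∫ t in Ioi (0:ℝ), Real.log (1 + c^2/t^2) = π * c := by
  have key := integral_comp_mul_right_Ioi (fun t : ℝ => Real.log (1 + 1/t^2)) 0
    (inv_pos.mpr hc)
  rw [zero_mul, L4] at key
  have congr1 : ∫ x in Ioi (0:ℝ), Real.log (1 + 1/(x * c⁻¹)^2)
      = ∫ t in Ioi (0:ℝ), Real.log (1 + c^2/t^2) := by
    refine setIntegral_congr_fun measurableSet_Ioi fun x hx => ?_
    have hx' : (0:ℝ) < x := mem_Ioi.mp hx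
    congr 1
    rw [mul_pow]
    field_simp
  rw [congr1] at key
  rw [key, smul_eq_mul, inv_inv]
  ring

lemma S2 {c : ℝ} (hc : 0 < c) :
    ∫ t in Ioi (0:ℝ), t ^ (-(3:ℝ)/4) * Real.log (1 + c^2/t^2)
      = c ^ ((1:ℝ)/4) * (4 * π / Real.sin (π/8)) := by
  have key := integral_comp_mul_right_Ioi
    (fun t : ℝ => t ^ (-(3:ℝ)/4) * Real.log (1 + 1/t^2)) 0 (inv_pos.mpr hc)
  rw [zero_mul, L3] at key
  have congr1 : ∫ x in Ioi (0:ℝ), (x * c⁻¹) ^ (-(3:ℝ)/4) * Real.log (1 + 1/(x * c⁻¹)^2)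
      = ∫ t in Ioi (0:ℝ), c ^ ((3:ℝ)/4) * (t ^ (-(3:ℝ)/4) * Real.log (1 + c^2/t^2)) := by
    refine setIntegral_congr_fun measurableSet_Ioi fun x hx => ?_
    have hx' : (0:ℝ) < x := mem_Ioi.mp hx
    have h1 : (x * c⁻¹) ^ (-(3:ℝ)/4) = x ^ (-(3:ℝ)/4) * c ^ ((3:ℝ)/4) := by
      rw [Real.mul_rpow hx'.le (by positivity), ← Real.rpow_neg_one c,
        ← Real.rpow_mul hc.le]
      norm_num
    have h2 : (1:ℝ) + 1/(x * c⁻¹)^2 = 1 + c^2/x^2 := by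
      rw [mul_pow]
      field_simp
    rw [h1, h2]
    ring
  rw [congr1, integral_const_mul] at key
  rw [smul_eq_mul, inv_inv] at key
  have hne : c ^ ((3:ℝ)/4) ≠ 0 := by positivity
  have hcc : c ^ ((1:ℝ)/4) * c ^ ((3:ℝ)/4) = c := by
    rw [← Real.rpow_add hc, show (1:ℝ)/4 + 3/4 = 1 by norm_num, Real.rpow_one]
  apply mul_left_cancel₀ hne
  rw [key]
  rw [show c ^ ((3:ℝ)/4) * (c ^ ((1:ℝ)/4) * (4 * π / Real.sin (π/8)))
    = (c ^ ((1:ℝ)/4) * c ^ ((3:ℝ)/4)) * (4 * π / Real.sin (π/8)) by ring, hcc]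

lemma intOn_fs {c aa bb : ℝ} (hc : 0 < c) :
    IntegrableOn (fun t : ℝ => Real.log (1 + c^2/t^2) * (aa - bb * t ^ (-(3:ℝ)/4))) (Ioi 0) := by
  apply IntegrableOn.congr_fun
    (((intOn_log hc).const_mul aa).sub ((intOn_rpow_log hc).const_mul bb))
    _ measurableSet_Ioi
  intro t ht
  simp only [Pi.sub_apply]
  ring

lemma val_fs {c aa bb : ℝ} (hc : 0 < c) :
    ∫ t in Ioi (0:ℝ), Real.log (1 + c^2/t^2) * (aa - bb * t ^ (-(3:ℝ)/4))
      = aa * (π * c) - bb * (c ^ ((1:ℝ)/4) * (4 * π / Real.sin (π/8))) := by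
  have h1 : ∫ t in Ioi (0:ℝ), Real.log (1 + c^2/t^2) * (aa - bb * t ^ (-(3:ℝ)/4))
      = ∫ t in Ioi (0:ℝ), (aa * Real.log (1 + c^2/t^2)
          - bb * (t ^ (-(3:ℝ)/4) * Real.log (1 + c^2/t^2))) := by
    refine setIntegral_congr_fun measurableSet_Ioi fun t ht => ?_
    ring
  rw [h1, integral_sub ((intOn_log hc).const_mul aa) ((intOn_rpow_log hc).const_mul bb),
    integral_const_mul, integral_const_mul, S1 hc, S2 hc]

lemma G_sub {a b B y : ℝ} (ha : 0 < a) (hB : 0 < B) (hab : a * B ^ ((3:ℝ)/4) = b) :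
    a * B * (∫ u in (0:ℝ)..1, Real.log (1 + (y/B)^2/u^2) * (1 - u ^ (-(3:ℝ)/4)/4))
      = ∫ t in Ioc (0:ℝ) B, Real.log (1 + y^2/t^2) * (a - b/4 * t ^ (-(3:ℝ)/4)) := by
  set h : ℝ → ℝ := fun u => Real.log (1 + (y/B)^2/u^2) * (1 - u ^ (-(3:ℝ)/4)/4) with hh
  have key := intervalIntegral.integral_comp_mul_right (a := (0:ℝ)) (b := B) h
    (inv_ne_zero hB.ne')
  rw [zero_mul, mul_inv_cancel₀ hB.ne', inv_inv] at key
  have hcongr : ∫ t in (0:ℝ)..B, a * h (t * B⁻¹)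
      = ∫ t in (0:ℝ)..B, Real.log (1 + y^2/t^2) * (a - b/4 * t ^ (-(3:ℝ)/4)) := by
    refine intervalIntegral.integral_congr fun t ht => ?_
    rw [uIcc_of_le hB.le] at ht
    rcases eq_or_lt_of_le ht.1 with h0 | h0
    · simp only [hh, ← h0]
      norm_num
    · have hBne : B ≠ 0 := hB.ne'
      have h1 : (1:ℝ) + (y/B)^2/(t * B⁻¹)^2 = 1 + y^2/t^2 := by
        rw [mul_pow, div_pow]
        field_simp
      have h2 : (t * B⁻¹) ^ (-(3:ℝ)/4) = t ^ (-(3:ℝ)/4) * B ^ ((3:ℝ)/4) := by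
        rw [Real.mul_rpow h0.le (by positivity), ← Real.rpow_neg_one B,
          ← Real.rpow_mul hB.le]
        norm_num
      simp only [hh, h1, h2]
      rw [← hab]
      ring
  calc a * B * ∫ u in (0:ℝ)..1, h u = a * (B • ∫ u in (0:ℝ)..1, h u) := by
        rw [smul_eq_mul]; ring
    _ = a * ∫ t in (0:ℝ)..B, h (t * B⁻¹) := by rw [← key]
    _ = ∫ t in (0:ℝ)..B, a * h (t * B⁻¹) := by rw [← intervalIntegral.integral_const_mul]
    _ = ∫ t in (0:ℝ)..B, Real.log (1 + y^2/t^2) * (a - b/4 * t ^ (-(3:ℝ)/4)) := hcongr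
    _ = ∫ t in Ioc (0:ℝ) B, Real.log (1 + y^2/t^2) * (a - b/4 * t ^ (-(3:ℝ)/4)) :=
        intervalIntegral.integral_of_le hB.le

/-- lower bound for `Ũ(iy)`:
`Ũ(iy) ≥ π a |y| − π b csc(π/8) |y|^{1/4} − a B G(y/B) − log(1 + y²/B²)`,
where `G(y) = ∫₀¹ log(1 + y²/t²)(1 − (1/4)t^{−3/4}) dt`. -/
theorem stmt_6
    (a b : ℝ) (ha : 0 < a) (hb : 0 < b)
    (B : ℝ) (hB : B = (b / a) ^ ((4:ℝ)/3))
    (μ : ℕ → ℝ)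
    (hμ : ∀ k : ℕ, 1 ≤ k → B ≤ μ k ∧ a * μ k - b * μ k ^ ((1:ℝ)/4) = (k : ℝ))
    (Ut : ℂ → ℝ)
    (hUt : ∀ z : ℂ, Ut z
      = ∑' k : ℕ, Real.log ‖(1 - z^2 / ((μ (k+1) : ℝ) : ℂ)^2)‖)
    (G : ℝ → ℝ)
    (hG : ∀ y : ℝ, G y
      = ∫ t in (0:ℝ)..1, Real.log (1 + y^2 / t^2) * (1 - t ^ (-(3:ℝ)/4) / 4)) :
    ∀ y : ℝ, y ≠ 0 →
      Ut (Complex.I * (y : ℂ))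
        ≥ π * a * |y| - π * b * (Real.sin (π/8))⁻¹ * |y| ^ ((1:ℝ)/4)
          - a * B * G (y / B) - Real.log (1 + y^2 / B^2) := by
  intro y hy
  -- basic setup
  set c := |y| with hcdef
  have hc : 0 < c := abs_pos.mpr hy
  have hyc : y^2 = c^2 := (sq_abs y).symm
  have hB0 : 0 < B := by rw [hB]; positivity
  have hB34 : B ^ ((3:ℝ)/4) = b / a := by
    rw [hB, ← Real.rpow_mul (by positivity)]
    norm_num
  have hab : a * B ^ ((3:ℝ)/4) = b := by
    rw [hB34]; field_simp
  have hsB : a * B - b * B ^ ((1:ℝ)/4) = 0 := by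
    have h1 : B = B ^ ((3:ℝ)/4) * B ^ ((1:ℝ)/4) := by
      rw [← Real.rpow_add hB0, show (3:ℝ)/4 + 1/4 = 1 by norm_num, Real.rpow_one]
    calc a * B - b * B ^ ((1:ℝ)/4)
        = (a * B ^ ((3:ℝ)/4)) * B ^ ((1:ℝ)/4) - b * B ^ ((1:ℝ)/4) := by
          nth_rewrite 1 [h1]; ring
      _ = 0 := by rw [hab]; ring
  -- the integrand and its pieces
  set f : ℝ → ℝ := fun t => Real.log (1 + c^2/t^2) with hf
  set sd : ℝ → ℝ := fun t => a - b/4 * t ^ (-(3:ℝ)/4) with hsd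
  set s : ℝ → ℝ := fun t => a * t - b * t ^ ((1:ℝ)/4) with hs
  set fs : ℝ → ℝ := fun t => f t * sd t with hfs
  set m : ℕ → ℝ := fun n => μ (n+1) with hm
  have hmB : ∀ n, B ≤ m n := fun n => (hμ (n+1) (by omega)).1
  have hmeq : ∀ n, s (m n) = (n+1 : ℝ) := by
    intro n
    have := (hμ (n+1) (by omega)).2
    simp only [hs, hm]
    rw [this]
    push_cast; ring
  have hm0 : ∀ n, 0 < m n := fun n => lt_of_lt_of_le hB0 (hmB n)
  -- derivative facts
  have hsderiv : ∀ t : ℝ, 0 < t → HasDerivAt s (sd t) t := by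
    intro t ht
    have h1 : HasDerivAt (fun t : ℝ => a * t) a t := by
      simpa using HasDerivAt.const_mul a (hasDerivAt_id t)
    have h2 : HasDerivAt (fun t : ℝ => b * t ^ ((1:ℝ)/4)) (b/4 * t ^ (-(3:ℝ)/4)) t := by
      have := (Real.hasDerivAt_rpow_const (x := t) (p := (1:ℝ)/4) (Or.inl ht.ne')).const_mul b
      refine this.congr_deriv ?_
      rw [show (1:ℝ)/4 - 1 = -(3:ℝ)/4 by norm_num]
      ring
    exact h1.sub h2
  have hsd_cont : ContinuousOn sd (Ioi 0) := by
    exact continuousOn_const.sub (continuousOn_const.mul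
      (continuousOn_id.rpow_const (fun t ht => Or.inl (ne_of_gt (mem_Ioi.mp ht)))))
  have hfs_cont : ContinuousOn fs (Ioi 0) := (cont_log c).mul hsd_cont
  have hsd_nonneg : ∀ t : ℝ, B ≤ t → 0 ≤ sd t := by
    intro t ht
    have ht0 : 0 < t := lt_of_lt_of_le hB0 ht
    have h1 : B ^ ((3:ℝ)/4) ≤ t ^ ((3:ℝ)/4) := Real.rpow_le_rpow hB0.le ht (by norm_num)
    have h2 : t ^ (-(3:ℝ)/4) ≤ (b/a)⁻¹ := by
      rw [show (-(3:ℝ)/4) = -((3:ℝ)/4) by norm_num, Real.rpow_neg ht0.le, ← hB34]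
      exact inv_anti₀ (by positivity) h1
    have hba : (0:ℝ) < b/a := by positivity
    have h3 : b/4 * t ^ (-(3:ℝ)/4) ≤ b/4 * (b/a)⁻¹ := by
      apply mul_le_mul_of_nonneg_left h2 (by positivity)
    have h4 : b/4 * (b/a)⁻¹ = a/4 := by field_simp
    simp only [hsd]
    nlinarith
  -- integral of sd over an interval
  have hsint : ∀ u v : ℝ, 0 < u → u ≤ v → ∫ t in u..v, sd t = s v - s u := by
    intro u v hu huv
    apply intervalIntegral.integral_eq_sub_of_hasDerivAt
    · intro t ht
      rw [uIcc_of_le huv] at ht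
      exact hsderiv t (lt_of_lt_of_le hu ht.1)
    · apply ContinuousOn.intervalIntegrable
      apply hsd_cont.mono
      rw [uIcc_of_le huv]
      intro t ht
      exact lt_of_lt_of_le hu ht.1
  -- monotonicity of s on [B, ∞)
  have hsmono : ∀ u v : ℝ, B ≤ u → u ≤ v → s u ≤ s v := by
    intro u v hu huv
    have h0u : 0 < u := lt_of_lt_of_le hB0 hu
    have := hsint u v h0u huv
    have hpos : 0 ≤ ∫ t in u..v, sd t := by
      apply intervalIntegral.integral_nonneg huv
      intro t ht
      exact hsd_nonneg t (le_trans hu ht.1)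
    linarith
  have hmlt : ∀ n, m n < m (n+1) := by
    intro n
    by_contra h
    push_neg at h
    have := hsmono (m (n+1)) (m n) (hmB _) h
    rw [hmeq, hmeq] at this
    push_cast at this
    linarith
  have hmmono : Monotone m := monotone_nat_of_le_succ (fun n => (hmlt n).le)
  -- f is antitone on (0, ∞), nonneg
  have hf_anti : ∀ u t : ℝ, 0 < u → u ≤ t → f t ≤ f u := by
    intro u t hu hut
    have ht : 0 < t := lt_of_lt_of_le hu hut
    apply Real.log_le_log (by positivity)
    have : c^2/t^2 ≤ c^2/u^2 := by
      apply div_le_div_of_nonneg_left (by positivity) (by positivity)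
      nlinarith
    linarith
  have hf_nonneg : ∀ t : ℝ, 0 < t → 0 ≤ f t := by
    intro t ht
    apply Real.log_nonneg
    have : (0:ℝ) ≤ c^2/t^2 := by positivity
    linarith
  -- key step bound: for B ≤ u ≤ v, ∫_{u..v} fs ≤ f u * (s v - s u)
  have hstep : ∀ u v : ℝ, B ≤ u → u ≤ v → ∫ t in u..v, fs t ≤ f u * (s v - s u) := by
    intro u v hu huv
    have h0u : 0 < u := lt_of_lt_of_le hB0 hu
    have hsub : Icc u v ⊆ Ioi 0 := fun t ht => lt_of_lt_of_le h0u ht.1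
    have hint1 : IntervalIntegrable fs volume u v := by
      apply ContinuousOn.intervalIntegrable
      apply hfs_cont.mono
      rwa [uIcc_of_le huv]
    have hint2 : IntervalIntegrable (fun t => f u * sd t) volume u v := by
      apply ContinuousOn.intervalIntegrable
      apply (hsd_cont.const_smul (f u)).mono
      rwa [uIcc_of_le huv]
    calc ∫ t in u..v, fs t ≤ ∫ t in u..v, f u * sd t := by
          apply intervalIntegral.integral_mono_on huv hint1 hint2
          intro t ht
          have htB : B ≤ t := le_trans hu ht.1
          have ht0 : 0 < t := lt_of_lt_of_le h0u ht.1
          simp only [hfs]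
          exact mul_le_mul_of_nonneg_right (hf_anti u t h0u ht.1) (hsd_nonneg t htB)
      _ = f u * (s v - s u) := by
          rw [intervalIntegral.integral_const_mul, hsint u v h0u huv]
  -- partial sums dominate partial integrals
  have hsum : ∀ N : ℕ, ∫ t in (m 0)..(m N), fs t ≤ ∑ k ∈ Finset.range N, f (m k) := by
    intro N
    induction N with
    | zero => simp
    | succ N ih =>
      have hadj : ∫ t in (m 0)..(m (N+1)), fs t
          = (∫ t in (m 0)..(m N), fs t) + ∫ t in (m N)..(m (N+1)), fs t := by
        rw [intervalIntegral.integral_add_adjacent_intervals] <;>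
        · apply ContinuousOn.intervalIntegrable
          apply hfs_cont.mono
          intro t ht
          rw [uIcc_of_le (hmmono (by omega))] at ht
          exact lt_of_lt_of_le (hm0 _) ht.1
      have hstepN := hstep (m N) (m (N+1)) (hmB N) (hmlt N).le
      rw [hmeq, hmeq] at hstepN
      push_cast at hstepN
      have : f (m N) * ((N+1+1 : ℝ) - (N+1 : ℝ)) = f (m N) := by ring
      rw [this] at hstepN
      rw [hadj, Finset.sum_range_succ]
      linarith
  -- summability
  have hterm_le : ∀ k : ℕ, f (m k) ≤ c^2 * a^2 / ((k:ℝ)+1)^2 := by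
    intro k
    have hk1 : ((k:ℝ)+1) ≤ a * m k := by
      have heq := hmeq k
      simp only [hs] at heq
      have : 0 ≤ b * (m k) ^ ((1:ℝ)/4) :=
        mul_nonneg hb.le (Real.rpow_nonneg (hm0 k).le _)
      nlinarith [this]
    have hm0k := hm0 k
    have h1 : f (m k) ≤ c^2/(m k)^2 := by
      have hnn : (0:ℝ) ≤ c^2/(m k)^2 := div_nonneg (sq_nonneg c) (sq_nonneg _)
      have h0 : (0:ℝ) < 1 + c^2/(m k)^2 := by linarith
      have := Real.log_le_sub_one_of_pos h0
      simp only [hf]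
      linarith
    have h2 : c^2/(m k)^2 ≤ c^2 * a^2 / ((k:ℝ)+1)^2 := by
      have hk0 : (0:ℝ) < (k:ℝ)+1 := by positivity
      rw [div_le_div_iff₀ (by positivity) (by positivity)]
      have h4 : ((k:ℝ)+1)^2 ≤ (a * m k)^2 := by nlinarith [hk1, hk0]
      calc c^2 * ((k:ℝ)+1)^2 ≤ c^2 * (a * m k)^2 :=
            mul_le_mul_of_nonneg_left h4 (sq_nonneg c)
        _ = c^2 * a^2 * (m k)^2 := by ring
    linarith
  have hsummable : Summable (fun k : ℕ => f (m k)) := by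
    apply Summable.of_nonneg_of_le (fun k => hf_nonneg _ (hm0 k)) hterm_le
    have h1 : Summable (fun n : ℕ => 1/((n:ℝ)+1)^2) := by
      have := (summable_nat_add_iff 1).mpr
        (Real.summable_one_div_nat_pow.mpr (by norm_num : 1 < 2))
      apply this.congr
      intro n
      push_cast
      ring
    have := h1.mul_left (c^2 * a^2)
    apply this.congr
    intro n
    field_simp
  -- integrability on tails
  have hIfs : IntegrableOn fs (Ioi 0) := by
    have := intOn_fs (aa := a) (bb := b/4) hc
    exact this.congr_fun (fun t ht => rfl) measurableSet_Ioi
  have hIm0 : IntegrableOn fs (Ioi (m 0)) :=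
    hIfs.mono_set (Ioi_subset_Ioi (hm0 0).le)
  -- limit of interval integrals
  have hmlb : ∀ n : ℕ, ((n:ℝ)+1)/a ≤ m n := by
    intro n
    have heq := hmeq n
    simp only [hs] at heq
    have h5 : 0 ≤ b * (m n) ^ ((1:ℝ)/4) :=
      mul_nonneg hb.le (Real.rpow_nonneg (hm0 n).le _)
    rw [div_le_iff₀ ha]
    linarith
  have hmtop : Tendsto m atTop atTop := by
    apply tendsto_atTop_mono hmlb
    apply Tendsto.atTop_div_const ha
    exact tendsto_atTop_add_const_right _ 1 tendsto_natCast_atTop_atTop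
  have hlim : Tendsto (fun N => ∫ t in (m 0)..(m N), fs t) atTop
      (𝓝 (∫ t in Ioi (m 0), fs t)) :=
    intervalIntegral_tendsto_integral_Ioi (m 0) hIm0 hmtop
  -- tsum ≥ ∫_{Ioi (m 0)} fs
  have htsum_ge : ∫ t in Ioi (m 0), fs t ≤ ∑' k, f (m k) := by
    apply le_of_tendsto hlim
    filter_upwards with N
    exact le_trans (hsum N) (Summable.sum_le_tsum (Finset.range N)
      (fun k _ => hf_nonneg _ (hm0 k)) hsummable)
  -- split Ioi B
  have hsplitB : ∫ t in Ioi B, fs t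
      = (∫ t in Ioc B (m 0), fs t) + ∫ t in Ioi (m 0), fs t := by
    rw [← setIntegral_union (Ioc_disjoint_Ioi le_rfl) measurableSet_Ioi
      (hIfs.mono_set (fun t ht => lt_of_lt_of_le hB0 ht.1.le))
      hIm0, Ioc_union_Ioi_eq_Ioi (hmB 0)]
  have hIocB : ∫ t in Ioc B (m 0), fs t ≤ f B := by
    have h := hstep B (m 0) le_rfl (hmB 0)
    rw [hmeq] at h
    have hsB' : s B = 0 := by simp only [hs]; linarith [hsB]
    rw [hsB'] at h
    norm_num at h
    rw [← intervalIntegral.integral_of_le (hmB 0)]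
    exact h
  -- split Ioi 0
  have hsplit0 : ∫ t in Ioi (0:ℝ), fs t
      = (∫ t in Ioc 0 B, fs t) + ∫ t in Ioi B, fs t := by
    rw [← setIntegral_union (Ioc_disjoint_Ioi le_rfl) measurableSet_Ioi
      (hIfs.mono_set (fun t ht => ht.1))
      (hIfs.mono_set (Ioi_subset_Ioi hB0.le)), Ioc_union_Ioi_eq_Ioi hB0.le]
  -- value of full integral
  have hval : ∫ t in Ioi (0:ℝ), fs t
      = π * a * c - π * b * (Real.sin (π/8))⁻¹ * c ^ ((1:ℝ)/4) := by
    have := val_fs (aa := a) (bb := b/4) hc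
    simp only [hfs, hf, hsd]
    rw [this]
    ring
  -- value of Ioc 0 B integral
  have hG_val : ∫ t in Ioc (0:ℝ) B, fs t = a * B * G (y/B) := by
    rw [hG (y/B)]
    rw [G_sub ha hB0 hab]
    refine (setIntegral_congr_fun measurableSet_Ioc fun t ht => ?_).symm
    simp only [hfs, hf, hsd, hyc]
  -- identify Ut with the tsum
  have hUt_eq : Ut (Complex.I * (y:ℂ)) = ∑' k, f (m k) := by
    rw [hUt]
    apply tsum_congr
    intro k
    congr 1
    have hmk := hm0 k
    have h1 : (Complex.I * (y:ℂ))^2 = -((y^2 : ℝ) : ℂ) := by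
      rw [mul_pow, Complex.I_sq]
      push_cast
      ring
    have h2 : ((μ (k+1) : ℝ) : ℂ)^2 = (((μ (k+1))^2 : ℝ) : ℂ) := by push_cast; ring
    rw [h1, h2]
    have hm2 : ((μ (k+1))^2 : ℝ) ≠ 0 := by
      have : 0 < μ (k+1) := hmk
      positivity
    have h3 : 1 - -((y^2 : ℝ) : ℂ) / (((μ (k+1))^2 : ℝ) : ℂ)
        = ((1 + y^2/(μ (k+1))^2 : ℝ) : ℂ) := by
      push_cast
      ring
    rw [h3, Complex.norm_real, Real.norm_eq_abs, abs_of_nonneg (by positivity)]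
    simp only [hf, hm, hyc]
  -- final assembly
  rw [hUt_eq, ge_iff_le]
  have hfB : f B = Real.log (1 + y^2/B^2) := by simp only [hf, hyc]
  calc π * a * |y| - π * b * (Real.sin (π/8))⁻¹ * |y| ^ ((1:ℝ)/4)
        - a * B * G (y / B) - Real.log (1 + y^2 / B^2)
      = (∫ t in Ioi (0:ℝ), fs t) - (∫ t in Ioc 0 B, fs t) - f B := by
        rw [hval, hG_val, hfB, ← hcdef]
    _ = (∫ t in Ioi B, fs t) - f B := by rw [hsplit0]; ring
    _ ≤ ∫ t in Ioi (m 0), fs t := by rw [hsplitB]; linarith [hIocB]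
    _ ≤ ∑' k, f (m k) := htsum_ge
end

section
/- The infinite product F(z) := ∏_{k≥1} (1 − z²/μ_k²) converges locally uniformly on ℂ and defines an entire function of exponential type π a; that is: F is holomorphic on all of ℂ, for every δ > 0 there exists C > 0 such that |F(z)| ≤ C exp((π a + δ)|z|) for all z ∈ ℂ, and limsup_{y→+∞} log|F(iy)| / y = π a. -/
open Real MeasureTheory Filter
open Finset Topology

lemma helperOneLeProd (s : Finset ℕ) (x : ℕ → ℝ) (hx : ∀ k, 0 ≤ x k) :
    (1:ℝ) ≤ ∏ k ∈ s, (1 + x k) := by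
  calc (1:ℝ) = ∏ _k ∈ s, (1:ℝ) := by simp
    _ ≤ ∏ k ∈ s, (1 + x k) :=
      Finset.prod_le_prod (fun k _ => zero_le_one) (fun k _ => by linarith [hx k])

lemma helperProdSubOne (s : Finset ℕ) (f : ℕ → ℂ) :
    norm (∏ k ∈ s, (1 + f k) - 1) ≤ (∏ k ∈ s, (1 + norm (f k))) - 1 := by
  induction s using Finset.cons_induction with
  | empty => simp
  | cons a s ha ih =>
    rw [Finset.prod_cons, Finset.prod_cons]
    have hQ : (1:ℝ) ≤ ∏ k ∈ s, (1 + norm (f k)) := by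
      calc (1:ℝ) = ∏ _k ∈ s, (1:ℝ) := by simp
        _ ≤ ∏ k ∈ s, (1 + norm (f k)) :=
          Finset.prod_le_prod (fun k _ => zero_le_one)
            (fun k _ => by linarith [norm_nonneg (f k)])
    have key : (1 + f a) * ∏ k ∈ s, (1 + f k) - 1
        = (1 + f a) * ((∏ k ∈ s, (1 + f k)) - 1) + f a := by ring
    rw [key]
    have hfa := norm_nonneg (f a)
    calc norm ((1 + f a) * ((∏ k ∈ s, (1 + f k)) - 1) + f a)
        ≤ norm (1 + f a) * norm ((∏ k ∈ s, (1 + f k)) - 1)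
            + norm (f a) := by
          rw [← norm_mul]; exact norm_add_le _ _
      _ ≤ (1 + norm (f a)) * ((∏ k ∈ s, (1 + norm (f k))) - 1)
            + norm (f a) := by
          refine add_le_add ?_ le_rfl
          refine mul_le_mul ((norm_add_le _ _).trans (by simp)) ih
            (norm_nonneg _) (by linarith)
      _ = (1 + norm (f a)) * (∏ k ∈ s, (1 + norm (f k))) - 1 := by ring

lemma helperProdLeExp (s : Finset ℕ) (x : ℕ → ℝ) (hx : ∀ k, 0 ≤ x k) :
    ∏ k ∈ s, (1 + x k) ≤ Real.exp (∑ k ∈ s, x k) := by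
  rw [Real.exp_sum]
  exact Finset.prod_le_prod (fun k _ => by linarith [hx k])
    (fun k _ => by linarith [Real.add_one_le_exp (x k)])

lemma helperEuler (c : ℝ) (hc : 0 < c) :
    Tendsto (fun n => ∏ j ∈ Finset.range n, (1 + c^2/((j:ℝ)+1)^2)) atTop
      (𝓝 (Real.sinh (π*c)/(π*c))) := by
  have h := Complex.tendsto_euler_sin_prod (c * Complex.I)
  have hpc : (0:ℝ) < π*c := by positivity
  have hne : ((π*c : ℝ) : ℂ) * Complex.I ≠ 0 := by
    exact mul_ne_zero (Complex.ofReal_ne_zero.mpr hpc.ne') Complex.I_ne_zero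
  have hfun : ∀ n : ℕ, (↑π * (↑c * Complex.I) *
        ∏ j ∈ Finset.range n, ((1:ℂ) - (↑c * Complex.I) ^ 2 / ((j:ℂ) + 1) ^ 2))
      = ((π*c : ℝ):ℂ) * Complex.I *
        ((∏ j ∈ Finset.range n, (1 + c^2/((j:ℝ)+1)^2) : ℝ) : ℂ) := by
    intro n
    rw [Complex.ofReal_prod]
    rw [show ((π:ℂ) * (↑c * Complex.I)) = ((π*c : ℝ):ℂ) * Complex.I by push_cast; ring]
    congr 1
    refine Finset.prod_congr rfl fun j _ => ?_
    have h2 : ((c:ℂ)*Complex.I)^2 = -(c:ℂ)^2 := by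
      rw [mul_pow, Complex.I_sq]; ring
    rw [h2]
    push_cast
    ring
  have hsin : Complex.sin (↑π * (↑c * Complex.I))
      = ((Real.sinh (π*c) : ℝ):ℂ) * Complex.I := by
    rw [show ((π:ℂ) * (↑c * Complex.I)) = ((π*c : ℝ):ℂ) * Complex.I by push_cast; ring,
      Complex.sin_mul_I, Complex.ofReal_sinh]
  rw [hsin] at h
  have h' := h.congr hfun
  have h2 := h'.const_mul ((((π*c : ℝ):ℂ) * Complex.I)⁻¹)
  simp only [inv_mul_cancel_left₀ hne] at h2
  have hlim : ((((π*c : ℝ):ℂ)) * Complex.I)⁻¹ * (((Real.sinh (π*c) : ℝ):ℂ) * Complex.I)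
      = ((Real.sinh (π*c)/(π*c) : ℝ) : ℂ) := by
    apply mul_left_cancel₀ hne
    rw [mul_inv_cancel_left₀ hne]
    have hπ : (π:ℂ) ≠ 0 := Complex.ofReal_ne_zero.mpr Real.pi_ne_zero
    have hcc : (c:ℂ) ≠ 0 := Complex.ofReal_ne_zero.mpr hc.ne'
    push_cast
    field_simp
  rw [hlim] at h2
  have h3 := (Complex.continuous_re.tendsto _).comp h2
  simpa only [Function.comp_def, Complex.ofReal_re] using h3

lemma helperSinhUpper (x : ℝ) (hx : 0 ≤ x) : Real.sinh x ≤ x * Real.exp x := by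
  rw [Real.sinh_eq]
  have h1 : 1 - x ≤ Real.exp (-x) := by linarith [Real.add_one_le_exp (-x)]
  have h2 : Real.exp (-x) * Real.exp x = 1 := by rw [← Real.exp_add]; simp
  have h3 : 1 ≤ Real.exp x := Real.one_le_exp hx
  have h4 : Real.exp x - 1 ≤ x * Real.exp x := by nlinarith [Real.exp_pos x]
  have h5 : 0 ≤ x * (Real.exp x - 1) := mul_nonneg hx (by linarith)
  linarith

lemma helperSinhLower (x : ℝ) (hx : 2 ≤ Real.exp x) : Real.exp x / 4 ≤ Real.sinh x := by
  rw [Real.sinh_eq]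
  have hx0 : 0 ≤ x := by
    by_contra h
    push_neg at h
    have := Real.exp_lt_one_iff.mpr h
    linarith
  have : Real.exp (-x) ≤ 1 := Real.exp_le_one_iff.mpr (by linarith)
  linarith

lemma helperLogDiv (κ : ℝ) (hκ : 0 < κ) :
    Tendsto (fun y : ℝ => Real.log (1 + κ*y) / y) atTop (𝓝 0) := by
  have h1 : Tendsto (fun y : ℝ => Real.log (1 + κ*y) / (1 + κ*y)) atTop (𝓝 0) := by
    have hbase : Tendsto (fun y : ℝ => 1 + κ*y) atTop atTop :=
      tendsto_atTop_add_const_left _ 1 (tendsto_id.const_mul_atTop hκ)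
    exact (Real.isLittleO_log_id_atTop.tendsto_div_nhds_zero).comp hbase
  have h2 : Tendsto (fun y : ℝ => (1 + κ*y) / y) atTop (𝓝 κ) := by
    have hbase : Tendsto (fun y : ℝ => y⁻¹ + κ) atTop (𝓝 (0 + κ)) :=
      tendsto_inv_atTop_zero.add tendsto_const_nhds
    rw [zero_add] at hbase
    refine Tendsto.congr' ?_ hbase
    filter_upwards [eventually_gt_atTop (0:ℝ)] with y hy
    field_simp
  have h3 := h1.mul h2
  rw [zero_mul] at h3
  refine h3.congr' ?_
  filter_upwards [eventually_gt_atTop (0:ℝ)] with y hy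
  have hky : (0:ℝ) < 1 + κ*y := by positivity
  field_simp

lemma helperLogMulDiv (m : ℝ) (hm : 0 < m) :
    Tendsto (fun y : ℝ => Real.log (m*y) / y) atTop (𝓝 0) := by
  have h1 : Tendsto (fun y : ℝ => Real.log m / y) atTop (𝓝 0) :=
    tendsto_const_nhds.div_atTop tendsto_id
  have h2 : Tendsto (fun y : ℝ => Real.log y / y) atTop (𝓝 0) :=
    Real.isLittleO_log_id_atTop.tendsto_div_nhds_zero
  have h3 := h1.add h2
  rw [add_zero] at h3
  refine h3.congr' ?_
  filter_upwards [eventually_gt_atTop (0:ℝ)] with y hy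
  rw [Real.log_mul hm.ne' hy.ne', add_div]

lemma helperMuBound (a b : ℝ) (ha : 0 < a) (hb : 0 < b) (μ : ℕ → ℝ)
    (hpos : ∀ k : ℕ, 1 ≤ k → 0 < μ k)
    (hrec : ∀ k : ℕ, 1 ≤ k → a * μ k - b * μ k ^ ((1:ℝ)/4) = (k:ℝ))
    (ε : ℝ) (hε : 0 < ε) :
    ∃ K : ℕ, 1 ≤ K ∧ ∀ k : ℕ, K ≤ k → μ k ≤ (1+ε)*k/a := by
  set t0 : ℝ := (2*b/a) ^ ((4:ℝ)/3) with ht0def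
  have ht0 : 0 < t0 := Real.rpow_pos_of_pos (by positivity) _
  set C0 : ℝ := b * t0 ^ ((1:ℝ)/4) with hC0def
  have hC0 : 0 ≤ C0 := by positivity
  have step1 : ∀ t : ℝ, 0 < t → b * t ^ ((1:ℝ)/4) ≤ a/2 * t + C0 := by
    intro t ht
    rcases le_total t t0 with h | h
    · have h1 : t ^ ((1:ℝ)/4) ≤ t0 ^ ((1:ℝ)/4) :=
        Real.rpow_le_rpow ht.le h (by norm_num)
      have h2 : b * t ^ ((1:ℝ)/4) ≤ C0 := by
        rw [hC0def]; exact mul_le_mul_of_nonneg_left h1 hb.le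
      nlinarith
    · have h34 : t0 ^ ((3:ℝ)/4) = 2*b/a := by
        rw [ht0def, ← Real.rpow_mul (by positivity)]
        norm_num
      have h1 : 2*b/a ≤ t ^ ((3:ℝ)/4) := by
        rw [← h34]; exact Real.rpow_le_rpow ht0.le h (by norm_num)
      have h2 : t ^ ((3:ℝ)/4) * t ^ ((1:ℝ)/4) = t := by
        rw [← Real.rpow_add ht]; norm_num
      have h3 : 0 ≤ t ^ ((1:ℝ)/4) := Real.rpow_nonneg ht.le _
      have h4 : b * t ^ ((1:ℝ)/4) ≤ (a/2 * t ^ ((3:ℝ)/4)) * t ^ ((1:ℝ)/4) := by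
        have : b ≤ a/2 * t ^ ((3:ℝ)/4) := by
          rw [div_le_iff₀ ha] at h1; nlinarith
        exact mul_le_mul_of_nonneg_right this h3
      calc b * t ^ ((1:ℝ)/4) ≤ (a/2 * t ^ ((3:ℝ)/4)) * t ^ ((1:ℝ)/4) := h4
        _ = a/2 * t := by rw [mul_assoc, h2]
        _ ≤ a/2 * t + C0 := by linarith
  have step2 : ∀ k : ℕ, 1 ≤ k → μ k ≤ 2/a * ((k:ℝ) + C0) := by
    intro k hk
    have h1 := step1 (μ k) (hpos k hk)
    have h2 := hrec k hk
    rw [div_mul_eq_mul_div, le_div_iff₀ ha]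
    nlinarith [Real.rpow_nonneg (hpos k hk).le ((1:ℝ)/4), hb]
  set M : ℝ := 2/a * (1 + C0) with hMdef
  have hM : 0 < M := by positivity
  have step3 : ∀ k : ℕ, 1 ≤ k → μ k ≤ M * k := by
    intro k hk
    have h1 := step2 k hk
    have hk1 : (1:ℝ) ≤ (k:ℝ) := by exact_mod_cast hk
    have : 2/a * ((k:ℝ) + C0) ≤ M * k := by
      rw [hMdef]
      have h2 : (0:ℝ) < 2/a := by positivity
      nlinarith [mul_nonneg h2.le (mul_nonneg hC0 (sub_nonneg.mpr hk1))]
    linarith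
  set γ : ℝ := max 1 (b * M ^ ((1:ℝ)/4) / ε) with hγdef
  have hγ1 : (1:ℝ) ≤ γ := le_max_left _ _
  have hγ0 : (0:ℝ) < γ := lt_of_lt_of_le one_pos hγ1
  refine ⟨⌈γ ^ ((4:ℝ)/3)⌉₊ + 1, Nat.le_add_left 1 _, ?_⟩
  intro k hk
  have hk1 : 1 ≤ k := le_trans (Nat.le_add_left 1 _) hk
  have hkr1 : (1:ℝ) ≤ (k:ℝ) := by exact_mod_cast hk1
  have hkr0 : (0:ℝ) < (k:ℝ) := by linarith
  have hγk : γ ^ ((4:ℝ)/3) ≤ (k:ℝ) := by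
    have h1 : ⌈γ ^ ((4:ℝ)/3)⌉₊ ≤ k := le_trans (Nat.le_succ _) hk
    exact (Nat.ceil_le.mp h1)
  have hk34 : γ ≤ (k:ℝ) ^ ((3:ℝ)/4) := by
    have h1 : (γ ^ ((4:ℝ)/3)) ^ ((3:ℝ)/4) ≤ (k:ℝ) ^ ((3:ℝ)/4) :=
      Real.rpow_le_rpow (Real.rpow_nonneg hγ0.le _) hγk (by norm_num)
    rwa [← Real.rpow_mul hγ0.le, show ((4:ℝ)/3) * ((3:ℝ)/4) = 1 by norm_num,
      Real.rpow_one] at h1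
  have hmuk : μ k ≤ M * k := step3 k hk1
  have hmu14 : μ k ^ ((1:ℝ)/4) ≤ (M * k) ^ ((1:ℝ)/4) :=
    Real.rpow_le_rpow (hpos k hk1).le hmuk (by norm_num)
  have hsplit : (M * (k:ℝ)) ^ ((1:ℝ)/4) = M ^ ((1:ℝ)/4) * (k:ℝ) ^ ((1:ℝ)/4) :=
    Real.mul_rpow hM.le hkr0.le
  have hklow : b * M ^ ((1:ℝ)/4) * (k:ℝ) ^ ((1:ℝ)/4) ≤ ε * (k:ℝ) := by
    have h1 : b * M ^ ((1:ℝ)/4) ≤ ε * γ := by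
      have h0 : b * M ^ ((1:ℝ)/4) / ε ≤ γ := le_max_right _ _
      have h0' := (div_le_iff₀ hε).mp h0
      have h0'' : γ * ε = ε * γ := mul_comm _ _
      linarith
    have h2 : (0:ℝ) ≤ (k:ℝ) ^ ((1:ℝ)/4) := Real.rpow_nonneg hkr0.le _
    have h3 : (k:ℝ) ^ ((3:ℝ)/4) * (k:ℝ) ^ ((1:ℝ)/4) = (k:ℝ) := by
      rw [← Real.rpow_add hkr0]; norm_num
    calc b * M ^ ((1:ℝ)/4) * (k:ℝ) ^ ((1:ℝ)/4) ≤ (ε * γ) * (k:ℝ) ^ ((1:ℝ)/4) :=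
          mul_le_mul_of_nonneg_right h1 h2
      _ ≤ (ε * (k:ℝ) ^ ((3:ℝ)/4)) * (k:ℝ) ^ ((1:ℝ)/4) := by
          have : ε * γ ≤ ε * (k:ℝ) ^ ((3:ℝ)/4) := mul_le_mul_of_nonneg_left hk34 hε.le
          exact mul_le_mul_of_nonneg_right this h2
      _ = ε * (k:ℝ) := by rw [mul_assoc, h3]
  have hrk := hrec k hk1
  rw [le_div_iff₀ ha]
  have hfinal : b * μ k ^ ((1:ℝ)/4) ≤ ε * (k:ℝ) := by
    calc b * μ k ^ ((1:ℝ)/4) ≤ b * (M * k) ^ ((1:ℝ)/4) :=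
          mul_le_mul_of_nonneg_left hmu14 hb.le
      _ = b * M ^ ((1:ℝ)/4) * (k:ℝ) ^ ((1:ℝ)/4) := by rw [hsplit, mul_assoc]
      _ ≤ ε * (k:ℝ) := hklow
  nlinarith

lemma helperAlgebra (κ y L1 L2 L3 : ℝ) (hy : y ≠ 0) :
    (π*(κ*y) - (L1 + L2 + L3))/y = π*κ - (L1/y + L2/y + L3/y) := by
  field_simp

lemma helperLowerLog (μ : ℕ → ℝ) (hμpos : ∀ k : ℕ, 0 < μ (k+1))
    (c y : ℝ) (hc : 0 < c) (K : ℕ)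
    (hcomp2 : ∀ k:ℕ, K ≤ k → 1 + c^2/((k:ℝ)+1)^2 ≤ 1 + y^2/(μ (k+1))^2)
    (Fv : ℝ) (hF1 : 1 ≤ Fv)
    (hFge : ∀ n:ℕ, ∏ k ∈ Finset.range n, (1 + y^2/(μ (k+1))^2) ≤ Fv)
    (hexp2 : 2 ≤ Real.exp (π*c)) :
    π*c - (Real.log 4 + Real.log (π*c) + 2*(K:ℝ)*Real.log (1+c)) ≤ Real.log Fv := by
  have hπc : (0:ℝ) < π*c := by positivity
  set Dv : ℝ := ∏ j ∈ Finset.range K, (1 + c^2/((j:ℝ)+1)^2) with hDvdef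
  have hDv1 : (1:ℝ) ≤ Dv := helperOneLeProd _ _ (fun j => by positivity)
  have hDv0 : (0:ℝ) < Dv := lt_of_lt_of_le one_pos hDv1
  have hQlow : ∀ n:ℕ, K ≤ n →
      (∏ j ∈ Finset.range n, (1 + c^2/((j:ℝ)+1)^2))/Dv
      ≤ ∏ k ∈ Finset.range n, (1 + y^2/(μ (k+1))^2) := by
    intro n hn
    have hsplit : ∏ j ∈ Finset.range n, (1 + c^2/((j:ℝ)+1)^2)
        = Dv * ∏ j ∈ Finset.Ico K n, (1 + c^2/((j:ℝ)+1)^2) :=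
      (Finset.prod_range_mul_prod_Ico _ hn).symm
    rw [hsplit, mul_div_cancel_left₀ _ hDv0.ne']
    have h1 : ∏ j ∈ Finset.Ico K n, (1 + c^2/((j:ℝ)+1)^2)
        ≤ ∏ j ∈ Finset.Ico K n, (1 + y^2/(μ (j+1))^2) :=
      Finset.prod_le_prod (fun j _ => by positivity)
        (fun j hj => hcomp2 j (Finset.mem_Ico.mp hj).1)
    refine h1.trans ?_
    rw [← Finset.prod_range_mul_prod_Ico (fun k => 1 + y^2/(μ (k+1))^2) hn]
    refine le_mul_of_one_le_left ?_ (helperOneLeProd _ _ (fun k => by positivity))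
    exact Finset.prod_nonneg (fun j _ => by positivity)
  have hFlow : Real.sinh (π*c)/(π*c)/Dv ≤ Fv := by
    refine le_of_tendsto ((helperEuler c hc).div_const Dv) ?_
    filter_upwards [eventually_ge_atTop K] with n hn
    exact (hQlow n hn).trans (hFge n)
  have hFpos : (0:ℝ) < Fv := lt_of_lt_of_le one_pos hF1
  have hsinhpos : (0:ℝ) < Real.sinh (π*c) :=
    lt_of_lt_of_le (by positivity) (helperSinhLower (π*c) hexp2)
  have hlog1 : Real.log (Real.sinh (π*c)) - Real.log (π*c) - Real.log Dv
      ≤ Real.log Fv := by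
    have h1 := Real.log_le_log (by positivity) hFlow
    rwa [Real.log_div (by positivity) hDv0.ne',
      Real.log_div hsinhpos.ne' hπc.ne'] at h1
  have hlog2 : π*c - Real.log 4 ≤ Real.log (Real.sinh (π*c)) := by
    have h1 := helperSinhLower (π*c) hexp2
    have h2 := Real.log_le_log (by positivity) h1
    rwa [Real.log_div (Real.exp_ne_zero _) (by norm_num), Real.log_exp] at h2
  have hlogDv : Real.log Dv ≤ 2*(K:ℝ)*Real.log (1+c) := by
    have h1 : Dv ≤ (1+c^2)^K := by
      rw [hDvdef]
      calc ∏ j ∈ Finset.range K, (1 + c^2/((j:ℝ)+1)^2)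
          ≤ ∏ _j ∈ Finset.range K, (1 + c^2) := by
            refine Finset.prod_le_prod (fun j _ => by positivity) (fun j _ => ?_)
            have h0 : (0:ℝ) ≤ (j:ℝ) := Nat.cast_nonneg j
            have h2 : c^2/((j:ℝ)+1)^2 ≤ c^2 :=
              div_le_self (sq_nonneg c) (one_le_pow₀ (by linarith))
            linarith
        _ = (1+c^2)^K := by rw [Finset.prod_const, Finset.card_range]
    have h2 := Real.log_le_log hDv0 h1
    rw [Real.log_pow] at h2
    have h3 : Real.log (1+c^2) ≤ 2*Real.log (1+c) := by
      have h4 : 1+c^2 ≤ (1+c)^2 := by nlinarith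
      have h5 := Real.log_le_log (by positivity) h4
      rw [Real.log_pow] at h5
      push_cast at h5
      linarith
    calc Real.log Dv ≤ (K:ℝ)*Real.log (1+c^2) := h2
      _ ≤ (K:ℝ)*(2*Real.log (1+c)) :=
        mul_le_mul_of_nonneg_left h3 (Nat.cast_nonneg K)
      _ = 2*(K:ℝ)*Real.log (1+c) := by ring
  linarith

/-- the infinite product `∏_{k≥1} (1 − z²/μ_k²)` converges locally uniformly
to an entire function `F` of exponential type `π a`, with
`limsup_{y→∞} log|F(iy)|/y = π a`. -/
theorem stmt_7
    (a b : ℝ) (ha : 0 < a) (hb : 0 < b)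
    (B : ℝ) (hB : B = (b / a) ^ ((4:ℝ)/3))
    (μ : ℕ → ℝ)
    (hμ : ∀ k : ℕ, 1 ≤ k → B ≤ μ k ∧ a * μ k - b * μ k ^ ((1:ℝ)/4) = (k : ℝ)) :
    ∃ F : ℂ → ℂ,
      TendstoLocallyUniformly
        (fun (n : ℕ) (z : ℂ) =>
          ∏ k ∈ Finset.range n, (1 - z^2 / ((μ (k+1) : ℝ) : ℂ)^2))
        F atTop ∧
      Differentiable ℂ F ∧
      (∀ δ : ℝ, 0 < δ → ∃ C : ℝ, 0 < C ∧
        ∀ z : ℂ, ‖F z‖ ≤ C * Real.exp ((π * a + δ) * ‖z‖)) ∧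
      limsup (fun y : ℝ => Real.log (‖F (Complex.I * (y : ℂ))‖) / y) atTop
        = π * a := by
  have hBpos : 0 < B := by rw [hB]; exact Real.rpow_pos_of_pos (div_pos hb ha) _
  have hμpos' : ∀ k : ℕ, 1 ≤ k → 0 < μ k := fun k hk => lt_of_lt_of_le hBpos (hμ k hk).1
  have hμrec' : ∀ k : ℕ, 1 ≤ k → a * μ k - b * μ k ^ ((1:ℝ)/4) = (k:ℝ) :=
    fun k hk => (hμ k hk).2
  have hμpos : ∀ k : ℕ, 0 < μ (k+1) := fun k => hμpos' (k+1) (Nat.le_add_left 1 k)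
  have hμlb : ∀ k : ℕ, ((k:ℝ)+1)/a ≤ μ (k+1) := by
    intro k
    have h := hμrec' (k+1) (Nat.le_add_left 1 k)
    push_cast at h
    have h2 : 0 ≤ b * μ (k+1) ^ ((1:ℝ)/4) :=
      mul_nonneg hb.le (Real.rpow_nonneg (hμpos k).le _)
    rw [div_le_iff₀ ha]
    nlinarith [mul_comm (μ (k+1)) a]
  set P : ℕ → ℂ → ℂ :=
    fun n z => ∏ k ∈ Finset.range n, (1 - z^2 / ((μ (k+1) : ℝ) : ℂ)^2) with hPdef
  have habs_eq : ∀ (z : ℂ) (k : ℕ),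
      norm (z^2/((μ (k+1):ℝ):ℂ)^2) = (norm z)^2/(μ (k+1))^2 := by
    intro z k
    rw [norm_div, norm_pow, norm_pow, Complex.norm_real, Real.norm_eq_abs, abs_of_pos (hμpos k)]
  have hfac : ∀ (z : ℂ) (k : ℕ), norm (1 - z^2 / ((μ (k+1):ℝ):ℂ)^2)
      ≤ 1 + (norm z)^2 / (μ (k+1))^2 := by
    intro z k
    rw [sub_eq_add_neg]
    refine (norm_add_le _ _).trans ?_
    rw [norm_one, norm_neg, habs_eq]
  have hcomp : ∀ (r:ℝ) (k:ℕ), 0 ≤ r → r^2/(μ (k+1))^2 ≤ (a*r)^2/((k:ℝ)+1)^2 := by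
    intro r k hr
    have hd : (0:ℝ) < ((k:ℝ)+1)/a := by positivity
    have he : (a*r)^2/((k:ℝ)+1)^2 = r^2/(((k:ℝ)+1)/a)^2 := by
      field_simp
    rw [he]
    exact div_le_div_of_nonneg_left (by positivity) (by positivity)
      (pow_le_pow_left₀ hd.le (hμlb k) 2)
  have hQle : ∀ (c:ℝ), 0 ≤ c → ∀ n : ℕ,
      ∏ j ∈ Finset.range n, (1 + c^2/((j:ℝ)+1)^2) ≤ Real.exp (π*c) := by
    intro c hc n
    rcases hc.eq_or_lt with hc0 | hc
    · have h1 : ∏ j ∈ Finset.range n, (1 + c^2/((j:ℝ)+1)^2) = 1 := by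
        rw [← hc0]; simp
      rw [h1, ← hc0, mul_zero, Real.exp_zero]
    · have hmono : Monotone (fun n : ℕ => ∏ j ∈ Finset.range n, (1 + c^2/((j:ℝ)+1)^2)) := by
        apply monotone_nat_of_le_succ
        intro n
        rw [Finset.prod_range_succ]
        have h1 : (1:ℝ) ≤ ∏ j ∈ Finset.range n, (1 + c^2/((j:ℝ)+1)^2) :=
          helperOneLeProd _ _ (fun j => by positivity)
        nlinarith [div_nonneg (sq_nonneg c) (sq_nonneg ((n:ℝ)+1))]
      have hle := hmono.ge_of_tendsto (helperEuler c hc) n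
      refine hle.trans ?_
      rw [div_le_iff₀ (by positivity : (0:ℝ) < π*c)]
      calc Real.sinh (π*c) ≤ (π*c) * Real.exp (π*c) := helperSinhUpper _ (by positivity)
        _ = Real.exp (π*c) * (π*c) := mul_comm _ _
  have habsP : ∀ (n:ℕ) (z:ℂ), norm (P n z) ≤ Real.exp (π*a*norm z) := by
    intro n z
    have h0 := norm_nonneg z
    calc norm (P n z)
        = ∏ k ∈ Finset.range n, norm (1 - z^2/((μ (k+1):ℝ):ℂ)^2) :=
          norm_prod _ _
      _ ≤ ∏ k ∈ Finset.range n, (1 + (a*norm z)^2/((k:ℝ)+1)^2) := by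
          refine Finset.prod_le_prod (fun k _ => norm_nonneg _) (fun k _ => ?_)
          refine (hfac z k).trans ?_
          linarith [hcomp (norm z) k h0]
      _ ≤ Real.exp (π*(a*norm z)) := hQle _ (by positivity) n
      _ = Real.exp (π*a*norm z) := by rw [mul_assoc]
  have hsummable : Summable (fun k:ℕ => 1/(μ (k+1))^2) := by
    have h1 : Summable (fun n:ℕ => (1:ℝ)/(n:ℝ)^2) :=
      Real.summable_one_div_nat_pow.mpr one_lt_two
    have hbase : Summable (fun k:ℕ => (1:ℝ)/((k:ℝ)+1)^2) := by
      refine ((summable_nat_add_iff 1).mpr h1).congr fun n => ?_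
      push_cast
      ring
    refine Summable.of_nonneg_of_le (fun k => by positivity) (fun k => ?_)
      (hbase.mul_left (a^2))
    have h := hcomp 1 k zero_le_one
    rw [one_pow, mul_one] at h
    calc 1/(μ (k+1))^2 ≤ a^2/((k:ℝ)+1)^2 := h
      _ = a^2 * ((1:ℝ)/((k:ℝ)+1)^2) := by ring
  have hUC : ∀ R:ℝ, 0 ≤ R → UniformCauchySeqOn P atTop (Metric.closedBall 0 R) := by
    intro R hR
    set t : ℕ → ℝ := fun k => R^2/(μ (k+1))^2 with htdef
    have ht0 : ∀ k, 0 ≤ t k := fun k => by positivity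
    have hts : Summable t := by
      refine ((hsummable.mul_left (R^2)).congr fun k => ?_)
      rw [htdef]; ring
    set S := ∑' k, t k with hSdef
    have hsum_le_S : ∀ (s : Finset ℕ), ∑ k ∈ s, t k ≤ S :=
      fun s => Summable.sum_le_tsum s (fun k _ => ht0 k) hts
    have key : ∀ N n : ℕ, N ≤ n → ∀ z ∈ Metric.closedBall (0:ℂ) R,
        norm (P n z - P N z) ≤ Real.exp S * (Real.exp (∑' k, t (k+N)) - 1) := by
      intro N n hNn z hz
      have hzR : norm z ≤ R := by
        simpa [Complex.dist_eq] using hz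
      have hzk : ∀ k:ℕ, norm (z^2/((μ (k+1):ℝ):ℂ)^2) ≤ t k := by
        intro k
        rw [habs_eq, htdef]
        have h2 : (norm z)^2 ≤ R^2 := pow_le_pow_left₀ (norm_nonneg z) hzR 2
        exact div_le_div_of_nonneg_right h2 (by positivity)
      have htail_sum : ∑ k ∈ Finset.Ico N n, t k ≤ ∑' k, t (k+N) := by
        rw [Finset.sum_Ico_eq_sum_range]
        have hshift : Summable (fun j:ℕ => t (j+N)) := (summable_nat_add_iff N).mpr hts
        have := Summable.sum_le_tsum (Finset.range (n-N)) (fun j _ => ht0 (j+N)) hshift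
        refine le_trans (le_of_eq ?_) this
        exact Finset.sum_congr rfl fun j _ => by rw [Nat.add_comm]
      have hW := helperProdSubOne (Finset.Ico N n) (fun k => -(z^2/((μ (k+1):ℝ):ℂ)^2))
      have hWeq : ∏ k ∈ Finset.Ico N n, ((1:ℂ) + -(z^2/((μ (k+1):ℝ):ℂ)^2))
          = ∏ k ∈ Finset.Ico N n, ((1:ℂ) - z^2/((μ (k+1):ℝ):ℂ)^2) :=
        Finset.prod_congr rfl fun k _ => by ring
      rw [hWeq] at hW
      have h2 : ∏ k ∈ Finset.Ico N n, (1 + norm (-(z^2/((μ (k+1):ℝ):ℂ)^2)))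
          ≤ Real.exp (∑' k, t (k+N)) := by
        calc ∏ k ∈ Finset.Ico N n, (1 + norm (-(z^2/((μ (k+1):ℝ):ℂ)^2)))
            ≤ ∏ k ∈ Finset.Ico N n, (1 + t k) := by
              refine Finset.prod_le_prod (fun k _ => by positivity) (fun k _ => ?_)
              rw [norm_neg]
              linarith [hzk k]
          _ ≤ Real.exp (∑ k ∈ Finset.Ico N n, t k) := helperProdLeExp _ _ ht0
          _ ≤ Real.exp (∑' k, t (k+N)) := Real.exp_le_exp.mpr htail_sum
      have h3 : norm (P N z) ≤ Real.exp S := by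
        calc norm (P N z)
            = ∏ k ∈ Finset.range N, norm (1 - z^2/((μ (k+1):ℝ):ℂ)^2) :=
              norm_prod _ _
          _ ≤ ∏ k ∈ Finset.range N, (1 + t k) := by
              refine Finset.prod_le_prod (fun k _ => norm_nonneg _) (fun k _ => ?_)
              refine (hfac z k).trans ?_
              have h2' : (norm z)^2 ≤ R^2 :=
                pow_le_pow_left₀ (norm_nonneg z) hzR 2
              have := div_le_div_of_nonneg_right h2' (sq_nonneg (μ (k+1))) 
              rw [htdef]
              linarith [div_le_div_of_nonneg_right h2' (sq_nonneg (μ (k+1)))]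
          _ ≤ Real.exp (∑ k ∈ Finset.range N, t k) := helperProdLeExp _ _ ht0
          _ ≤ Real.exp S := Real.exp_le_exp.mpr (hsum_le_S _)
      have hsplit : P n z = P N z * ∏ k ∈ Finset.Ico N n, (1 - z^2/((μ (k+1):ℝ):ℂ)^2) :=
        (Finset.prod_range_mul_prod_Ico _ hNn).symm
      have hfactor : P n z - P N z
          = P N z * ((∏ k ∈ Finset.Ico N n, (1 - z^2/((μ (k+1):ℝ):ℂ)^2)) - 1) := by
        rw [hsplit]; ring
      rw [hfactor, norm_mul]
      have hexp_pos : (0:ℝ) ≤ Real.exp (∑' k, t (k+N)) - 1 := by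
        have : (0:ℝ) ≤ ∑' k, t (k+N) :=
          tsum_nonneg (fun k => ht0 (k+N))
        linarith [Real.one_le_exp this]
      refine mul_le_mul h3 ?_ (norm_nonneg _) (Real.exp_nonneg _)
      refine hW.trans ?_
      linarith [h2]
    rw [Metric.uniformCauchySeqOn_iff]
    intro ε hε
    have htail : Tendsto (fun N:ℕ => Real.exp S * (Real.exp (∑' k, t (k+N)) - 1)) atTop
        (𝓝 (Real.exp S * (Real.exp 0 - 1))) :=
      Tendsto.const_mul _ (((Real.continuous_exp.tendsto 0).comp (tendsto_sum_nat_add t)).sub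
        tendsto_const_nhds)
    rw [Real.exp_zero, sub_self, mul_zero] at htail
    obtain ⟨N, hN⟩ := (htail.eventually_lt_const (half_pos hε)).exists
    refine ⟨N, fun m hm n hn z hz => ?_⟩
    have h1 := key N m hm z hz
    have h2 := key N n hn z hz
    calc dist (P m z) (P n z) ≤ dist (P m z) (P N z) + dist (P N z) (P n z) :=
          dist_triangle _ _ _
      _ = norm (P m z - P N z) + norm (P n z - P N z) := by
          rw [Complex.dist_eq, dist_comm, Complex.dist_eq]
      _ < ε := by linarith
  have hptw : ∀ z : ℂ, CauchySeq (fun n => P n z) := by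
    intro z
    have h := hUC (norm z) (norm_nonneg z)
    rw [Metric.uniformCauchySeqOn_iff] at h
    rw [Metric.cauchySeq_iff]
    intro ε hε
    obtain ⟨N, hN⟩ := h ε hε
    exact ⟨N, fun m hm n hn => hN m hm n hn z (by simp [Complex.dist_eq])⟩
  set F : ℂ → ℂ := fun z => limUnder atTop (fun n => P n z) with hFdef
  have hF : ∀ z, Tendsto (fun n => P n z) atTop (𝓝 (F z)) :=
    fun z => (hptw z).tendsto_limUnder
  have hTLU : TendstoLocallyUniformly P F atTop := by
    rw [tendstoLocallyUniformly_iff_forall_isCompact]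
    intro K hK
    obtain ⟨r, hr⟩ := hK.isBounded.subset_closedBall 0
    have hsub : K ⊆ Metric.closedBall 0 (max r 0) :=
      hr.trans (Metric.closedBall_subset_closedBall (le_max_left _ _))
    exact ((hUC (max r 0) (le_max_right _ _)).tendstoUniformlyOn_of_tendsto
      (fun x _ => hF x)).mono hsub
  have habsF : ∀ z, norm (F z) ≤ Real.exp (π*a*norm z) := by
    intro z
    have h1 := (continuous_norm.tendsto (F z)).comp (hF z)
    exact le_of_tendsto h1 (Filter.Eventually.of_forall fun n => habsP n z)
  -- products on the imaginary axis
  have hQr1 : ∀ (n:ℕ) (y:ℝ), (1:ℝ) ≤ ∏ k ∈ Finset.range n, (1 + y^2/(μ (k+1))^2) :=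
    fun n y => helperOneLeProd _ _ (fun k => by positivity)
  have hPQ : ∀ (n:ℕ) (y:ℝ), P n (Complex.I * (y:ℂ))
      = ((∏ k ∈ Finset.range n, (1 + y^2/(μ (k+1))^2) : ℝ) : ℂ) := by
    intro n y
    rw [Complex.ofReal_prod]
    refine Finset.prod_congr rfl fun k _ => ?_
    have h1 : (Complex.I * (y:ℂ))^2 = -((y:ℂ)^2) := by
      rw [mul_pow, Complex.I_sq]; ring
    rw [h1]
    push_cast
    ring
  have hQtendsto : ∀ y:ℝ, Tendsto (fun n => ∏ k ∈ Finset.range n, (1 + y^2/(μ (k+1))^2))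
      atTop (𝓝 (norm (F (Complex.I * (y:ℂ))))) := by
    intro y
    have h1 := (continuous_norm.tendsto _).comp (hF (Complex.I * (y:ℂ)))
    refine Tendsto.congr (fun n => ?_) h1
    show norm (P n (Complex.I * (y:ℂ))) = _
    rw [hPQ n y, Complex.norm_real, Real.norm_eq_abs, abs_of_pos (lt_of_lt_of_le one_pos (hQr1 n y))]
  have hQmono : ∀ y:ℝ, Monotone (fun n => ∏ k ∈ Finset.range n, (1 + y^2/(μ (k+1))^2)) := by
    intro y
    apply monotone_nat_of_le_succ
    intro n
    rw [Finset.prod_range_succ]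
    refine le_mul_of_one_le_right (le_trans zero_le_one (hQr1 n y)) ?_
    have : (0:ℝ) ≤ y^2/(μ (n+1))^2 := by positivity
    linarith
  have hFge : ∀ (y:ℝ) (n:ℕ),
      ∏ k ∈ Finset.range n, (1 + y^2/(μ (k+1))^2) ≤ norm (F (Complex.I*(y:ℂ))) :=
    fun y n => (hQmono y).ge_of_tendsto (hQtendsto y) n
  have hF1 : ∀ y:ℝ, 1 ≤ norm (F (Complex.I*(y:ℂ))) := by
    intro y
    have := hFge y 0
    simpa using this
  refine ⟨F, hTLU, ?_, ?_, ?_⟩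
  · -- differentiability
    have h1 : TendstoLocallyUniformlyOn P F atTop Set.univ :=
      tendstoLocallyUniformlyOn_univ.mpr hTLU
    have h2 : DifferentiableOn ℂ F Set.univ := by
      refine h1.differentiableOn (Filter.Eventually.of_forall fun n => ?_) isOpen_univ
      refine Differentiable.differentiableOn ?_
      refine Differentiable.fun_finsetProd fun k _ => ?_
      exact (differentiable_const (1:ℂ)).sub ((differentiable_pow 2).div_const _)
    exact differentiableOn_univ.mp h2
  · -- growth
    intro δ hδ
    refine ⟨1, one_pos, fun z => ?_⟩
    rw [one_mul]
    refine (habsF z).trans (Real.exp_le_exp.mpr ?_)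
    have h0 := norm_nonneg z
    nlinarith
  · -- limsup
    have hup : ∀ᶠ y:ℝ in atTop,
        Real.log (norm (F (Complex.I*(y:ℂ))))/y ≤ π*a := by
      filter_upwards [eventually_gt_atTop (0:ℝ)] with y hy
      have h1 : norm (F (Complex.I*(y:ℂ))) ≤ Real.exp (π*a*y) := by
        have h := habsF (Complex.I*(y:ℂ))
        rwa [norm_mul, Complex.norm_I, one_mul, Complex.norm_real, Real.norm_eq_abs, abs_of_pos hy] at h
      have h2 : (0:ℝ) < norm (F (Complex.I*(y:ℂ))) :=
        lt_of_lt_of_le one_pos (hF1 y)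
      rw [div_le_iff₀ hy]
      calc Real.log (norm (F (Complex.I*(y:ℂ)))) ≤ π*a*y :=
            (Real.log_le_iff_le_exp h2).mpr h1
        _ = π*a*y := rfl
    have hlow : ∀ ε:ℝ, 0 < ε → ∀ᶠ y:ℝ in atTop,
        π*a - ε ≤ Real.log (norm (F (Complex.I*(y:ℂ))))/y := by
      intro ε hε
      have hπa : (0:ℝ) < π*a := by positivity
      set ε₁ : ℝ := ε/(2*(π*a)+1) with hε₁def
      have hε₁ : 0 < ε₁ := by positivity
      obtain ⟨K, hK1, hKspec⟩ := helperMuBound a b ha hb μ hμpos' hμrec' ε₁ hε₁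
      set κ : ℝ := a/(1+ε₁) with hκdef
      have hκ : 0 < κ := by positivity
      have hκa : π*a - ε/2 ≤ π*κ := by
        have he : ε₁*(2*(π*a)+1) = ε := by rw [hε₁def]; field_simp
        have h2 : π*κ = π*a/(1+ε₁) := by rw [hκdef]; ring
        rw [h2, le_div_iff₀ (by positivity : (0:ℝ) < 1+ε₁)]
        nlinarith [mul_pos hε hε₁]
      have hE : Tendsto (fun y:ℝ => Real.log 4/y + Real.log (π*κ*y)/y
          + (2*(K:ℝ)*Real.log (1+κ*y))/y) atTop (𝓝 0) := by
        have h1 : Tendsto (fun y:ℝ => Real.log 4/y) atTop (𝓝 0) :=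
          tendsto_const_nhds.div_atTop tendsto_id
        have h2 : Tendsto (fun y:ℝ => Real.log (π*κ*y)/y) atTop (𝓝 0) := by
          have := helperLogMulDiv (π*κ) (by positivity)
          refine this.congr fun y => ?_
          rw [mul_assoc]
        have h3 : Tendsto (fun y:ℝ => (2*(K:ℝ)*Real.log (1+κ*y))/y) atTop (𝓝 0) := by
          have h4 := (helperLogDiv κ hκ).const_mul (2*(K:ℝ))
          rw [mul_zero] at h4
          refine h4.congr fun y => ?_
          rw [mul_div_assoc]
        have h4 := (h1.add h2).add h3
        simpa using h4
      filter_upwards [eventually_ge_atTop (1:ℝ),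
        eventually_ge_atTop (Real.log 2/(π*κ)),
        hE.eventually_lt_const (half_pos hε)] with y hy1 hy2 hEy
      have hy0 : (0:ℝ) < y := lt_of_lt_of_le one_pos hy1
      have hc : (0:ℝ) < κ*y := by positivity
      have hexp2 : 2 ≤ Real.exp (π*(κ*y)) := by
        have hd : (0:ℝ) < π*κ := by positivity
        rw [div_le_iff₀ hd] at hy2
        have h1 : Real.log 2 ≤ π*(κ*y) := by
          calc Real.log 2 ≤ y*(π*κ) := hy2
            _ = π*(κ*y) := by ring
        calc (2:ℝ) = Real.exp (Real.log 2) := (Real.exp_log two_pos).symm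
          _ ≤ Real.exp (π*(κ*y)) := Real.exp_le_exp.mpr h1
      have hcomp2 : ∀ k:ℕ, K ≤ k →
          1 + (κ*y)^2/((k:ℝ)+1)^2 ≤ 1 + y^2/(μ (k+1))^2 := by
        intro k hk
        have hμp := hμpos k
        have hkp : (0:ℝ) < (k:ℝ)+1 := by positivity
        have hub : μ (k+1) ≤ (1+ε₁)*((k:ℝ)+1)/a := by
          have h := hKspec (k+1) (le_trans hk (Nat.le_succ k))
          have hcast : ((k+1:ℕ):ℝ) = (k:ℝ)+1 := by push_cast; ring
          rwa [hcast] at h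
        have ha' : a ≠ 0 := ha.ne'
        have he' : (1+ε₁:ℝ) ≠ 0 := by positivity
        have hk' : ((k:ℝ)+1) ≠ 0 := hkp.ne'
        have h3 : (κ*y)^2/((k:ℝ)+1)^2 = y^2/((1+ε₁)*((k:ℝ)+1)/a)^2 := by
          rw [hκdef]
          field_simp
        have h2 : y^2/((1+ε₁)*((k:ℝ)+1)/a)^2 ≤ y^2/(μ (k+1))^2 :=
          div_le_div_of_nonneg_left (sq_nonneg y) (by positivity)
            (pow_le_pow_left₀ hμp.le hub 2)
        rw [h3]
        linarith
      have hlog := helperLowerLog μ hμpos (κ*y) y hc K hcomp2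
        (norm (F (Complex.I*(y:ℂ)))) (hF1 y) (fun n => hFge y n) hexp2
      have hlogc : Real.log (π*(κ*y)) = Real.log (π*κ*y) := by rw [mul_assoc]
      rw [hlogc] at hlog
      have hdiv := div_le_div_of_nonneg_right hlog hy0.le
      rw [helperAlgebra κ y _ _ _ hy0.ne'] at hdiv
      linarith
    have hbdd : IsBoundedUnder (· ≤ ·) atTop
        (fun y:ℝ => Real.log (norm (F (Complex.I*(y:ℂ))))/y) :=
      isBoundedUnder_of_eventually_le hup
    have hlb : IsBoundedUnder (· ≥ ·) atTop
        (fun y:ℝ => Real.log (norm (F (Complex.I*(y:ℂ))))/y) :=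
      isBoundedUnder_of_eventually_ge (hlow 1 one_pos)
    refine le_antisymm (limsup_le_of_le hlb.isCoboundedUnder_le hup) ?_
    refine le_of_forall_sub_le fun ε hε => ?_
    exact le_limsup_of_frequently_le ((hlow ε hε).frequently) hbdd
end

section
/- (i) Suppose M > 0 and τ ∈ (0,T) is such that X := (M(T−τ)/L)^{1/3} satisfies (1 + √3/√2 + 5^{1/4}/(1+√2)) X + 2^{1/3}(C₁ − C₂)/((1+√2)² π) ≤ (5/8) X⁴. Then for every ε > 0 and every integer k ≥ 1: (L/2)(1 + √3/√2) M^{1/3} ε^{−1/3} + 2^{−2/3} ε^{−1/3} L^{4/3} (T−τ)^{−1/3} (C₁ − C₂)/(π (1+√2)²) − (T − τ/2) λ_k + ε^{−1/4} L (1+√2)^{−1} λ_k^{1/4} ≤ −(τ/2) λ_k. (ii) Suppose M < 0 and τ ∈ (0,T) is such that X := (|M|(T−τ)/L)^{1/3} satisfies (2 + √3/√2 + 5^{1/4}/(1+√2)) X + 2^{1/3}(C₁ − C₂)/((1+√2)² π) ≤ (5/8) X⁴. Then for every ε > 0 and every integer k ≥ 1: (L/2)(2 + √3/√2) |M|^{1/3}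 ε^{−1/3} + 2^{−2/3} ε^{−1/3} L^{4/3} (T−τ)^{−1/3} (C₁ − C₂)/(π (1+√2)²) − (T − τ/2) λ_k + ε^{−1/4} L (1+√2)^{−1} λ_k^{1/4} ≤ −(τ/2) λ_k. -/
open Real MeasureTheory Set

set_option maxHeartbeats 1000000

namespace Stmt13Aux

/-! ### Basic integral facts -/

lemma w_int : IntervalIntegrable (fun t : ℝ => 1 - t ^ (-(3:ℝ)/4) / 4) volume 0 1 :=
  intervalIntegrable_const.sub ((intervalIntegral.intervalIntegrable_rpow' (by norm_num)).div_const 4)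

lemma q_integral : ∫ t in (0:ℝ)..1, t ^ (-(3:ℝ)/4) = 4 := by
  rw [integral_rpow (Or.inl (by norm_num))]
  rw [Real.one_rpow, Real.zero_rpow (by norm_num : (-(3:ℝ)/4 + 1) ≠ 0)]
  norm_num

lemma r78_integral : ∫ t in (0:ℝ)..1, t ^ (-(7:ℝ)/8) = 8 := by
  rw [integral_rpow (Or.inl (by norm_num))]
  rw [Real.one_rpow, Real.zero_rpow (by norm_num : (-(7:ℝ)/8 + 1) ≠ 0)]
  norm_num

lemma q4_integral : ∫ t in (0:ℝ)..1, t ^ (-(3:ℝ)/4) / 4 = 1 := by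
  rw [intervalIntegral.integral_div, q_integral]; norm_num

lemma w_zero : ∫ t in (0:ℝ)..1, (1 - t ^ (-(3:ℝ)/4) / 4) = 0 := by
  rw [intervalIntegral.integral_sub intervalIntegrable_const
    ((intervalIntegral.intervalIntegrable_rpow' (by norm_num)).div_const 4), q4_integral]
  simp

lemma neg_log_le {t : ℝ} (ht : 0 < t) : -Real.log t ≤ 8 * t ^ (-(1:ℝ)/8) := by
  have h1 : Real.log (t ^ (-(1:ℝ)/8)) = (-(1:ℝ)/8) * Real.log t := Real.log_rpow ht _
  have h2 := Real.log_le_sub_one_of_pos (Real.rpow_pos_of_pos ht (-(1:ℝ)/8))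
  linarith

lemma one_le_rpow_neg {t e : ℝ} (ht : 0 < t) (ht1 : t ≤ 1) (he : e ≤ 0) : 1 ≤ t ^ e :=
  Real.one_le_rpow_of_pos_of_le_one_of_nonpos ht ht1 he

lemma rpow_sum {t : ℝ} (ht : 0 < t) : t ^ (-(1:ℝ)/8) * t ^ (-(3:ℝ)/4) = t ^ (-(7:ℝ)/8) := by
  rw [← Real.rpow_add ht]; norm_num

lemma int_of_bound (f : ℝ → ℝ) (hf : ContinuousOn f (Ioc (0:ℝ) 1)) (C : ℝ)
    (hb : ∀ t ∈ Ioc (0:ℝ) 1, |f t| ≤ C * t ^ (-(7:ℝ)/8)) :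
    IntervalIntegrable f volume 0 1 := by
  have hg : IntervalIntegrable (fun t : ℝ => C * t ^ (-(7:ℝ)/8)) volume 0 1 :=
    (intervalIntegral.intervalIntegrable_rpow' (by norm_num)).const_mul C
  refine hg.mono_fun' ?_ ?_
  · have hmeas : AEStronglyMeasurable f (volume.restrict (Ioc (0:ℝ) 1)) :=
      hf.aestronglyMeasurable measurableSet_Ioc
    rwa [Set.uIoc_of_le (by norm_num : (0:ℝ) ≤ 1)]
  · rw [Set.uIoc_of_le (by norm_num : (0:ℝ) ≤ 1)]
    refine (ae_restrict_iff' measurableSet_Ioc).2 (ae_of_all _ ?_)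
    intro t ht
    simpa [Real.norm_eq_abs] using hb t ht

/-! ### the threshold point t0 -/

noncomputable def t0 : ℝ := (4:ℝ) ^ (-(4:ℝ)/3)

lemma t0_pos : 0 < t0 := Real.rpow_pos_of_pos (by norm_num) _

lemma t0_lt_one : t0 < 1 := Real.rpow_lt_one_of_one_lt_of_neg (by norm_num) (by norm_num)

lemma t0_34 : t0 ^ ((3:ℝ)/4) = 1/4 := by
  rw [t0, ← Real.rpow_mul (by norm_num : (0:ℝ) ≤ 4)]
  have : (-(4:ℝ)/3 * ((3:ℝ)/4)) = -1 := by norm_num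
  rw [this, Real.rpow_neg_one]
  norm_num

lemma w_nonneg {t : ℝ} (ht : 0 < t) (h : t0 ≤ t) : 0 ≤ 1 - t ^ (-(3:ℝ)/4) / 4 := by
  have h34 : (1:ℝ)/4 ≤ t ^ ((3:ℝ)/4) := by
    rw [← t0_34]; exact Real.rpow_le_rpow t0_pos.le h (by norm_num)
  have hneg : t ^ (-(3:ℝ)/4) = (t ^ ((3:ℝ)/4))⁻¹ := by
    rw [show (-(3:ℝ)/4) = -((3:ℝ)/4) by ring, Real.rpow_neg ht.le]
  have hpos : 0 < t ^ ((3:ℝ)/4) := Real.rpow_pos_of_pos ht _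
  have h4 : (t ^ ((3:ℝ)/4))⁻¹ ≤ ((1:ℝ)/4)⁻¹ := by gcongr <;> norm_num
  rw [hneg]
  norm_num at h4
  linarith

lemma w_nonpos {t : ℝ} (ht : 0 < t) (h : t ≤ t0) : 1 - t ^ (-(3:ℝ)/4) / 4 ≤ 0 := by
  have h34 : t ^ ((3:ℝ)/4) ≤ (1:ℝ)/4 := by
    rw [← t0_34]; exact Real.rpow_le_rpow ht.le h (by norm_num)
  have hneg : t ^ (-(3:ℝ)/4) = (t ^ ((3:ℝ)/4))⁻¹ := by
    rw [show (-(3:ℝ)/4) = -((3:ℝ)/4) by ring, Real.rpow_neg ht.le]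
  have hpos : 0 < t ^ ((3:ℝ)/4) := Real.rpow_pos_of_pos ht _
  have h4 : ((1:ℝ)/4)⁻¹ ≤ (t ^ ((3:ℝ)/4))⁻¹ := by gcongr
  rw [hneg]
  norm_num at h4
  linarith

lemma neg_log_t0_le : -Real.log t0 ≤ 2 := by
  have h1 : Real.log t0 = (-(4:ℝ)/3) * Real.log 4 := Real.log_rpow (by norm_num) _
  have h4 : Real.log 4 = 2 * Real.log 2 := by
    rw [show (4:ℝ) = 2^2 by norm_num, Real.log_pow]; push_cast; ring
  have := Real.log_two_lt_d9
  have h2 := Real.log_two_gt_d9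
  nlinarith

/-! ### key lemma : F 2 ≤ G y -/

lemma keyGF (y : ℝ) (hy : 0 < y) :
    (∫ t in (0:ℝ)..1, Real.log |1 - (2:ℝ) ^ 2 / t ^ 2| * (1 - t ^ (-(3:ℝ)/4) / 4))
      ≤ ∫ t in (0:ℝ)..1, Real.log (1 + y ^ 2 / t ^ 2) * (1 - t ^ (-(3:ℝ)/4) / 4) := by
  set c0 : ℝ := Real.log (t0 ^ 2 + y ^ 2) - Real.log (4 - t0 ^ 2) with hc0
  -- pointwise nonnegativity of (ℓ - c0) * w on (0,1]
  have hpt : ∀ t ∈ Ioc (0:ℝ) 1,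
      0 ≤ (Real.log (t ^ 2 + y ^ 2) - Real.log (4 - t ^ 2) - c0) * (1 - t ^ (-(3:ℝ)/4) / 4) := by
    rintro t ⟨ht0, ht1⟩
    have h4t : (0:ℝ) < 4 - t ^ 2 := by nlinarith
    have h4t0 : (0:ℝ) < 4 - t0 ^ 2 := by nlinarith [t0_pos, t0_lt_one]
    have hty : (0:ℝ) < t ^ 2 + y ^ 2 := by positivity
    have ht0y : (0:ℝ) < t0 ^ 2 + y ^ 2 := by positivity
    rcases le_total t t0 with h | h
    · have hl1 : Real.log (t ^ 2 + y ^ 2) ≤ Real.log (t0 ^ 2 + y ^ 2) :=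
        (Real.log_le_log_iff hty ht0y).2 (by nlinarith [t0_pos])
      have hl2 : Real.log (4 - t0 ^ 2) ≤ Real.log (4 - t ^ 2) :=
        (Real.log_le_log_iff h4t0 h4t).2 (by nlinarith [t0_pos])
      have hwn := w_nonpos ht0 h
      have hmn := mul_nonneg (by linarith : (0:ℝ) ≤ -(Real.log (t ^ 2 + y ^ 2) - Real.log (4 - t ^ 2) - c0))
        (by linarith : (0:ℝ) ≤ -(1 - t ^ (-(3:ℝ)/4) / 4))
      nlinarith [hmn]
    · have hl1 : Real.log (t0 ^ 2 + y ^ 2) ≤ Real.log (t ^ 2 + y ^ 2) :=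
        (Real.log_le_log_iff ht0y hty).2 (by nlinarith [t0_pos])
      have hl2 : Real.log (4 - t ^ 2) ≤ Real.log (4 - t0 ^ 2) :=
        (Real.log_le_log_iff h4t h4t0).2 (by nlinarith [t0_pos])
      have hwn := w_nonneg ht0 h
      exact mul_nonneg (by linarith) hwn
  -- integrability of the G-integrand
  have hIG : IntervalIntegrable
      (fun t => Real.log (1 + y ^ 2 / t ^ 2) * (1 - t ^ (-(3:ℝ)/4) / 4)) volume 0 1 := by
    refine int_of_bound _ ?_ (2 * (Real.log (1 + y ^ 2) + 16)) ?_
    · apply ContinuousOn.mul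
      · apply ContinuousOn.log
        · exact continuousOn_const.add (continuousOn_const.div (continuousOn_pow 2)
            (fun t ht => pow_ne_zero 2 (ne_of_gt ht.1)))
        · intro t _; positivity
      · exact continuousOn_const.sub
          ((continuousOn_id.rpow_const (fun t ht => Or.inl (ne_of_gt ht.1))).div_const 4)
    · rintro t ⟨ht0, ht1⟩
      have ht2 : (0:ℝ) < t ^ 2 := by positivity
      have hK : 0 ≤ Real.log (1 + y ^ 2) := Real.log_nonneg (by nlinarith)
      have hlog_nn : 0 ≤ Real.log (1 + y ^ 2 / t ^ 2) :=
        Real.log_nonneg (by nlinarith [div_nonneg (sq_nonneg y) (sq_nonneg t)])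
      have hub : Real.log (1 + y ^ 2 / t ^ 2) ≤ Real.log (1 + y ^ 2) + 2 * (-Real.log t) := by
        have h1 : (1 + y ^ 2 / t ^ 2) ≤ (1 + y ^ 2) / t ^ 2 := by
          rw [le_div_iff₀ ht2]
          have e : (1 + y ^ 2 / t ^ 2) * t ^ 2 = t ^ 2 + y ^ 2 := by field_simp
          rw [e]; nlinarith
        have h2 : Real.log (1 + y ^ 2 / t ^ 2) ≤ Real.log ((1 + y ^ 2) / t ^ 2) :=
          (Real.log_le_log_iff (by positivity) (by positivity)).2 h1
        have h3 : Real.log ((1 + y ^ 2) / t ^ 2) = Real.log (1 + y ^ 2) - Real.log (t ^ 2) :=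
          Real.log_div (by positivity) ht2.ne'
        have h4 : Real.log (t ^ 2) = 2 * Real.log t := by
          rw [Real.log_pow]; push_cast; ring
        linarith
      have hnl := neg_log_le ht0
      have h18 : (1:ℝ) ≤ t ^ (-(1:ℝ)/8) := one_le_rpow_neg ht0 ht1 (by norm_num)
      have h34 : (1:ℝ) ≤ t ^ (-(3:ℝ)/4) := one_le_rpow_neg ht0 ht1 (by norm_num)
      have habs : |1 - t ^ (-(3:ℝ)/4) / 4| ≤ 2 * t ^ (-(3:ℝ)/4) := by
        rw [abs_le]; constructor <;> nlinarith
      have hlog_ub : Real.log (1 + y ^ 2 / t ^ 2) ≤ (Real.log (1 + y ^ 2) + 16) * t ^ (-(1:ℝ)/8) := by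
        have hKt : Real.log (1 + y ^ 2) ≤ Real.log (1 + y ^ 2) * t ^ (-(1:ℝ)/8) :=
          le_mul_of_one_le_right hK h18
        nlinarith [hKt]
      rw [abs_mul, abs_of_nonneg hlog_nn]
      have hmm := mul_le_mul hlog_ub habs (abs_nonneg _) (by positivity)
      have heq : (Real.log (1 + y ^ 2) + 16) * t ^ (-(1:ℝ)/8) * (2 * t ^ (-(3:ℝ)/4))
          = 2 * (Real.log (1 + y ^ 2) + 16) * t ^ (-(7:ℝ)/8) := by
        rw [← rpow_sum ht0]; ring
      linarith
  -- integrability of the F-integrand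
  have hIF : IntervalIntegrable
      (fun t => Real.log |1 - (2:ℝ) ^ 2 / t ^ 2| * (1 - t ^ (-(3:ℝ)/4) / 4)) volume 0 1 := by
    refine int_of_bound _ ?_ 38 ?_
    · apply ContinuousOn.mul
      · apply ContinuousOn.log
        · exact (continuousOn_const.sub (continuousOn_const.div (continuousOn_pow 2)
            (fun t ht => pow_ne_zero 2 (ne_of_gt ht.1)))).abs
        · intro t ht
          have ht2 : (0:ℝ) < t ^ 2 := pow_pos ht.1 2
          have : 1 - (2:ℝ) ^ 2 / t ^ 2 < 0 := by
            rw [sub_neg, lt_div_iff₀ ht2]; nlinarith [ht.1, ht.2]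
          exact abs_ne_zero.2 (ne_of_lt this)
      · exact continuousOn_const.sub
          ((continuousOn_id.rpow_const (fun t ht => Or.inl (ne_of_gt ht.1))).div_const 4)
    · rintro t ⟨ht0, ht1⟩
      have ht2 : (0:ℝ) < t ^ 2 := by positivity
      have h4t : (0:ℝ) < 4 - t ^ 2 := by nlinarith
      have habs4 : |1 - (2:ℝ) ^ 2 / t ^ 2| = (4 - t ^ 2) / t ^ 2 := by
        have e : 1 - (2:ℝ) ^ 2 / t ^ 2 = -((4 - t ^ 2) / t ^ 2) := by field_simp; try ring
        rw [e, abs_neg, abs_of_pos (by positivity)]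
      have hlog_nn : 0 ≤ Real.log |1 - (2:ℝ) ^ 2 / t ^ 2| := by
        rw [habs4]
        apply Real.log_nonneg
        rw [le_div_iff₀ ht2]; nlinarith
      have hub : Real.log |1 - (2:ℝ) ^ 2 / t ^ 2| ≤ 3 + 2 * (-Real.log t) := by
        rw [habs4]
        have h1 : (4 - t ^ 2) / t ^ 2 ≤ 4 / t ^ 2 := by
          rw [div_le_div_iff₀ ht2 ht2]; nlinarith
        have h2 : Real.log ((4 - t ^ 2) / t ^ 2) ≤ Real.log (4 / t ^ 2) :=
          (Real.log_le_log_iff (by positivity) (by positivity)).2 h1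
        have h3 : Real.log (4 / t ^ 2) = Real.log 4 - Real.log (t ^ 2) :=
          Real.log_div (by norm_num) ht2.ne'
        have h4 : Real.log (t ^ 2) = 2 * Real.log t := by rw [Real.log_pow]; push_cast; ring
        have h5 : Real.log 4 ≤ 3 := by nlinarith [Real.log_le_sub_one_of_pos (by norm_num : (0:ℝ) < 4)]
        linarith
      have hnl := neg_log_le ht0
      have h18 : (1:ℝ) ≤ t ^ (-(1:ℝ)/8) := one_le_rpow_neg ht0 ht1 (by norm_num)
      have h34 : (1:ℝ) ≤ t ^ (-(3:ℝ)/4) := one_le_rpow_neg ht0 ht1 (by norm_num)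
      have habs : |1 - t ^ (-(3:ℝ)/4) / 4| ≤ 2 * t ^ (-(3:ℝ)/4) := by
        rw [abs_le]; constructor <;> nlinarith
      have hlog_ub : Real.log |1 - (2:ℝ) ^ 2 / t ^ 2| ≤ 19 * t ^ (-(1:ℝ)/8) := by linarith
      rw [abs_mul, abs_of_nonneg hlog_nn]
      have hmm := mul_le_mul hlog_ub habs (abs_nonneg _) (by positivity)
      have heq : 19 * t ^ (-(1:ℝ)/8) * (2 * t ^ (-(3:ℝ)/4)) = 38 * t ^ (-(7:ℝ)/8) := by
        rw [← rpow_sum ht0]; ring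
      linarith
  -- integrability of (ℓ - c0) * w
  have hIl : IntervalIntegrable
      (fun t => (Real.log (t ^ 2 + y ^ 2) - Real.log (4 - t ^ 2) - c0) * (1 - t ^ (-(3:ℝ)/4) / 4))
      volume 0 1 := by
    apply w_int.continuousOn_mul
    rw [Set.uIcc_of_le (by norm_num : (0:ℝ) ≤ 1)]
    apply ContinuousOn.sub ?_ continuousOn_const
    apply ContinuousOn.sub
    · apply ContinuousOn.log
      · exact (continuousOn_pow 2).add continuousOn_const
      · intro t ht; positivity
    · apply ContinuousOn.log
      · exact continuousOn_const.sub (continuousOn_pow 2)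
      · rintro t ⟨h0, h1⟩
        nlinarith
  -- the pointwise identity
  have hsum : ∀ t ∈ Set.uIoc (0:ℝ) 1,
      Real.log (1 + y ^ 2 / t ^ 2) * (1 - t ^ (-(3:ℝ)/4) / 4)
        - Real.log |1 - (2:ℝ) ^ 2 / t ^ 2| * (1 - t ^ (-(3:ℝ)/4) / 4)
      = (Real.log (t ^ 2 + y ^ 2) - Real.log (4 - t ^ 2) - c0) * (1 - t ^ (-(3:ℝ)/4) / 4)
        + c0 * (1 - t ^ (-(3:ℝ)/4) / 4) := by
    intro t ht
    rw [Set.uIoc_of_le (by norm_num : (0:ℝ) ≤ 1)] at ht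
    obtain ⟨ht0, ht1⟩ := ht
    have ht2 : (0:ℝ) < t ^ 2 := by positivity
    have h4t : (0:ℝ) < 4 - t ^ 2 := by nlinarith
    have e1 : Real.log (1 + y ^ 2 / t ^ 2) = Real.log (t ^ 2 + y ^ 2) - Real.log (t ^ 2) := by
      rw [show 1 + y ^ 2 / t ^ 2 = (t ^ 2 + y ^ 2) / t ^ 2 by field_simp,
        Real.log_div (by positivity) ht2.ne']
    have e2 : Real.log |1 - (2:ℝ) ^ 2 / t ^ 2| = Real.log (4 - t ^ 2) - Real.log (t ^ 2) := by
      have e : 1 - (2:ℝ) ^ 2 / t ^ 2 = -((4 - t ^ 2) / t ^ 2) := by field_simp; try ring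
      rw [e, abs_neg, abs_of_pos (by positivity), Real.log_div h4t.ne' ht2.ne']
    rw [e1, e2]; ring
  have hint_eq : (∫ t in (0:ℝ)..1, Real.log (1 + y ^ 2 / t ^ 2) * (1 - t ^ (-(3:ℝ)/4) / 4))
      - ∫ t in (0:ℝ)..1, Real.log |1 - (2:ℝ) ^ 2 / t ^ 2| * (1 - t ^ (-(3:ℝ)/4) / 4)
      = ∫ t in (0:ℝ)..1,
        ((Real.log (t ^ 2 + y ^ 2) - Real.log (4 - t ^ 2) - c0) * (1 - t ^ (-(3:ℝ)/4) / 4)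
          + c0 * (1 - t ^ (-(3:ℝ)/4) / 4)) := by
    rw [← intervalIntegral.integral_sub hIG hIF]
    exact intervalIntegral.integral_congr_ae (ae_of_all _ hsum)
  have hsplit : ∫ t in (0:ℝ)..1,
      ((Real.log (t ^ 2 + y ^ 2) - Real.log (4 - t ^ 2) - c0) * (1 - t ^ (-(3:ℝ)/4) / 4)
        + c0 * (1 - t ^ (-(3:ℝ)/4) / 4))
      = (∫ t in (0:ℝ)..1,
          (Real.log (t ^ 2 + y ^ 2) - Real.log (4 - t ^ 2) - c0) * (1 - t ^ (-(3:ℝ)/4) / 4))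
        + c0 * ∫ t in (0:ℝ)..1, (1 - t ^ (-(3:ℝ)/4) / 4) := by
    rw [intervalIntegral.integral_add hIl (w_int.const_mul c0),
      intervalIntegral.integral_const_mul]
  rw [w_zero, mul_zero, add_zero] at hsplit
  have hnn : 0 ≤ ∫ t in (0:ℝ)..1,
      (Real.log (t ^ 2 + y ^ 2) - Real.log (4 - t ^ 2) - c0) * (1 - t ^ (-(3:ℝ)/4) / 4) := by
    apply intervalIntegral.integral_nonneg_of_ae_restrict (by norm_num : (0:ℝ) ≤ 1)
    rw [← Measure.restrict_congr_set Ioc_ae_eq_Icc]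
    exact (ae_restrict_iff' measurableSet_Ioc).2 (ae_of_all _ hpt)
  linarith

/-! ### uniform lower bound for BddBelow -/

lemma rpow18_nonneg (u : ℝ) : 0 ≤ u ^ (-(1:ℝ)/8) := by
  rcases lt_trichotomy u 0 with h | h | h
  · rw [Real.rpow_def_of_neg h]
    apply mul_nonneg (Real.exp_pos _).le
    apply Real.cos_nonneg_of_mem_Icc
    constructor
    · nlinarith [Real.pi_pos]
    · nlinarith [Real.pi_pos]
  · rw [h, Real.zero_rpow (by norm_num : (-(1:ℝ)/8) ≠ 0)]
  · exact (Real.rpow_pos_of_pos h _).le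

lemma unif (x : ℝ) :
    -200 ≤ ∫ t in (0:ℝ)..1, Real.log |1 - x ^ 2 / t ^ 2| * (1 - t ^ (-(3:ℝ)/4) / 4) := by
  by_cases hI : IntervalIntegrable
      (fun t => Real.log |1 - x ^ 2 / t ^ 2| * (1 - t ^ (-(3:ℝ)/4) / 4)) volume 0 1
  swap
  · rw [intervalIntegral.integral_undef hI]; norm_num
  rcases le_or_gt (x ^ 2) 4 with hx4 | hx4
  · -- |x| ≤ 2 : direct domination
    set s : ℝ := |x| with hs_def
    have hs0 : 0 ≤ s := abs_nonneg x
    have hs2 : s ^ 2 = x ^ 2 := sq_abs x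
    have hs_le : s ≤ 2 := by nlinarith [abs_nonneg x]
    have h1 : IntervalIntegrable (fun t : ℝ => (t - s) ^ (-(1:ℝ)/8)) volume 0 1 := by
      have := (intervalIntegral.intervalIntegrable_rpow' (a := -s) (b := 1 - s)
        (by norm_num : (-1:ℝ) < -(1:ℝ)/8)).comp_sub_right s
      simpa using this
    have h2 : IntervalIntegrable (fun t : ℝ => (s - t) ^ (-(1:ℝ)/8)) volume 0 1 := by
      have := (intervalIntegral.intervalIntegrable_rpow' (a := s) (b := s - 1)
        (by norm_num : (-1:ℝ) < -(1:ℝ)/8)).comp_sub_left s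
      simpa using this
    have h3 : IntervalIntegrable (fun t : ℝ => t ^ (-(7:ℝ)/8)) volume 0 1 :=
      intervalIntegral.intervalIntegrable_rpow' (by norm_num)
    have hφint : IntervalIntegrable (fun t : ℝ =>
        -(8 * ((t - s) ^ (-(1:ℝ)/8) + (s - t) ^ (-(1:ℝ)/8)) + 13 * t ^ (-(7:ℝ)/8)))
        volume 0 1 :=
      (((h1.add h2).const_mul 8).add (h3.const_mul 13)).neg
    have hle : ∀ t ∈ Ioc (0:ℝ) 1,
        -(8 * ((t - s) ^ (-(1:ℝ)/8) + (s - t) ^ (-(1:ℝ)/8)) + 13 * t ^ (-(7:ℝ)/8))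
          ≤ Real.log |1 - x ^ 2 / t ^ 2| * (1 - t ^ (-(3:ℝ)/4) / 4) := by
      rintro t ⟨ht0, ht1⟩
      have ht2 : (0:ℝ) < t ^ 2 := by positivity
      have h78a : t ^ (-(3:ℝ)/4) ≤ t ^ (-(7:ℝ)/8) :=
        Real.rpow_le_rpow_of_exponent_ge ht0 ht1 (by norm_num)
      have h78b : t ^ (-(1:ℝ)/8) ≤ t ^ (-(7:ℝ)/8) :=
        Real.rpow_le_rpow_of_exponent_ge ht0 ht1 (by norm_num)
      have h34 : (1:ℝ) ≤ t ^ (-(3:ℝ)/4) := one_le_rpow_neg ht0 ht1 (by norm_num)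
      have h18 : (1:ℝ) ≤ t ^ (-(1:ℝ)/8) := one_le_rpow_neg ht0 ht1 (by norm_num)
      have hq78 : t ^ (-(1:ℝ)/8) * t ^ (-(3:ℝ)/4) = t ^ (-(7:ℝ)/8) := rpow_sum ht0
      by_cases hts : t = s
      · have hsp : (0:ℝ) < s := hts ▸ ht0
        have hz : 1 - x ^ 2 / t ^ 2 = 0 := by
          rw [← hs2, hts]
          field_simp; norm_num
        have e1 : (t - s) ^ (-(1:ℝ)/8) = 0 := by
          rw [hts, sub_self, Real.zero_rpow (by norm_num)]
        have e2 : (s - t) ^ (-(1:ℝ)/8) = 0 := by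
          rw [hts, sub_self, Real.zero_rpow (by norm_num)]
        rw [hz, e1, e2, abs_zero, Real.log_zero, zero_mul]
        nlinarith [Real.rpow_nonneg ht0.le (-(7:ℝ)/8)]
      · have hne : t - s ≠ 0 := sub_ne_zero.2 hts
        have habs_pos : 0 < |t - s| := abs_pos.2 hne
        have hts_pos : 0 < t + s := by linarith
        have hψ_eq : Real.log |1 - x ^ 2 / t ^ 2|
            = Real.log |t - s| + Real.log (t + s) - Real.log (t ^ 2) := by
          have e1 : 1 - x ^ 2 / t ^ 2 = (t ^ 2 - s ^ 2) / t ^ 2 := by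
            rw [← hs2]; field_simp
          have e2 : |t ^ 2 - s ^ 2| = |t - s| * (t + s) := by
            rw [show t ^ 2 - s ^ 2 = (t - s) * (t + s) by ring, abs_mul,
              abs_of_pos hts_pos]
          have e3 : |t ^ 2 - s ^ 2| ≠ 0 := by rw [e2]; positivity
          rw [e1, abs_div, abs_of_pos ht2, Real.log_div e3 ht2.ne', e2,
            Real.log_mul habs_pos.ne' hts_pos.ne']
        have b1 : -Real.log |t - s| ≤ 8 * |t - s| ^ (-(1:ℝ)/8) := neg_log_le habs_pos
        have b2 : Real.log t ≤ Real.log (t + s) :=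
          (Real.log_le_log_iff ht0 hts_pos).2 (by linarith)
        have b3 : -Real.log t ≤ 8 * t ^ (-(1:ℝ)/8) := neg_log_le ht0
        have b4 : Real.log t ≤ 0 := Real.log_nonpos ht0.le ht1
        have b4' : Real.log (t ^ 2) = 2 * Real.log t := by rw [Real.log_pow]; push_cast; ring
        have hlb : -(8 * |t - s| ^ (-(1:ℝ)/8) + 8 * t ^ (-(1:ℝ)/8))
            ≤ Real.log |1 - x ^ 2 / t ^ 2| := by
          rw [hψ_eq, b4']; linarith
        have hub : Real.log |1 - x ^ 2 / t ^ 2| ≤ 4 + 16 * t ^ (-(1:ℝ)/8) := by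
          rw [hψ_eq, b4']
          have c1 : Real.log |t - s| ≤ Real.log 3 :=
            (Real.log_le_log_iff habs_pos (by norm_num)).2
              (abs_le.2 ⟨by linarith, by linarith⟩)
          have c2 : Real.log (t + s) ≤ Real.log 3 :=
            (Real.log_le_log_iff hts_pos (by norm_num)).2 (by linarith)
          have c3 : Real.log 3 ≤ 2 := by
            nlinarith [Real.log_le_sub_one_of_pos (by norm_num : (0:ℝ) < 3)]
          linarith
        have hsplit_abs : |t - s| ^ (-(1:ℝ)/8)
            ≤ (t - s) ^ (-(1:ℝ)/8) + (s - t) ^ (-(1:ℝ)/8) := by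
          rcases lt_or_gt_of_ne hne with h | h
          · rw [abs_of_neg h, neg_sub]
            have := rpow18_nonneg (t - s); linarith
          · rw [abs_of_pos h]
            have := rpow18_nonneg (s - t); linarith
        have hAq : Real.log |1 - x ^ 2 / t ^ 2| * (t ^ (-(3:ℝ)/4) / 4)
            ≤ (4 + 16 * t ^ (-(1:ℝ)/8)) * (t ^ (-(3:ℝ)/4) / 4) :=
          mul_le_mul_of_nonneg_right hub (by positivity)
        linarith [hAq, hlb, hsplit_abs, h78a, h78b, hq78]
    have hI1v : (∫ t in (0:ℝ)..1, (t - s) ^ (-(1:ℝ)/8)) ≤ 4 := by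
      have hc := intervalIntegral.integral_comp_sub_right (a := 0) (b := 1)
        (fun u : ℝ => u ^ (-(1:ℝ)/8)) s
      rw [hc, integral_rpow (Or.inl (by norm_num))]
      have b1 : (1 - s) ^ (-(1:ℝ)/8 + 1) ≤ 1 := by
        calc (1 - s) ^ (-(1:ℝ)/8 + 1) ≤ |(1 - s) ^ (-(1:ℝ)/8 + 1)| := le_abs_self _
          _ ≤ |1 - s| ^ (-(1:ℝ)/8 + 1) := Real.abs_rpow_le_abs_rpow _ _
          _ ≤ 1 := Real.rpow_le_one (abs_nonneg _) (abs_le.2 ⟨by linarith, by linarith⟩)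
              (by norm_num)
      have b2 : -2 ≤ (0 - s) ^ (-(1:ℝ)/8 + 1) := by
        have hb : |(0 - s) ^ (-(1:ℝ)/8 + 1)| ≤ 2 := by
          calc |(0 - s) ^ (-(1:ℝ)/8 + 1)| ≤ |0 - s| ^ (-(1:ℝ)/8 + 1) :=
              Real.abs_rpow_le_abs_rpow _ _
            _ ≤ 2 ^ (-(1:ℝ)/8 + 1) := Real.rpow_le_rpow (abs_nonneg _)
                (by rw [zero_sub, abs_neg, abs_of_nonneg hs0]; linarith) (by norm_num)
            _ ≤ 2 ^ (1:ℝ) := Real.rpow_le_rpow_of_exponent_le (by norm_num) (by norm_num)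
            _ = 2 := Real.rpow_one 2
        linarith [(abs_le.1 hb).1]
      rw [div_le_iff₀ (by norm_num : (0:ℝ) < -(1:ℝ)/8 + 1)]
      linarith
    have hI2v : (∫ t in (0:ℝ)..1, (s - t) ^ (-(1:ℝ)/8)) ≤ 4 := by
      have hc := intervalIntegral.integral_comp_sub_left (a := 0) (b := 1)
        (fun u : ℝ => u ^ (-(1:ℝ)/8)) s
      rw [hc, integral_rpow (Or.inl (by norm_num))]
      have b1 : (s - 0) ^ (-(1:ℝ)/8 + 1) ≤ 2 := by
        calc (s - 0) ^ (-(1:ℝ)/8 + 1) ≤ |(s - 0) ^ (-(1:ℝ)/8 + 1)| := le_abs_self _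
          _ ≤ |s - 0| ^ (-(1:ℝ)/8 + 1) := Real.abs_rpow_le_abs_rpow _ _
          _ ≤ 2 ^ (-(1:ℝ)/8 + 1) := Real.rpow_le_rpow (abs_nonneg _)
              (by rw [sub_zero, abs_of_nonneg hs0]; linarith) (by norm_num)
          _ ≤ 2 ^ (1:ℝ) := Real.rpow_le_rpow_of_exponent_le (by norm_num) (by norm_num)
          _ = 2 := Real.rpow_one 2
      have b2 : -1 ≤ (s - 1) ^ (-(1:ℝ)/8 + 1) := by
        have hb : |(s - 1) ^ (-(1:ℝ)/8 + 1)| ≤ 1 := by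
          calc |(s - 1) ^ (-(1:ℝ)/8 + 1)| ≤ |s - 1| ^ (-(1:ℝ)/8 + 1) :=
              Real.abs_rpow_le_abs_rpow _ _
            _ ≤ 1 := Real.rpow_le_one (abs_nonneg _) (abs_le.2 ⟨by linarith, by linarith⟩)
                (by norm_num)
        linarith [(abs_le.1 hb).1]
      rw [div_le_iff₀ (by norm_num : (0:ℝ) < -(1:ℝ)/8 + 1)]
      linarith
    have hφval : -200 ≤ ∫ t in (0:ℝ)..1,
        -(8 * ((t - s) ^ (-(1:ℝ)/8) + (s - t) ^ (-(1:ℝ)/8)) + 13 * t ^ (-(7:ℝ)/8)) := by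
      rw [intervalIntegral.integral_neg,
        intervalIntegral.integral_add ((h1.add h2).const_mul 8) (h3.const_mul 13),
        intervalIntegral.integral_const_mul, intervalIntegral.integral_const_mul,
        intervalIntegral.integral_add h1 h2, r78_integral]
      linarith
    have hmono := intervalIntegral.integral_mono_ae_restrict
      (by norm_num : (0:ℝ) ≤ 1) hφint hI ?hae
    · linarith
    case hae =>
      rw [← Measure.restrict_congr_set Ioc_ae_eq_Icc]
      exact (ae_restrict_iff' measurableSet_Ioc).2 (ae_of_all _ hle)
  · -- x² > 4 : centered domination
    set c : ℝ := Real.log (x ^ 2 - t0 ^ 2) - Real.log (t0 ^ 2) with hc_def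
    have ht0p := t0_pos
    have ht0lt := t0_lt_one
    have h3 : IntervalIntegrable (fun t : ℝ => t ^ (-(7:ℝ)/8)) volume 0 1 :=
      intervalIntegral.intervalIntegrable_rpow' (by norm_num)
    have hq4i : IntervalIntegrable (fun t : ℝ => t ^ (-(3:ℝ)/4) / 4) volume 0 1 :=
      (intervalIntegral.intervalIntegrable_rpow' (by norm_num)).div_const 4
    have hrest : IntervalIntegrable (fun t : ℝ =>
        1/2 * (t ^ (-(3:ℝ)/4) / 4) + 4 * t ^ (-(7:ℝ)/8) + 5) volume 0 1 :=
      ((hq4i.const_mul (1/2)).add (h3.const_mul 4)).add intervalIntegrable_const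
    have hφint : IntervalIntegrable (fun t : ℝ =>
        c * (1 - t ^ (-(3:ℝ)/4) / 4)
          - (1/2 * (t ^ (-(3:ℝ)/4) / 4) + 4 * t ^ (-(7:ℝ)/8) + 5)) volume 0 1 :=
      (w_int.const_mul c).sub hrest
    have hle : ∀ t ∈ Ioc (0:ℝ) 1,
        c * (1 - t ^ (-(3:ℝ)/4) / 4)
          - (1/2 * (t ^ (-(3:ℝ)/4) / 4) + 4 * t ^ (-(7:ℝ)/8) + 5)
        ≤ Real.log |1 - x ^ 2 / t ^ 2| * (1 - t ^ (-(3:ℝ)/4) / 4) := by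
      rintro t ⟨ht0', ht1⟩
      have ht2 : (0:ℝ) < t ^ 2 := by positivity
      have hst2 : (0:ℝ) < x ^ 2 - t ^ 2 := by nlinarith
      have hst02 : (0:ℝ) < x ^ 2 - t0 ^ 2 := by nlinarith [t0_pos, t0_lt_one]
      have hs1 : (0:ℝ) < x ^ 2 - 1 := by nlinarith
      have hψ : Real.log |1 - x ^ 2 / t ^ 2|
          = Real.log (x ^ 2 - t ^ 2) - Real.log (t ^ 2) := by
        have e : 1 - x ^ 2 / t ^ 2 = -((x ^ 2 - t ^ 2) / t ^ 2) := by field_simp; try ring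
        rw [e, abs_neg, abs_of_pos (by positivity), Real.log_div hst2.ne' ht2.ne']
      rw [hψ]
      have hgap1 : Real.log (x ^ 2) - Real.log (x ^ 2 - 1) ≤ 1/3 := by
        have e : Real.log (x ^ 2) - Real.log (x ^ 2 - 1) = Real.log (x ^ 2 / (x ^ 2 - 1)) :=
          (Real.log_div (by positivity) hs1.ne').symm
        rw [e]
        have h1 : x ^ 2 / (x ^ 2 - 1) ≤ 4/3 := by
          rw [div_le_iff₀ hs1]; nlinarith
        nlinarith [Real.log_le_sub_one_of_pos (show (0:ℝ) < x ^ 2 / (x ^ 2 - 1) by positivity)]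
      have hlogt2 : Real.log (t ^ 2) = 2 * Real.log t := by rw [Real.log_pow]; push_cast; ring
      have hlogt02 : Real.log (t0 ^ 2) = 2 * Real.log t0 := by rw [Real.log_pow]; push_cast; ring
      have hm1 : Real.log (x ^ 2 - t ^ 2) ≤ Real.log (x ^ 2) :=
        (Real.log_le_log_iff hst2 (by positivity)).2 (by nlinarith)
      have hm2 : Real.log (x ^ 2 - 1) ≤ Real.log (x ^ 2 - t0 ^ 2) :=
        (Real.log_le_log_iff hs1 hst02).2 (by nlinarith [t0_pos, t0_lt_one])
      have hm3 : Real.log (x ^ 2 - t0 ^ 2) ≤ Real.log (x ^ 2) :=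
        (Real.log_le_log_iff hst02 (by positivity)).2 (by nlinarith [t0_pos])
      have hm4 : Real.log (x ^ 2 - 1) ≤ Real.log (x ^ 2 - t ^ 2) :=
        (Real.log_le_log_iff hs1 hst2).2 (by nlinarith)
      have hlt0 := neg_log_t0_le
      have hb4 : Real.log t ≤ 0 := Real.log_nonpos ht0'.le ht1
      have hnl := neg_log_le ht0'
      have h18 : (1:ℝ) ≤ t ^ (-(1:ℝ)/8) := one_le_rpow_neg ht0' ht1 (by norm_num)
      have hq78 : t ^ (-(1:ℝ)/8) * t ^ (-(3:ℝ)/4) = t ^ (-(7:ℝ)/8) := rpow_sum ht0'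
      have h78nn : (0:ℝ) ≤ t ^ (-(7:ℝ)/8) := Real.rpow_nonneg ht0'.le _
      have hqnn : (0:ℝ) ≤ t ^ (-(3:ℝ)/4) := Real.rpow_nonneg ht0'.le _
      rcases le_total t t0 with h | h
      · -- w ≤ 0
        have hw := w_nonpos ht0' h
        have hlt : Real.log t ≤ Real.log t0 := (Real.log_le_log_iff ht0' ht0p).2 h
        -- ψ - c ∈ [0, 1/3 + 2·(−log t)]
        have hψc_nn : 0 ≤ (Real.log (x ^ 2 - t ^ 2) - Real.log (t ^ 2)) - c := by
          rw [hc_def, hlogt2, hlogt02]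
          have : Real.log (x ^ 2 - t0 ^ 2) ≤ Real.log (x ^ 2 - t ^ 2) :=
            (Real.log_le_log_iff hst02 hst2).2 (by nlinarith)
          linarith
        have hψc_ub : (Real.log (x ^ 2 - t ^ 2) - Real.log (t ^ 2)) - c
            ≤ 1/3 + 16 * t ^ (-(1:ℝ)/8) := by
          rw [hc_def, hlogt2, hlogt02]
          have hlt0' : Real.log t0 ≤ 0 := Real.log_nonpos ht0p.le ht0lt.le
          linarith
        have hwb : 0 ≤ -(1 - t ^ (-(3:ℝ)/4) / 4) := by linarith
        have hwb2 : -(1 - t ^ (-(3:ℝ)/4) / 4) ≤ t ^ (-(3:ℝ)/4) / 4 := by linarith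
        have hprod : ((Real.log (x ^ 2 - t ^ 2) - Real.log (t ^ 2)) - c)
              * (-(1 - t ^ (-(3:ℝ)/4) / 4))
            ≤ (1/3 + 16 * t ^ (-(1:ℝ)/8)) * (t ^ (-(3:ℝ)/4) / 4) :=
          mul_le_mul hψc_ub hwb2 hwb (by positivity)
        linarith [hprod, hq78]
      · -- w ∈ [0,1]
        have hw0 := w_nonneg ht0' h
        have hw1 : 1 - t ^ (-(3:ℝ)/4) / 4 ≤ 1 := by linarith
        have hlt : Real.log t0 ≤ Real.log t := (Real.log_le_log_iff ht0p ht0').2 h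
        have hcψ_ub : c - (Real.log (x ^ 2 - t ^ 2) - Real.log (t ^ 2)) ≤ 5 := by
          rw [hc_def, hlogt2, hlogt02]
          linarith
        have hkey : ((Real.log (x ^ 2 - t ^ 2) - Real.log (t ^ 2)) - c)
            * (1 - t ^ (-(3:ℝ)/4) / 4) ≥ -5 := by
          rcases le_or_gt 0 ((Real.log (x ^ 2 - t ^ 2) - Real.log (t ^ 2)) - c) with hh | hh
          · nlinarith [mul_nonneg hh hw0]
          · nlinarith [mul_le_mul_of_nonpos_left hw1 hh.le]
        linarith [hkey, h78nn, hqnn]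
    have hφval : -200 ≤ ∫ t in (0:ℝ)..1,
        (c * (1 - t ^ (-(3:ℝ)/4) / 4)
          - (1/2 * (t ^ (-(3:ℝ)/4) / 4) + 4 * t ^ (-(7:ℝ)/8) + 5)) := by
      rw [intervalIntegral.integral_sub (w_int.const_mul c) hrest,
        intervalIntegral.integral_const_mul, w_zero, mul_zero,
        intervalIntegral.integral_add ((hq4i.const_mul (1/2)).add (h3.const_mul 4))
          intervalIntegrable_const,
        intervalIntegral.integral_add (hq4i.const_mul (1/2)) (h3.const_mul 4),
        intervalIntegral.integral_const_mul, intervalIntegral.integral_const_mul,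
        q4_integral, r78_integral]
      norm_num [intervalIntegral.integral_const]
    have hmono := intervalIntegral.integral_mono_ae_restrict
      (by norm_num : (0:ℝ) ≤ 1) hφint hI ?hae2
    · linarith
    case hae2 =>
      rw [← Measure.restrict_congr_set Ioc_ae_eq_Icc]
      exact (ae_restrict_iff' measurableSet_Ioc).2 (ae_of_all _ hle)

/-! ### the algebraic core -/

lemma final (T τ L u ac Lc m P β f5 g g2 sq2 CC pi' : ℝ)
    (hτ : 0 < τ) (hτT : τ < T) (hL : 0 < L) (hu : 0 < u) (hm : 0 < m) (hP : 0 < P)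
    (hac3 : ac ^ 3 = T - τ) (hacp : 0 < ac) (hLc3 : Lc ^ 3 = L) (hLcp : 0 < Lc)
    (hβ : 1 ≤ β) (hf5 : f5 ^ 4 = 5) (hf5p : 0 < f5)
    (hg3 : g ^ 3 = 2) (hgp : 0 < g) (hg2 : g2 * g ^ 2 = 1)
    (hsq2 : 1 ≤ sq2) (hCC : 0 ≤ CC) (hpi : 0 < pi')
    (hH : (β + f5 / (1 + sq2)) * (m * ac / Lc) + g * CC / ((1 + sq2) ^ 2 * pi')
        ≤ 5 / 8 * (m * ac / Lc) ^ 4)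
    (hlamge : 5 * m ^ 4 / (16 * u ^ 4) ≤ P ^ 4) :
    L / 2 * β * m * (1 / u ^ 4)
      + g2 * (1 / u ^ 4) * (L * Lc) * (1 / ac) * CC / (pi' * (1 + sq2) ^ 2)
      - (T - τ / 2) * P ^ 4
      + 1 / u ^ 3 * L / (1 + sq2) * P
    ≤ -(τ / 2) * P ^ 4 := by
  have ha : 0 < T - τ := by linarith
  have hs2p : 0 < 1 + sq2 := by linarith
  have hune : u ≠ 0 := ne_of_gt hu
  have hacne : ac ≠ 0 := ne_of_gt hacp
  have hLcne : Lc ≠ 0 := ne_of_gt hLcp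
  have hpine : pi' ≠ 0 := ne_of_gt hpi
  have hsne : (1 + sq2) ≠ 0 := ne_of_gt hs2p
  have hgne : g ≠ 0 := ne_of_gt hgp
  have hg2' : g2 = g / 2 := by
    have h1 : g2 * g ^ 3 = g := by
      calc g2 * g ^ 3 = g2 * g ^ 2 * g := by ring
        _ = g := by rw [hg2]; ring
    rw [hg3] at h1; linarith
  have hXp : 0 < m * ac / Lc := by positivity
  have hc2 : 0 ≤ g * CC / ((1 + sq2) ^ 2 * pi') := by positivity
  have hX4 : m * ac / Lc ≤ 5 / 8 * (m * ac / Lc) ^ 4 := by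
    have hco : 1 ≤ β + f5 / (1 + sq2) := by
      have : 0 ≤ f5 / (1 + sq2) := by positivity
      linarith
    have h1 : m * ac / Lc ≤ (β + f5 / (1 + sq2)) * (m * ac / Lc) :=
      le_mul_of_one_le_left hXp.le hco
    linarith
  have hX3 : (8:ℝ)/5 ≤ (m * ac / Lc) ^ 3 := by
    by_contra hcon
    push_neg at hcon
    have h3 : (m * ac / Lc) ^ 3 * (m * ac / Lc) < 8/5 * (m * ac / Lc) :=
      mul_lt_mul_of_pos_right hcon hXp
    nlinarith
  have hamL : (8:ℝ)/5 * L ≤ (T - τ) * m ^ 3 := by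
    have hXL : (m * ac / Lc) ^ 3 * L = (T - τ) * m ^ 3 := by
      rw [div_pow, mul_pow, hac3, hLc3]; field_simp; try ring
    nlinarith [mul_le_mul_of_nonneg_right hX3 hL.le]
  have hf51 : (1:ℝ) ≤ f5 := by
    by_contra h
    push_neg at h
    have h2 : f5 ^ 4 < 1 ^ 4 := pow_lt_pow_left₀ h hf5p.le (by norm_num)
    rw [hf5] at h2; norm_num at h2
  have hf53 : (1:ℝ) ≤ f5 ^ 3 := by nlinarith [mul_nonneg (sub_nonneg.2 hf51) (by positivity : (0:ℝ) ≤ f5 ^ 2 + f5 + 1)]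
  set r : ℝ := f5 * m / (2 * u) with hr_def
  have hrp : 0 < r := by positivity
  have hr4 : r ^ 4 = 5 * m ^ 4 / (16 * u ^ 4) := by
    rw [hr_def, div_pow, mul_pow, hf5, mul_pow]; norm_num
  have hrP : r ≤ P := by
    have h := hlamge; rw [← hr4] at h
    exact le_of_pow_le_pow_left₀ (by norm_num) hP.le h
  have hD : 1 / u ^ 3 * L / (1 + sq2) ≤ 4 * (T - τ) * r ^ 3 := by
    have hr3 : r ^ 3 = f5 ^ 3 * m ^ 3 / (8 * u ^ 3) := by
      rw [hr_def, div_pow, mul_pow, mul_pow]; norm_num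
    have hkey : 2 * L ≤ (T - τ) * m ^ 3 * f5 ^ 3 * (1 + sq2) := by
      have hAp : 0 < (T - τ) * m ^ 3 := mul_pos ha (pow_pos hm 3)
      have h1 : (T - τ) * m ^ 3 ≤ (T - τ) * m ^ 3 * f5 ^ 3 :=
        le_mul_of_one_le_right hAp.le hf53
      have h2 : (T - τ) * m ^ 3 * f5 ^ 3 * 2 ≤ (T - τ) * m ^ 3 * f5 ^ 3 * (1 + sq2) := by
        apply mul_le_mul_of_nonneg_left (by linarith)
        nlinarith [hAp, hf53]
      nlinarith [hamL]
    rw [hr3, div_le_iff₀ hs2p, div_mul_eq_mul_div, one_mul,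
      div_le_iff₀ (by positivity : (0:ℝ) < u ^ 3)]
    have e : 4 * (T - τ) * (f5 ^ 3 * m ^ 3 / (8 * u ^ 3)) * (1 + sq2) * u ^ 3
        = (T - τ) * m ^ 3 * f5 ^ 3 * (1 + sq2) / 2 := by
      field_simp; try ring
    rw [e]; linarith
  have hcstp : (0:ℝ) ≤ L * Lc / (2 * u ^ 4 * ac) := by positivity
  have hbase0 := mul_le_mul_of_nonneg_left hH hcstp
  have e1 : L / 2 * β * m * (1 / u ^ 4) = L * Lc / (2 * u ^ 4 * ac) * (β * (m * ac / Lc)) := by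
    field_simp; try ring
  have e2 : g2 * (1 / u ^ 4) * (L * Lc) * (1 / ac) * CC / (pi' * (1 + sq2) ^ 2)
      = L * Lc / (2 * u ^ 4 * ac) * (g * CC / ((1 + sq2) ^ 2 * pi')) := by
    rw [hg2']; field_simp; try ring
  have e3 : 1 / u ^ 3 * L / (1 + sq2) * r
      = L * Lc / (2 * u ^ 4 * ac) * (f5 / (1 + sq2) * (m * ac / Lc)) := by
    rw [hr_def]; field_simp; try ring
  have e4 : (T - τ) * r ^ 4 = L * Lc / (2 * u ^ 4 * ac) * (5 / 8 * (m * ac / Lc) ^ 4) := by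
    rw [hr4, ← hac3, ← hLc3]; field_simp; try ring
  have base : L / 2 * β * m * (1 / u ^ 4)
      + g2 * (1 / u ^ 4) * (L * Lc) * (1 / ac) * CC / (pi' * (1 + sq2) ^ 2)
      + 1 / u ^ 3 * L / (1 + sq2) * r ≤ (T - τ) * r ^ 4 := by
    calc L / 2 * β * m * (1 / u ^ 4)
        + g2 * (1 / u ^ 4) * (L * Lc) * (1 / ac) * CC / (pi' * (1 + sq2) ^ 2)
        + 1 / u ^ 3 * L / (1 + sq2) * r
        = L * Lc / (2 * u ^ 4 * ac)
            * ((β + f5 / (1 + sq2)) * (m * ac / Lc) + g * CC / ((1 + sq2) ^ 2 * pi')) := by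
          rw [e1, e2, e3]; ring
      _ ≤ L * Lc / (2 * u ^ 4 * ac) * (5 / 8 * (m * ac / Lc) ^ 4) := hbase0
      _ = (T - τ) * r ^ 4 := e4.symm
  have hquart : 0 ≤ P ^ 4 + 3 * r ^ 4 - 4 * r ^ 3 * P := by
    nlinarith [mul_nonneg (sq_nonneg (P - r))
      (by positivity : (0:ℝ) ≤ P ^ 2 + 2 * r * P + 3 * r ^ 2)]
  have hmono : 1 / u ^ 3 * L / (1 + sq2) * P - 1 / u ^ 3 * L / (1 + sq2) * r
      ≤ (T - τ) * P ^ 4 - (T - τ) * r ^ 4 := by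
    have h1 : 1 / u ^ 3 * L / (1 + sq2) * (P - r) ≤ 4 * (T - τ) * r ^ 3 * (P - r) :=
      mul_le_mul_of_nonneg_right hD (by linarith)
    have h2 : 4 * (T - τ) * r ^ 3 * (P - r) ≤ (T - τ) * P ^ 4 - (T - τ) * r ^ 4 := by
      nlinarith [mul_nonneg ha.le hquart]
    nlinarith [h1, h2]
  linarith [base, hmono]

end Stmt13Aux

open Stmt13Aux

/-- the key numerical inequalities (Proposition `precise` of the paper)
for `M > 0` (part (i)) and `M < 0` (part (ii)). -/
theorem stmt_13
    (L T M M13 : ℝ) (hL : 0 < L) (hT : 0 < T) (hM : M ≠ 0)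
    (hM13 : M13 ^ 3 = M)
    (lam : ℝ → ℕ → ℝ)
    (hlam : ∀ ε > (0:ℝ), ∀ k, lam ε k
      = ε * ((k : ℝ)^2 * π^2 / L^2 + 3 * M13^2 / (4 * ε ^ ((2:ℝ)/3)))^2
        - M * M13 / (4 * ε ^ ((1:ℝ)/3)))
    (C1 : ℝ)
    (hC1 : C1 = -(⨅ x : ℝ, ∫ t in (0:ℝ)..1,
      Real.log |1 - x^2 / t^2| * (1 - t ^ (-(3:ℝ)/4) / 4)))
    (G : ℝ → ℝ)
    (hG : ∀ y : ℝ, G y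
      = ∫ t in (0:ℝ)..1, Real.log (1 + y^2 / t^2) * (1 - t ^ (-(3:ℝ)/4) / 4))
    (C2 : ℝ)
    (hC2 : C2 = -G (5 * (1 + Real.sqrt 2)^2 * 2 ^ (-(5:ℝ)/3))) :
    -- part (i): M > 0
    ((0 < M → ∀ τ : ℝ, 0 < τ → τ < T →
      ((1 + Real.sqrt 3 / Real.sqrt 2 + 5 ^ ((1:ℝ)/4) / (1 + Real.sqrt 2))
          * (M * (T - τ) / L) ^ ((1:ℝ)/3)
        + 2 ^ ((1:ℝ)/3) * (C1 - C2) / ((1 + Real.sqrt 2)^2 * π)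
        ≤ 5/8 * ((M * (T - τ) / L) ^ ((1:ℝ)/3))^4) →
      ∀ ε : ℝ, 0 < ε → ∀ k : ℕ, 1 ≤ k →
        L/2 * (1 + Real.sqrt 3 / Real.sqrt 2) * M13 * ε ^ (-(1:ℝ)/3)
          + 2 ^ (-(2:ℝ)/3) * ε ^ (-(1:ℝ)/3) * L ^ ((4:ℝ)/3) * (T - τ) ^ (-(1:ℝ)/3)
            * (C1 - C2) / (π * (1 + Real.sqrt 2)^2)
          - (T - τ/2) * lam ε k
          + ε ^ (-(1:ℝ)/4) * L / (1 + Real.sqrt 2) * (lam ε k) ^ ((1:ℝ)/4)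
        ≤ -(τ/2) * lam ε k)) ∧
    -- part (ii): M < 0
    ((M < 0 → ∀ τ : ℝ, 0 < τ → τ < T →
      ((2 + Real.sqrt 3 / Real.sqrt 2 + 5 ^ ((1:ℝ)/4) / (1 + Real.sqrt 2))
          * (|M| * (T - τ) / L) ^ ((1:ℝ)/3)
        + 2 ^ ((1:ℝ)/3) * (C1 - C2) / ((1 + Real.sqrt 2)^2 * π)
        ≤ 5/8 * ((|M| * (T - τ) / L) ^ ((1:ℝ)/3))^4) →
      ∀ ε : ℝ, 0 < ε → ∀ k : ℕ, 1 ≤ k →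
        L/2 * (2 + Real.sqrt 3 / Real.sqrt 2) * |M13| * ε ^ (-(1:ℝ)/3)
          + 2 ^ (-(2:ℝ)/3) * ε ^ (-(1:ℝ)/3) * L ^ ((4:ℝ)/3) * (T - τ) ^ (-(1:ℝ)/3)
            * (C1 - C2) / (π * (1 + Real.sqrt 2)^2)
          - (T - τ/2) * lam ε k
          + ε ^ (-(1:ℝ)/4) * L / (1 + Real.sqrt 2) * (lam ε k) ^ ((1:ℝ)/4)
        ≤ -(τ/2) * lam ε k)) := by
  -- C1 - C2 ≥ 0
  have hsq2 : (1:ℝ) ≤ Real.sqrt 2 := by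
    rw [show (1:ℝ) = Real.sqrt 1 by simp]
    exact Real.sqrt_le_sqrt (by norm_num)
  have hy0 : 0 < 5 * (1 + Real.sqrt 2)^2 * (2:ℝ) ^ (-(5:ℝ)/3) := by positivity
  have hCC : 0 ≤ C1 - C2 := by
    have hBdd : BddBelow (Set.range (fun x : ℝ => ∫ t in (0:ℝ)..1,
        Real.log |1 - x^2 / t^2| * (1 - t ^ (-(3:ℝ)/4) / 4))) :=
      ⟨-200, by rintro v ⟨x, rfl⟩; exact unif x⟩
    have h1 : (⨅ x : ℝ, ∫ t in (0:ℝ)..1,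
        Real.log |1 - x^2 / t^2| * (1 - t ^ (-(3:ℝ)/4) / 4))
        ≤ ∫ t in (0:ℝ)..1, Real.log |1 - (2:ℝ)^2 / t^2| * (1 - t ^ (-(3:ℝ)/4) / 4) :=
      ciInf_le hBdd (2:ℝ)
    have h2 := keyGF _ hy0
    rw [hC1, hC2, hG]
    linarith
  have hsqrt32 : (0:ℝ) ≤ Real.sqrt 3 / Real.sqrt 2 := by positivity
  have hM13ne : M13 ≠ 0 := by
    intro h
    rw [h] at hM13
    simp at hM13
    exact hM (hM13.symm)
  constructor
  · -- part (i)
    intro hMpos τ hτ hτT hH ε hε k _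
    have hM13p : 0 < M13 := by
      rcases lt_trichotomy M13 0 with h | h | h
      · exfalso; nlinarith [hM13, sq_nonneg M13]
      · exact absurd h hM13ne
      · exact h
    have ha : 0 < T - τ := by linarith
    set u : ℝ := ε ^ ((1:ℝ)/12) with hu_def
    have hu : 0 < u := Real.rpow_pos_of_pos hε _
    have hu4 : u ^ 4 = ε ^ ((1:ℝ)/3) := by
      rw [hu_def, ← Real.rpow_natCast (ε ^ ((1:ℝ)/12)) 4, ← Real.rpow_mul hε.le]
      norm_num
    have hu3 : u ^ 3 = ε ^ ((1:ℝ)/4) := by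
      rw [hu_def, ← Real.rpow_natCast (ε ^ ((1:ℝ)/12)) 3, ← Real.rpow_mul hε.le]
      norm_num
    have hu8 : u ^ 8 = ε ^ ((2:ℝ)/3) := by
      rw [hu_def, ← Real.rpow_natCast (ε ^ ((1:ℝ)/12)) 8, ← Real.rpow_mul hε.le]
      norm_num
    have hu12 : u ^ 12 = ε := by
      rw [hu_def, ← Real.rpow_natCast (ε ^ ((1:ℝ)/12)) 12, ← Real.rpow_mul hε.le]
      norm_num
    have e13 : ε ^ (-(1:ℝ)/3) = 1 / u ^ 4 := by
      rw [hu4, show (-(1:ℝ)/3) = -((1:ℝ)/3) by norm_num, Real.rpow_neg hε.le]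
      exact (one_div _).symm
    have e14 : ε ^ (-(1:ℝ)/4) = 1 / u ^ 3 := by
      rw [hu3, show (-(1:ℝ)/4) = -((1:ℝ)/4) by norm_num, Real.rpow_neg hε.le]
      exact (one_div _).symm
    set Lc : ℝ := L ^ ((1:ℝ)/3) with hLc_def
    have hLcp : 0 < Lc := Real.rpow_pos_of_pos hL _
    have hLc3 : Lc ^ 3 = L := by
      rw [hLc_def, ← Real.rpow_natCast (L ^ ((1:ℝ)/3)) 3, ← Real.rpow_mul hL.le]
      norm_num
    have eL : L ^ ((4:ℝ)/3) = L * Lc := by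
      rw [hLc_def, show ((4:ℝ)/3) = 1 + (1:ℝ)/3 by norm_num, Real.rpow_add hL, Real.rpow_one]
    set ac : ℝ := (T - τ) ^ ((1:ℝ)/3) with hac_def
    have hacp : 0 < ac := Real.rpow_pos_of_pos ha _
    have hac3 : ac ^ 3 = T - τ := by
      rw [hac_def, ← Real.rpow_natCast ((T - τ) ^ ((1:ℝ)/3)) 3, ← Real.rpow_mul ha.le]
      norm_num
    have eT : (T - τ) ^ (-(1:ℝ)/3) = 1 / ac := by
      rw [hac_def, show (-(1:ℝ)/3) = -((1:ℝ)/3) by norm_num, Real.rpow_neg ha.le]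
      exact (one_div _).symm
    -- lam lower bound
    have hMM13 : M * M13 = M13 ^ 4 := by rw [← hM13]; ring
    have hlam_ge : 5 * M13 ^ 4 / (16 * u ^ 4) ≤ lam ε k := by
      rw [hlam ε hε k, hMM13, ← hu8, ← hu4]
      nth_rewrite 1 [← hu12]
      have hQ : 0 ≤ (k:ℝ)^2 * π^2 / L^2 := by positivity
      have hR : 0 ≤ 3 * M13^2 / (4 * u^8) := by positivity
      have hsq : (3 * M13^2 / (4 * u^8))^2 ≤ ((k:ℝ)^2 * π^2 / L^2 + 3 * M13^2 / (4 * u^8))^2 := by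
        nlinarith
      have h9 : u^12 * (3 * M13^2 / (4 * u^8))^2 = 9 * M13^4 / (16 * u^4) := by
        field_simp
        ring
      have key : 9 * M13 ^ 4 / (16 * u ^ 4)
          ≤ u ^ 12 * ((k:ℝ)^2 * π^2 / L^2 + 3 * M13^2 / (4 * u^8))^2 := by
        rw [← h9]
        exact mul_le_mul_of_nonneg_left hsq (by positivity)
      calc 5 * M13 ^ 4 / (16 * u ^ 4)
          = 9 * M13 ^ 4 / (16 * u ^ 4) - M13 ^ 4 / (4 * u ^ 4) := by ring
        _ ≤ u ^ 12 * ((k:ℝ)^2 * π^2 / L^2 + 3 * M13^2 / (4 * u^8))^2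
            - M13 ^ 4 / (4 * u ^ 4) := sub_le_sub_right key _
    have hlam_pos : 0 < lam ε k := lt_of_lt_of_le (by positivity) hlam_ge
    set P : ℝ := (lam ε k) ^ ((1:ℝ)/4) with hP_def
    have hPpos : 0 < P := Real.rpow_pos_of_pos hlam_pos _
    have hP4 : P ^ 4 = lam ε k := by
      rw [hP_def, ← Real.rpow_natCast ((lam ε k) ^ ((1:ℝ)/4)) 4, ← Real.rpow_mul hlam_pos.le]
      norm_num
    have hXr : (M * (T - τ) / L) ^ ((1:ℝ)/3) = M13 * ac / Lc := by
      have hcube : (M13 * ac / Lc) ^ 3 = M * (T - τ) / L := by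
        rw [div_pow, mul_pow, hac3, hLc3, hM13]
      rw [← hcube, show ((1:ℝ)/3) = (((3:ℕ):ℝ))⁻¹ by norm_num]
      exact Real.pow_rpow_inv_natCast (by positivity) (by norm_num)
    rw [hXr] at hH
    have hf5 : ((5:ℝ) ^ ((1:ℝ)/4)) ^ 4 = 5 := by
      rw [show ((1:ℝ)/4) = (((4:ℕ):ℝ))⁻¹ by norm_num]
      exact Real.rpow_inv_natCast_pow (by norm_num) (by norm_num)
    have hf5p : (0:ℝ) < 5 ^ ((1:ℝ)/4) := Real.rpow_pos_of_pos (by norm_num) _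
    have hg3 : ((2:ℝ) ^ ((1:ℝ)/3)) ^ 3 = 2 := by
      rw [show ((1:ℝ)/3) = (((3:ℕ):ℝ))⁻¹ by norm_num]
      exact Real.rpow_inv_natCast_pow (by norm_num) (by norm_num)
    have hgp : (0:ℝ) < 2 ^ ((1:ℝ)/3) := Real.rpow_pos_of_pos (by norm_num) _
    have hg2eq : ((2:ℝ) ^ (-(2:ℝ)/3)) * ((2:ℝ) ^ ((1:ℝ)/3)) ^ 2 = 1 := by
      rw [← Real.rpow_natCast ((2:ℝ) ^ ((1:ℝ)/3)) 2, ← Real.rpow_mul (by norm_num : (0:ℝ) ≤ 2),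
        ← Real.rpow_add (by norm_num : (0:ℝ) < 2)]
      norm_num
    have hβ : (1:ℝ) ≤ 1 + Real.sqrt 3 / Real.sqrt 2 := by linarith
    have hlamge' : 5 * M13 ^ 4 / (16 * u ^ 4) ≤ P ^ 4 := by rw [hP4]; exact hlam_ge
    rw [e13, e14, eL, eT, ← hP4]
    exact final T τ L u ac Lc M13 P (1 + Real.sqrt 3 / Real.sqrt 2) (5 ^ ((1:ℝ)/4))
      (2 ^ ((1:ℝ)/3)) (2 ^ (-(2:ℝ)/3)) (Real.sqrt 2) (C1 - C2) π
      hτ hτT hL hu hM13p hPpos hac3 hacp hLc3 hLcp hβ hf5 hf5p hg3 hgp hg2eq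
      hsq2 hCC Real.pi_pos hH hlamge'
  · -- part (ii)
    intro hMneg τ hτ hτT hH ε hε k _
    have hM13n : M13 < 0 := by
      rcases lt_trichotomy M13 0 with h | h | h
      · exact h
      · exact absurd h hM13ne
      · exfalso; nlinarith [hM13, sq_nonneg M13]
    have hm : 0 < |M13| := abs_pos.2 hM13ne
    have habs3 : |M13| ^ 3 = |M| := by rw [← abs_pow, hM13]
    have habs4 : |M13| ^ 4 = M13 ^ 4 := by
      rw [← abs_pow]
      exact abs_of_nonneg (by positivity)
    have ha : 0 < T - τ := by linarith
    set u : ℝ := ε ^ ((1:ℝ)/12) with hu_def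
    have hu : 0 < u := Real.rpow_pos_of_pos hε _
    have hu4 : u ^ 4 = ε ^ ((1:ℝ)/3) := by
      rw [hu_def, ← Real.rpow_natCast (ε ^ ((1:ℝ)/12)) 4, ← Real.rpow_mul hε.le]
      norm_num
    have hu3 : u ^ 3 = ε ^ ((1:ℝ)/4) := by
      rw [hu_def, ← Real.rpow_natCast (ε ^ ((1:ℝ)/12)) 3, ← Real.rpow_mul hε.le]
      norm_num
    have hu8 : u ^ 8 = ε ^ ((2:ℝ)/3) := by
      rw [hu_def, ← Real.rpow_natCast (ε ^ ((1:ℝ)/12)) 8, ← Real.rpow_mul hε.le]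
      norm_num
    have hu12 : u ^ 12 = ε := by
      rw [hu_def, ← Real.rpow_natCast (ε ^ ((1:ℝ)/12)) 12, ← Real.rpow_mul hε.le]
      norm_num
    have e13 : ε ^ (-(1:ℝ)/3) = 1 / u ^ 4 := by
      rw [hu4, show (-(1:ℝ)/3) = -((1:ℝ)/3) by norm_num, Real.rpow_neg hε.le]
      exact (one_div _).symm
    have e14 : ε ^ (-(1:ℝ)/4) = 1 / u ^ 3 := by
      rw [hu3, show (-(1:ℝ)/4) = -((1:ℝ)/4) by norm_num, Real.rpow_neg hε.le]
      exact (one_div _).symm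
    set Lc : ℝ := L ^ ((1:ℝ)/3) with hLc_def
    have hLcp : 0 < Lc := Real.rpow_pos_of_pos hL _
    have hLc3 : Lc ^ 3 = L := by
      rw [hLc_def, ← Real.rpow_natCast (L ^ ((1:ℝ)/3)) 3, ← Real.rpow_mul hL.le]
      norm_num
    have eL : L ^ ((4:ℝ)/3) = L * Lc := by
      rw [hLc_def, show ((4:ℝ)/3) = 1 + (1:ℝ)/3 by norm_num, Real.rpow_add hL, Real.rpow_one]
    set ac : ℝ := (T - τ) ^ ((1:ℝ)/3) with hac_def
    have hacp : 0 < ac := Real.rpow_pos_of_pos ha _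
    have hac3 : ac ^ 3 = T - τ := by
      rw [hac_def, ← Real.rpow_natCast ((T - τ) ^ ((1:ℝ)/3)) 3, ← Real.rpow_mul ha.le]
      norm_num
    have eT : (T - τ) ^ (-(1:ℝ)/3) = 1 / ac := by
      rw [hac_def, show (-(1:ℝ)/3) = -((1:ℝ)/3) by norm_num, Real.rpow_neg ha.le]
      exact (one_div _).symm
    have hMM13 : M * M13 = M13 ^ 4 := by rw [← hM13]; ring
    have hlam_ge : 5 * |M13| ^ 4 / (16 * u ^ 4) ≤ lam ε k := by
      rw [habs4, hlam ε hε k, hMM13, ← hu8, ← hu4]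
      nth_rewrite 1 [← hu12]
      have hQ : 0 ≤ (k:ℝ)^2 * π^2 / L^2 := by positivity
      have hR : 0 ≤ 3 * M13^2 / (4 * u^8) := by positivity
      have hsq : (3 * M13^2 / (4 * u^8))^2 ≤ ((k:ℝ)^2 * π^2 / L^2 + 3 * M13^2 / (4 * u^8))^2 := by
        nlinarith
      have h9 : u^12 * (3 * M13^2 / (4 * u^8))^2 = 9 * M13^4 / (16 * u^4) := by
        field_simp
        ring
      have key : 9 * M13 ^ 4 / (16 * u ^ 4)
          ≤ u ^ 12 * ((k:ℝ)^2 * π^2 / L^2 + 3 * M13^2 / (4 * u^8))^2 := by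
        rw [← h9]
        exact mul_le_mul_of_nonneg_left hsq (by positivity)
      calc 5 * M13 ^ 4 / (16 * u ^ 4)
          = 9 * M13 ^ 4 / (16 * u ^ 4) - M13 ^ 4 / (4 * u ^ 4) := by ring
        _ ≤ u ^ 12 * ((k:ℝ)^2 * π^2 / L^2 + 3 * M13^2 / (4 * u^8))^2
            - M13 ^ 4 / (4 * u ^ 4) := sub_le_sub_right key _
    have hlam_pos : 0 < lam ε k := lt_of_lt_of_le (by positivity) hlam_ge
    set P : ℝ := (lam ε k) ^ ((1:ℝ)/4) with hP_def
    have hPpos : 0 < P := Real.rpow_pos_of_pos hlam_pos _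
    have hP4 : P ^ 4 = lam ε k := by
      rw [hP_def, ← Real.rpow_natCast ((lam ε k) ^ ((1:ℝ)/4)) 4, ← Real.rpow_mul hlam_pos.le]
      norm_num
    have hXr : (|M| * (T - τ) / L) ^ ((1:ℝ)/3) = |M13| * ac / Lc := by
      have hcube : (|M13| * ac / Lc) ^ 3 = |M| * (T - τ) / L := by
        rw [div_pow, mul_pow, hac3, hLc3, habs3]
      rw [← hcube, show ((1:ℝ)/3) = (((3:ℕ):ℝ))⁻¹ by norm_num]
      exact Real.pow_rpow_inv_natCast (by positivity) (by norm_num)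
    rw [hXr] at hH
    have hf5 : ((5:ℝ) ^ ((1:ℝ)/4)) ^ 4 = 5 := by
      rw [show ((1:ℝ)/4) = (((4:ℕ):ℝ))⁻¹ by norm_num]
      exact Real.rpow_inv_natCast_pow (by norm_num) (by norm_num)
    have hf5p : (0:ℝ) < 5 ^ ((1:ℝ)/4) := Real.rpow_pos_of_pos (by norm_num) _
    have hg3 : ((2:ℝ) ^ ((1:ℝ)/3)) ^ 3 = 2 := by
      rw [show ((1:ℝ)/3) = (((3:ℕ):ℝ))⁻¹ by norm_num]
      exact Real.rpow_inv_natCast_pow (by norm_num) (by norm_num)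
    have hgp : (0:ℝ) < 2 ^ ((1:ℝ)/3) := Real.rpow_pos_of_pos (by norm_num) _
    have hg2eq : ((2:ℝ) ^ (-(2:ℝ)/3)) * ((2:ℝ) ^ ((1:ℝ)/3)) ^ 2 = 1 := by
      rw [← Real.rpow_natCast ((2:ℝ) ^ ((1:ℝ)/3)) 2, ← Real.rpow_mul (by norm_num : (0:ℝ) ≤ 2),
        ← Real.rpow_add (by norm_num : (0:ℝ) < 2)]
      norm_num
    have hβ : (1:ℝ) ≤ 2 + Real.sqrt 3 / Real.sqrt 2 := by linarith
    have hlamge' : 5 * |M13| ^ 4 / (16 * u ^ 4) ≤ P ^ 4 := by rw [hP4]; exact hlam_ge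
    rw [e13, e14, eL, eT, ← hP4]
    exact final T τ L u ac Lc |M13| P (2 + Real.sqrt 3 / Real.sqrt 2) (5 ^ ((1:ℝ)/4))
      (2 ^ ((1:ℝ)/3)) (2 ^ (-(2:ℝ)/3)) (Real.sqrt 2) (C1 - C2) π
      hτ hτT hL hu hm hPpos hac3 hacp hLc3 hLcp hβ hf5 hf5p hg3 hgp hg2eq
      hsq2 hCC Real.pi_pos hH hlamge'
end

section
/- The following definite integral evaluates exactly: ∫_{−∞}^{∞} (2x² + 1) / ( (x⁴ + x² + 5/18)(x² + 1) ) dx = (6π/5) ( √(3(3 + √10)) − 3 ). -/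
set_option maxHeartbeats 1000000
open Real MeasureTheory Filter Topology

theorem keyident (a b c2 x : ℝ) (hq : 9*a^4 + 18*a^2 = 1) (hb : 2*b = a^2+1) (hc : 4*c2 = a^2+2)
    (hP : x^2+a*x+b ≠ 0) (hQ : x^2-a*x+b ≠ 0)
    (hD : x^4+x^2+5/18 ≠ 0) (hx : 1+x^2 ≠ 0) :
    (9*a/10) * ((2*x+a)/(x^2+a*x+b) - (2*x-a)/(x^2-a*x+b))
      + (18/5) * (c2/(x^2+a*x+b) + c2/(x^2-a*x+b))
      - (18/5) * (1/(1+x^2))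
    = (2*x^2+1)/((x^4+x^2+5/18)*(x^2+1)) := by
  have hP' : x*(x+a)+b ≠ 0 := by convert hP using 1; ring
  have hQ' : x*(x-a)+b ≠ 0 := by convert hQ using 1; ring
  field_simp
  linear_combination ((1620)*x^10 + (5670)*x^8 + (7740)*x^6 + (5175)*x^4 + (1710)*x^2 + (810)*a^2*x^8 + (2430)*a^2*x^6 + (2655)*a^2*x^4 + (1260)*a^2*x^2 + (225)*a^2 + (225)) * hc + ((-1620)*b*x^6 + (-4140)*b*x^4 + (-3420)*b*x^2 + (-900)*b + (810)*a^2*x^8 + (1620)*a^2*x^6 + (585)*a^2*x^4 + (-450)*a^2*x^2 + (-225)*a^2 + (3240)*c2*x^8 + (9720)*c2*x^6 + (10620)*c2*x^4 + (5040)*c2*x^2 + (900)*c2 + (-3240)*x^8 + (-9090)*x^6 + (-8910)*x^4 + (-3510)*x^2 + (-450)) * hb + ((180)*x^8 + (450)*x^6 + (360)*x^4 + (90)*x^2) * hq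

noncomputable def Ff (a b c x : ℝ) : ℝ :=
  9*a/10 * (Real.log (x^2+a*x+b) - Real.log (x^2-a*x+b))
  + 18*c/5 * (Real.arctan ((x+a/2)/c) + Real.arctan ((x-a/2)/c))
  - 18/5 * Real.arctan x

theorem Ff_deriv (a b c : ℝ) (ha : 0 < a) (hc : 0 < c) (hb : 2*b = a^2+1)
    (hc2 : 4*c^2 = a^2+2) (hq : 9*a^4 + 18*a^2 = 1) (x : ℝ) :
    HasDerivAt (Ff a b c) ((2*x^2+1)/((x^4+x^2+5/18)*(x^2+1))) x := by
  have hP0 : 0 < x^2+a*x+b := by nlinarith [sq_nonneg (x+a/2), mul_pos hc hc]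
  have hQ0 : 0 < x^2-a*x+b := by nlinarith [sq_nonneg (x-a/2), mul_pos hc hc]
  have h1 : HasDerivAt (fun x:ℝ => x^2+a*x+b) (2*x+a) x := by
    simpa using ((hasDerivAt_pow 2 x).add ((hasDerivAt_id x).const_mul a)).add_const b
  have h2 : HasDerivAt (fun x:ℝ => x^2-a*x+b) (2*x-a) x := by
    simpa using ((hasDerivAt_pow 2 x).sub ((hasDerivAt_id x).const_mul a)).add_const b
  have hlog1 : HasDerivAt (fun x:ℝ => Real.log (x^2+a*x+b)) ((2*x+a)/(x^2+a*x+b)) x :=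
    h1.log hP0.ne'
  have hlog2 : HasDerivAt (fun x:ℝ => Real.log (x^2-a*x+b)) ((2*x-a)/(x^2-a*x+b)) x :=
    h2.log hQ0.ne'
  have hin1 : HasDerivAt (fun x:ℝ => (x+a/2)/c) (1/c) x := by
    simpa using ((hasDerivAt_id x).add_const (a/2)).div_const c
  have hin2 : HasDerivAt (fun x:ℝ => (x-a/2)/c) (1/c) x := by
    simpa using ((hasDerivAt_id x).sub_const (a/2)).div_const c
  have harc1 : HasDerivAt (fun x:ℝ => Real.arctan ((x+a/2)/c))
      (1/(1+((x+a/2)/c)^2) * (1/c)) x :=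
    (Real.hasDerivAt_arctan _).comp x hin1
  have harc2 : HasDerivAt (fun x:ℝ => Real.arctan ((x-a/2)/c))
      (1/(1+((x-a/2)/c)^2) * (1/c)) x :=
    (Real.hasDerivAt_arctan _).comp x hin2
  have hall : HasDerivAt (Ff a b c)
      (9*a/10 * ((2*x+a)/(x^2+a*x+b) - (2*x-a)/(x^2-a*x+b))
        + 18*c/5 * (1/(1+((x+a/2)/c)^2) * (1/c) + 1/(1+((x-a/2)/c)^2) * (1/c))
        - 18/5 * (1/(1+x^2))) x := by
    exact (((hlog1.sub hlog2).const_mul (9*a/10)).add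
      ((harc1.add harc2).const_mul (18*c/5))).sub
      ((Real.hasDerivAt_arctan x).const_mul (18/5))
  convert hall using 1
  have e1 : 1/(1+((x+a/2)/c)^2) * (1/c) = c/(x^2+a*x+b) := by
    rw [show x^2+a*x+b = (x+a/2)^2 + c^2 by linear_combination hb/2 - hc2/4]
    have h3 : (x+a/2)^2 + c^2 > 0 := by positivity
    field_simp
    ring
  have e2 : 1/(1+((x-a/2)/c)^2) * (1/c) = c/(x^2-a*x+b) := by
    rw [show x^2-a*x+b = (x-a/2)^2 + c^2 by linear_combination hb/2 - hc2/4]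
    have h3 : (x-a/2)^2 + c^2 > 0 := by positivity
    field_simp
    ring
  rw [e1, e2]
  have e3 : 18*c/5 * (c/(x^2+a*x+b) + c/(x^2-a*x+b))
      = 18/5 * (c^2/(x^2+a*x+b) + c^2/(x^2-a*x+b)) := by ring
  have hD : x^4+x^2+5/18 ≠ 0 := by positivity
  have hx : 1+x^2 ≠ 0 := by positivity
  rw [e3, show c^2 = (a^2+2)/4 by linarith,
    ← keyident a b ((a^2+2)/4) x hq hb (by ring) hP0.ne' hQ0.ne' hD hx]

theorem Ff_odd (a b c : ℝ) (x : ℝ) : -(Ff a b c (-x)) = Ff a b c x := by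
  simp only [Ff]
  rw [show (-x)^2 + a*(-x) + b = x^2 - a*x + b by ring,
    show (-x)^2 - a*(-x) + b = x^2 + a*x + b by ring,
    show (-x + a/2)/c = -((x - a/2)/c) by ring,
    show (-x - a/2)/c = -((x + a/2)/c) by ring,
    Real.arctan_neg, Real.arctan_neg, Real.arctan_neg]
  ring

theorem Ff_top (a b c : ℝ) (ha : 0 < a) (hc : 0 < c) (hb : 2*b = a^2+1)
    (hc2 : 4*c^2 = a^2+2) :
    Filter.Tendsto (Ff a b c) Filter.atTop (𝓝 (18*c/5*π - 9*π/5)) := by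
  have hP0 : ∀ x : ℝ, 0 < x^2+a*x+b := fun x => by
    nlinarith [sq_nonneg (x+a/2), mul_pos hc hc]
  have hQ0 : ∀ x : ℝ, 0 < x^2-a*x+b := fun x => by
    nlinarith [sq_nonneg (x-a/2), mul_pos hc hc]
  have hinv : Filter.Tendsto (fun x:ℝ => x⁻¹) Filter.atTop (𝓝 0) := tendsto_inv_atTop_zero
  have hratio : Filter.Tendsto (fun x:ℝ => (x^2+a*x+b)/(x^2-a*x+b)) Filter.atTop (𝓝 1) := by
    have key : Filter.Tendsto (fun x:ℝ => (1+a*x⁻¹+b*(x⁻¹)^2)/(1-a*x⁻¹+b*(x⁻¹)^2))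
        Filter.atTop (𝓝 1) := by
      have hnum : Filter.Tendsto (fun x:ℝ => 1+a*x⁻¹+b*(x⁻¹)^2) Filter.atTop (𝓝 1) := by
        have := ((tendsto_const_nhds : Filter.Tendsto (fun _:ℝ => (1:ℝ)) Filter.atTop (𝓝 1)).add
          ((hinv.const_mul a))).add ((hinv.pow 2).const_mul b)
        simpa using this
      have hden : Filter.Tendsto (fun x:ℝ => 1-a*x⁻¹+b*(x⁻¹)^2) Filter.atTop (𝓝 1) := by
        have := ((tendsto_const_nhds : Filter.Tendsto (fun _:ℝ => (1:ℝ)) Filter.atTop (𝓝 1)).sub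
          ((hinv.const_mul a))).add ((hinv.pow 2).const_mul b)
        simpa using this
      have := hnum.div hden (by norm_num)
      rw [div_one] at this
      exact this
    apply key.congr'
    filter_upwards [Filter.eventually_gt_atTop (0:ℝ)] with x hx
    have hx0 : x ≠ 0 := ne_of_gt hx
    have e1 : (1+a*x⁻¹+b*(x⁻¹)^2) = (x^2+a*x+b) * (x⁻¹)^2 := by field_simp
    have e2 : (1-a*x⁻¹+b*(x⁻¹)^2) = (x^2-a*x+b) * (x⁻¹)^2 := by field_simp
    rw [e1, e2, mul_div_mul_right _ _ (pow_ne_zero 2 (inv_ne_zero hx0))]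
  have hlog : Filter.Tendsto (fun x:ℝ => Real.log (x^2+a*x+b) - Real.log (x^2-a*x+b))
      Filter.atTop (𝓝 0) := by
    have hcont : Filter.Tendsto Real.log (𝓝 1) (𝓝 0) := by
      simpa using (Real.continuousAt_log (by norm_num : (1:ℝ) ≠ 0)).tendsto
    have := hcont.comp hratio
    apply this.congr
    intro x
    simp only [Function.comp_apply]
    rw [Real.log_div (hP0 x).ne' (hQ0 x).ne']
  have harc : ∀ d : ℝ, Filter.Tendsto (fun x:ℝ => Real.arctan ((x+d)/c))
      Filter.atTop (𝓝 (π/2)) := by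
    intro d
    have hlin : Filter.Tendsto (fun x:ℝ => (x+d)/c) Filter.atTop Filter.atTop :=
      (Filter.tendsto_atTop_add_const_right _ d Filter.tendsto_id).atTop_div_const hc
    exact (tendsto_nhds_of_tendsto_nhdsWithin Real.tendsto_arctan_atTop).comp hlin
  have harctan : Filter.Tendsto (fun x:ℝ => Real.arctan x) Filter.atTop (𝓝 (π/2)) :=
    tendsto_nhds_of_tendsto_nhdsWithin Real.tendsto_arctan_atTop
  have h1 := harc (a/2)
  have h2 : Filter.Tendsto (fun x:ℝ => Real.arctan ((x-a/2)/c)) Filter.atTop (𝓝 (π/2)) := by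
    have := harc (-(a/2))
    apply this.congr
    intro x; ring_nf
  have hall := ((hlog.const_mul (9*a/10)).add ((h1.add h2).const_mul (18*c/5))).sub
    (harctan.const_mul (18/5))
  have : 9*a/10 * 0 + 18*c/5 * (π/2 + π/2) - 18/5 * (π/2) = 18*c/5*π - 9*π/5 := by ring
  rw [this] at hall
  exact hall

theorem Ff_bot (a b c : ℝ) (ha : 0 < a) (hc : 0 < c) (hb : 2*b = a^2+1)
    (hc2 : 4*c^2 = a^2+2) :
    Filter.Tendsto (Ff a b c) Filter.atBot (𝓝 (-(18*c/5*π - 9*π/5))) := by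
  have h1 : Filter.Tendsto (fun x:ℝ => Ff a b c (-x)) Filter.atBot (𝓝 (18*c/5*π - 9*π/5)) :=
    (Ff_top a b c ha hc hb hc2).comp tendsto_neg_atBot_atTop
  have h2 := h1.neg
  apply h2.congr
  intro x
  exact Ff_odd a b c x

theorem integrable_g : Integrable (fun x : ℝ => (2*x^2+1)/((x^4+x^2+5/18)*(x^2+1))) := by
  have h1 : Integrable (fun x:ℝ => 36/5 * (1+x^2)⁻¹) :=
    (integrable_inv_one_add_sq).const_mul _
  apply h1.mono'
  · apply Continuous.aestronglyMeasurable
    apply Continuous.div (by continuity) (by continuity)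
    intro x
    positivity
  · filter_upwards with x
    rw [Real.norm_eq_abs, abs_of_nonneg (by positivity)]
    rw [div_le_iff₀ (by positivity)]
    have h2 : 36/5 * (1+x^2)⁻¹ = (36/5) / (1+x^2) := by ring
    rw [h2, div_mul_eq_mul_div, le_div_iff₀ (by positivity)]
    nlinarith [sq_nonneg x, sq_nonneg (x^2), sq_nonneg (x^3)]

/-- `∫_ℝ (2x²+1)/((x⁴+x²+5/18)(x²+1)) dx = (6π/5)(√(3(3+√10)) − 3)`. -/
theorem stmt_15 :
    ∫ x : ℝ, (2 * x^2 + 1) / ((x^4 + x^2 + 5/18) * (x^2 + 1))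
      = 6 * π / 5 * (Real.sqrt (3 * (3 + Real.sqrt 10)) - 3) := by
  set s := Real.sqrt 10 with hs_def
  have hs : s^2 = 10 := Real.sq_sqrt (by norm_num)
  have hs0 : 0 ≤ s := Real.sqrt_nonneg 10
  have hs3 : 3 < s := by nlinarith
  set a := Real.sqrt ((s-3)/3) with ha_def
  have ha2 : a^2 = (s-3)/3 := Real.sq_sqrt (by linarith)
  have ha : 0 < a := Real.sqrt_pos.mpr (by linarith)
  set c := Real.sqrt ((s+3)/12) with hc_def
  have hcc : c^2 = (s+3)/12 := Real.sq_sqrt (by linarith)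
  have hc : 0 < c := Real.sqrt_pos.mpr (by linarith)
  set b := (a^2+1)/2 with hb_def
  have hb : 2*b = a^2+1 := by ring
  have hc2 : 4*c^2 = a^2+2 := by rw [hcc, ha2]; ring
  have hq : 9*a^4 + 18*a^2 = 1 := by
    rw [show a^4 = (a^2)^2 by ring, ha2]
    linear_combination hs
  have hint := integral_of_hasDerivAt_of_tendsto
    (fun x => Ff_deriv a b c ha hc hb hc2 hq x) integrable_g
    (Ff_bot a b c ha hc hb hc2) (Ff_top a b c ha hc hb hc2)
  have hres : ∫ x : ℝ, (2 * x^2 + 1) / ((x^4 + x^2 + 5/18) * (x^2 + 1))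
      = (18*c/5*π - 9*π/5) - -(18*c/5*π - 9*π/5) := hint
  rw [hres]
  have hsqrt : Real.sqrt (3*(3+s)) = 6*c := by
    rw [show 3*(3+s) = 6^2 * ((s+3)/12) by ring, Real.sqrt_mul (by positivity),
      Real.sqrt_sq (by norm_num : (0:ℝ) ≤ 6)]
  rw [hsqrt]
  ring
end
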